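/- arXiv:2407.08416 — 11 statements merged into one kernel-verified Lean document; each statement's English description precedes it below -/
import Mathlib

section
/- Let ν be a finite signed Borel measure on [0,∞) and let r be the differential resolvent of ν. If r is integrable on [0,∞) (r ∈ L¹([0,∞);ℝ)), then ∫₀^∞ r(s) ds = −1/ν([0,∞)) (in particular ν([0,∞)) ≠ 0) and ∫₀^∞ r'(s) ds = −1. -/
open MeasureTheory Filter Set
open scoped Topology

/-- Integral of `g` over the set `A` against a finite signed Borel measure `ν`,
defined via the Jordan decomposition. -/
noncomputable def sInt (ν : MeasureTheory.SignedMeasure ℝ) (A : Set ℝ) (g : ℝ → ℝ) : ℝ :=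
  (∫ s in A, g s ∂ν.toJordanDecomposition.posPart) -
    (∫ s in A, g s ∂ν.toJordanDecomposition.negPart)

private lemma conv_aux (μ : Measure ℝ) [IsFiniteMeasure μ] (g : ℝ → ℝ) (hg : Measurable g)
    (hgi : Integrable g) :
    Integrable (fun t => ∫ u, g (t - u) ∂μ) volume ∧
      (∫ t, (∫ u, g (t - u) ∂μ)) = (μ univ).toReal * ∫ t, g t := by
  have hH' : Integrable (fun p : ℝ × ℝ => g (p.2 - p.1)) (μ.prod volume) := by
    refine (integrable_prod_iff ?_).2
      ⟨Eventually.of_forall fun u => hgi.comp_sub_right u, ?_⟩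
    · exact (hg.comp (measurable_snd.sub measurable_fst)).aestronglyMeasurable
    · have h1 : (fun u : ℝ => ∫ t, ‖g (t - u)‖) = fun _ : ℝ => ∫ t, ‖g t‖ := by
        funext u; exact integral_sub_right_eq_self (fun t => ‖g t‖) u
      rw [h1]
      exact integrable_const _
  have hH : Integrable (fun p : ℝ × ℝ => g (p.1 - p.2)) (volume.prod μ) := hH'.swap
  refine ⟨hH.integral_prod_left, ?_⟩
  have hswap := integral_integral_swap (f := fun t u => g (t - u)) (μ := volume) (ν := μ) hH
  rw [hswap]
  have h2 : (fun u : ℝ => ∫ t, g (t - u)) = fun _ : ℝ => ∫ t, g t := by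
    funext u; exact integral_sub_right_eq_self g u
  rw [h2, integral_const, smul_eq_mul]; rfl

private lemma part_aux (μ : Measure ℝ) [IsFiniteMeasure μ] (hμ0 : μ (Iio 0) = 0)
    (r g : ℝ → ℝ) (hg_meas : Measurable g) (hg_int : Integrable g)
    (hg_zero : ∀ t < (0:ℝ), g t = 0) (hg_of : ∀ t ≥ (0:ℝ), g t = r t) :
    (∀ t ≥ (0:ℝ), (∫ u in Icc 0 t, r (t - u) ∂μ) = ∫ u, g (t - u) ∂μ) ∧
    (∀ t < (0:ℝ), (∫ u, g (t - u) ∂μ) = 0) ∧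
    Integrable (fun t => ∫ u, g (t - u) ∂μ) volume ∧
    (∫ t, (∫ u, g (t - u) ∂μ)) = (μ (Ici 0)).toReal * ∫ t, g t := by
  have hae : ∀ᵐ u ∂μ, (0:ℝ) ≤ u := by
    have hset : {u : ℝ | ¬ (0:ℝ) ≤ u} = Iio 0 := by ext u; simp [not_le]
    rw [ae_iff, hset]; exact hμ0
  obtain ⟨hint, hval⟩ := conv_aux μ g hg_meas hg_int
  refine ⟨?_, ?_, hint, ?_⟩
  · intro t ht
    rw [← integral_indicator measurableSet_Icc]
    refine integral_congr_ae ?_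
    filter_upwards [hae] with u hu
    by_cases hut : u ≤ t
    · rw [indicator_of_mem (mem_Icc.mpr ⟨hu, hut⟩), hg_of _ (by linarith)]
    · rw [indicator_of_notMem (fun h => hut h.2), hg_zero _ (by linarith [not_le.1 hut])]
  · intro t ht
    have hz : ∀ᵐ u ∂μ, g (t - u) = 0 := by
      filter_upwards [hae] with u hu
      exact hg_zero _ (by linarith)
    rw [integral_congr_ae hz, integral_zero]
  · rw [hval]
    have huniv : μ univ = μ (Ici 0) := by
      refine le_antisymm ?_ (measure_mono (subset_univ _))
      calc μ univ = μ (Iio 0 ∪ Ici 0) := by rw [Iio_union_Ici]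
        _ ≤ μ (Iio 0) + μ (Ici 0) := measure_union_le _ _
        _ = μ (Ici 0) := by rw [hμ0, zero_add]
    rw [huniv]

/-- If the differential resolvent `r` of the finite signed Borel measure `ν` on `[0,∞)`
is integrable, then `∫₀^∞ r = -1/ν([0,∞))` (in particular `ν([0,∞)) ≠ 0`) and
`∫₀^∞ r' = -1`. -/
theorem stmt0 (ν : MeasureTheory.SignedMeasure ℝ)
    (hsupp : ∀ A : Set ℝ, A ⊆ Set.Iio 0 → ν A = 0)
    (r : ℝ → ℝ) (hr_cont : ContinuousOn r (Set.Ici 0))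
    (hr0 : r 0 = 1)
    (hr_eq : ∀ t ≥ (0:ℝ),
      r t = 1 + ∫ s in (0:ℝ)..t, sInt ν (Set.Icc 0 s) (fun u => r (s - u)))
    (hr_int : IntegrableOn r (Set.Ici 0)) :
    ν (Set.Ici 0) ≠ 0 ∧
      (∫ s in Set.Ici (0:ℝ), r s) = -1 / ν (Set.Ici 0) ∧
      (∫ t in Set.Ici (0:ℝ), sInt ν (Set.Icc 0 t) (fun u => r (t - u))) = -1 := by
  classical
  obtain ⟨i, hi₁, hi₂, hi₃, hpos, hneg⟩ := ν.toJordanDecomposition_spec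
  have hμp0 : ν.toJordanDecomposition.posPart (Iio 0) = 0 := by
    rw [hpos, SignedMeasure.toMeasureOfZeroLE_apply _ hi₂ hi₁ measurableSet_Iio]
    have h0 : ν (i ∩ Iio 0) = 0 := hsupp _ inter_subset_right
    simp [h0]
  have hμn0 : ν.toJordanDecomposition.negPart (Iio 0) = 0 := by
    rw [hneg, SignedMeasure.toMeasureOfLEZero_apply _ hi₃ hi₁.compl measurableSet_Iio]
    have h0 : ν (iᶜ ∩ Iio 0) = 0 := hsupp _ inter_subset_right
    simp [h0]
  -- the extension of r by zero
  set g : ℝ → ℝ := (Ici (0:ℝ)).indicator r with hg_def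
  have hg_eq : g = (Ici (0:ℝ)).indicator (fun t => r (max t 0)) := by
    funext t
    by_cases ht : t ∈ Ici (0:ℝ)
    · simp only [hg_def, indicator_of_mem ht]
      rw [max_eq_left (mem_Ici.1 ht)]
    · simp [hg_def, indicator_of_notMem ht]
  have hcontmax : Continuous (fun t : ℝ => r (max t 0)) := by
    refine hr_cont.comp_continuous (continuous_id.max continuous_const) ?_
    intro t; exact le_max_right t 0
  have hg_meas : Measurable g := by
    rw [hg_eq]; exact hcontmax.measurable.indicator measurableSet_Ici
  have hg_int : Integrable g := by
    rw [hg_def, integrable_indicator_iff measurableSet_Ici]; exact hr_int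
  have hg_zero : ∀ t < (0:ℝ), g t = 0 := fun t ht =>
    indicator_of_notMem (fun h => absurd (mem_Ici.1 h) (not_le.2 ht)) r
  have hg_of : ∀ t ≥ (0:ℝ), g t = r t := fun t ht => indicator_of_mem ht r
  have hIg : (∫ t, g t) = ∫ s in Ici (0:ℝ), r s := by
    rw [hg_def, integral_indicator measurableSet_Ici]
  obtain ⟨hp_eq, hp_zero, hp_int, hp_val⟩ :=
    part_aux ν.toJordanDecomposition.posPart hμp0 r g hg_meas hg_int hg_zero hg_of
  obtain ⟨hn_eq, hn_zero, hn_int, hn_val⟩ :=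
    part_aux ν.toJordanDecomposition.negPart hμn0 r g hg_meas hg_int hg_zero hg_of
  set f : ℝ → ℝ := fun t => sInt ν (Icc 0 t) (fun u => r (t - u)) with hf_def
  set F : ℝ → ℝ := fun t => (∫ u, g (t - u) ∂ν.toJordanDecomposition.posPart) -
      (∫ u, g (t - u) ∂ν.toJordanDecomposition.negPart) with hF_def
  have hfF : EqOn f F (Ici (0:ℝ)) := by
    intro t ht
    simp only [hf_def, sInt, hF_def]
    rw [hp_eq t ht, hn_eq t ht]
  have hF_int : Integrable F := hp_int.sub hn_int
  have hf_intOn : IntegrableOn f (Ici 0) :=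
    (hF_int.integrableOn).congr_fun (fun t ht => (hfF ht).symm) measurableSet_Ici
  have hνIci : ν (Ici 0) = (ν.toJordanDecomposition.posPart (Ici 0)).toReal -
      (ν.toJordanDecomposition.negPart (Ici 0)).toReal := by
    conv_lhs => rw [← ν.toSignedMeasure_toJordanDecomposition]
    exact Measure.toSignedMeasure_sub_apply measurableSet_Ici
  have hIf : (∫ t in Ici (0:ℝ), f t) = ν (Ici 0) * ∫ s in Ici (0:ℝ), r s := by
    have h1 : (∫ t in Ici (0:ℝ), f t) = ∫ t in Ici (0:ℝ), F t :=
      setIntegral_congr_fun measurableSet_Ici hfF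
    have hcompl : (∫ t in (Ici (0:ℝ))ᶜ, F t) = 0 := by
      rw [compl_Ici]
      rw [setIntegral_congr_fun measurableSet_Iio
        (fun t (ht : t ∈ Iio (0:ℝ)) => show F t = (0:ℝ) by
          simp only [hF_def]; rw [hp_zero t ht, hn_zero t ht, sub_zero])]
      exact integral_zero _ _
    have h2 : (∫ t in Ici (0:ℝ), F t) = ∫ t, F t := by
      rw [← integral_add_compl measurableSet_Ici hF_int, hcompl, add_zero]
    have h3 : (∫ t, F t) = ((ν.toJordanDecomposition.posPart (Ici 0)).toReal -
        (ν.toJordanDecomposition.negPart (Ici 0)).toReal) * ∫ t, g t := by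
      simp only [hF_def]
      rw [integral_sub hp_int hn_int, hp_val, hn_val]
      ring
    rw [h1, h2, h3, ← hνIci, hIg]
  -- limit of r at infinity
  have hf_Ioi : IntegrableOn f (Ioi 0) := hf_intOn.mono_set Ioi_subset_Ici_self
  have htend0 : Tendsto (fun t => ∫ s in (0:ℝ)..t, f s) atTop
      (𝓝 (∫ s in Ioi (0:ℝ), f s)) :=
    intervalIntegral_tendsto_integral_Ioi 0 hf_Ioi tendsto_id
  have hIoi : (∫ s in Ioi (0:ℝ), f s) = ∫ t in Ici (0:ℝ), f t :=
    integral_Ici_eq_integral_Ioi.symm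
  have htendr : Tendsto r atTop (𝓝 (1 + ∫ t in Ici (0:ℝ), f t)) := by
    have h4 : Tendsto (fun t => 1 + ∫ s in (0:ℝ)..t, f s) atTop
        (𝓝 (1 + ∫ t in Ici (0:ℝ), f t)) := by
      have h5 := (tendsto_const_nhds (x := (1:ℝ)) (f := atTop)).add htend0
      rwa [hIoi] at h5
    refine h4.congr' ?_
    filter_upwards [eventually_ge_atTop (0:ℝ)] with t ht
    exact (hr_eq t ht).symm
  set If := ∫ t in Ici (0:ℝ), f t with hIf_def
  have hL : 1 + If = 0 := by
    by_contra hL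
    have habs : (0:ℝ) < |1 + If| := abs_pos.2 hL
    have h2 : ∀ᶠ t in atTop, |1 + If| / 2 ≤ |r t| :=
      htendr.abs.eventually (eventually_ge_nhds (by linarith))
    obtain ⟨T, hT⟩ := eventually_atTop.1 h2
    set T' := max T 0 with hT'_def
    have hrT : IntegrableOn r (Ici T') :=
      hr_int.mono_set (Ici_subset_Ici.2 (le_max_right _ _))
    have hconst : IntegrableOn (fun _ : ℝ => |1 + If| / 2) (Ici T') := by
      refine Integrable.mono' hrT.norm aestronglyMeasurable_const ?_
      refine (ae_restrict_iff' measurableSet_Ici).2 (Eventually.of_forall fun x hx => ?_)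
      rw [Real.norm_eq_abs, abs_of_nonneg (by positivity), Real.norm_eq_abs]
      exact hT x (le_trans (le_max_left _ _) hx)
    rw [integrableOn_const_iff] at hconst
    rcases hconst with h | h
    · rw [enorm_eq_zero] at h
      have : |1 + If| = 0 := by linarith
      exact hL (abs_eq_zero.1 this)
    · rw [Real.volume_Ici] at h
      exact (lt_irrefl _ h)
  have hkey : ν (Ici 0) * (∫ s in Ici (0:ℝ), r s) = -1 := by
    rw [← hIf]; linarith
  have hν : ν (Ici 0) ≠ 0 := by
    intro h; rw [h, zero_mul] at hkey; norm_num at hkey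
  refine ⟨hν, ?_, ?_⟩
  · rw [eq_div_iff hν, mul_comm]; exact hkey
  · show If = -1
    rw [hIf]; exact hkey
end

section
/- Let f : [0,∞) → ℝ be locally integrable and suppose that for every θ ∈ (0,1] there exists L(θ) ∈ ℝ such that (1/t)∫₀ᵗ ∫ₛ^{s+θ} f(u) du ds → L(θ) as t → ∞. Then for any fixed θ ∈ (0,1], the supremum over all t ∈ [1,∞) and T ∈ [0,θ] of |(1/t)∫₀ᵗ ∫ₛ^{s+T} f(u) du ds − L(T)| is finite. -/
open MeasureTheory Filter Set
open scoped Topology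

/-!
Let `H` be the double primitive of `f` (extended by `0` to the negative axis). The double mean
equals `(H (t + T) - H T - H t) / t`, so the hypothesis says that `(H (t + T) - H t) / t`
converges for every shift `T ∈ (0, θ)`, hence `|H (t + T) - H t| ≤ M_T (t + 1)` for all `t ≥ 0`.
By the Baire category theorem on `(0, θ)` one constant works for all shifts in some interval
`[a, a + δ]`; differences of two such shifts give a uniform bound for all increments in `[0, δ]`,
and chaining `⌈θ / δ⌉` of them gives a uniform bound for all shifts in `[0, θ]`. The limits `L T`
inherit the bound.
-/

noncomputable def doublePrimitive (g : ℝ → ℝ) (x : ℝ) : ℝ :=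
  ∫ y in (0:ℝ)..x, ∫ u in (0:ℝ)..y, g u

theorem continuous_doublePrimitive {g : ℝ → ℝ} (hg : ∀ a b : ℝ, IntervalIntegrable g volume a b) :
    Continuous (doublePrimitive g) :=
  intervalIntegral.continuous_primitive
    (fun a b => (intervalIntegral.continuous_primitive hg 0).intervalIntegrable a b) 0

theorem integral_integral_add_eq_doublePrimitive {g : ℝ → ℝ}
    (hg : ∀ a b : ℝ, IntervalIntegrable g volume a b) (t T : ℝ) :
    ∫ s in (0:ℝ)..t, ∫ u in s..s + T, g u
      = doublePrimitive g (t + T) - doublePrimitive g T - doublePrimitive g t := by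
  set F : ℝ → ℝ := fun x => ∫ u in (0:ℝ)..x, g u
  have hF : Continuous F := intervalIntegral.continuous_primitive hg 0
  have hinner : ∀ s, ∫ u in s..s + T, g u = F (s + T) - F s := fun s =>
    (intervalIntegral.integral_interval_sub_left (hg 0 _) (hg 0 s)).symm
  simp_rw [hinner]
  have hFT : IntervalIntegrable (fun s => F (s + T)) volume 0 t :=
    (hF.comp (continuous_add_const T)).intervalIntegrable 0 t
  rw [intervalIntegral.integral_sub hFT (hF.intervalIntegrable 0 t),
    intervalIntegral.integral_comp_add_right F T, zero_add,
    ← intervalIntegral.integral_interval_sub_left (hF.intervalIntegrable 0 _)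
      (hF.intervalIntegrable 0 T)]
  rfl

theorem MeasureTheory.LocallyIntegrableOn.intervalIntegrable_indicator {f : ℝ → ℝ} {s : Set ℝ}
    (hf : LocallyIntegrableOn f s) (hs : IsClosed s) (a b : ℝ) :
    IntervalIntegrable (s.indicator f) volume a b := by
  refine IntegrableOn.intervalIntegrable ?_
  rw [IntegrableOn, integrable_indicator_iff hs.measurableSet, IntegrableOn,
    Measure.restrict_restrict hs.measurableSet]
  exact hf.integrableOn_compact_subset inter_subset_left (isCompact_uIcc.inter_left hs)

theorem integral_integral_add_eq_indicator_Ici (f : ℝ → ℝ) {t T : ℝ} (ht : 0 ≤ t) (hT : 0 ≤ T) :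
    ∫ s in (0:ℝ)..t, ∫ u in s..s + T, f u
      = ∫ s in (0:ℝ)..t, ∫ u in s..s + T, (Ici 0).indicator f u := by
  refine intervalIntegral.integral_congr fun s hs => intervalIntegral.integral_congr fun u hu => ?_
  rw [uIcc_of_le ht] at hs
  rw [uIcc_of_le (by linarith)] at hu
  exact (indicator_of_mem (mem_Ici.2 (hs.1.trans hu.1)) f).symm

theorem exists_abs_le_mul_add_one_of_tendsto_div {ψ : ℝ → ℝ} (hψ : Continuous ψ) {ℓ : ℝ}
    (h : Tendsto (fun t => ψ t / t) atTop (𝓝 ℓ)) : ∃ M, ∀ t ≥ 0, |ψ t| ≤ M * (t + 1) := by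
  obtain ⟨R, hR⟩ := eventually_atTop.1 (h.abs.eventually (eventually_le_nhds (lt_add_one |ℓ|)))
  obtain ⟨B, hB⟩ := isCompact_Icc (a := 0) (b := max R 1) |>.exists_bound_of_continuousOn
    hψ.continuousOn
  refine ⟨max (|ℓ| + 1) B, fun t ht => ?_⟩
  rcases le_total t (max R 1) with htR | htR
  · have := hB t ⟨ht, htR⟩
    rw [Real.norm_eq_abs] at this
    nlinarith [le_max_left (|ℓ| + 1) B, le_max_right (|ℓ| + 1) B, abs_nonneg ℓ]
  · have ht1 : 1 ≤ t := (le_max_right _ _).trans htR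
    have := hR t ((le_max_left _ _).trans htR)
    rw [abs_div, abs_of_pos (by linarith : 0 < t), div_le_iff₀ (by linarith)] at this
    nlinarith [abs_nonneg ℓ, le_max_left (|ℓ| + 1) B]

theorem isClosed_setOf_forall_abs_sub_le {φ : ℝ → ℝ} (hφ : Continuous φ) (c : ℝ) :
    IsClosed {T | ∀ t ≥ 0, |φ (t + T) - φ t| ≤ c * (t + 1)} := by
  simp only [ofPred_forall]
  exact isClosed_iInter fun t => isClosed_iInter fun _ =>
    isClosed_le (by fun_prop) continuous_const

theorem exists_Icc_forall_abs_sub_le {φ : ℝ → ℝ} (hφ : Continuous φ) {θ : ℝ} (hθ : 0 < θ)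
    (h : ∀ T ∈ Ioo 0 θ, ∃ M, ∀ t ≥ 0, |φ (t + T) - φ t| ≤ M * (t + 1)) :
    ∃ a δ c : ℝ, 0 ≤ a ∧ 0 < δ ∧ 0 ≤ c ∧
      ∀ T ∈ Icc a (a + δ), ∀ t ≥ 0, |φ (t + T) - φ t| ≤ c * (t + 1) := by
  have : BaireSpace (Ioo 0 θ) := isOpen_Ioo.baireSpace
  have : Nonempty (Ioo 0 θ) := ⟨⟨θ / 2, half_pos hθ, half_lt_self hθ⟩⟩
  set A : ℕ → Set ℝ := fun n => {T | ∀ t ≥ 0, |φ (t + T) - φ t| ≤ n * (t + 1)}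
  have hcover : ⋃ n, Subtype.val ⁻¹' A n = (univ : Set (Ioo 0 θ)) := by
    refine eq_univ_of_forall fun T => mem_iUnion.2 ?_
    obtain ⟨M, hM⟩ := h T T.2
    exact ⟨⌈M⌉₊, fun t ht => (hM t ht).trans
      (mul_le_mul_of_nonneg_right (Nat.le_ceil M) (by linarith))⟩
  obtain ⟨n, hn⟩ := nonempty_interior_of_iUnion_of_closed
    (f := fun n => Subtype.val ⁻¹' A n)
    (fun n => (isClosed_setOf_forall_abs_sub_le hφ n).preimage continuous_subtype_val) hcover
  set U : Set (Ioo 0 θ) := interior (Subtype.val ⁻¹' A n)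
  set V : Set ℝ := Subtype.val '' U
  have hVopen : IsOpen V := isOpen_Ioo.isOpenMap_subtype_val _ isOpen_interior
  have hVA : V ⊆ A n ∩ Ioo 0 θ := by
    rintro _ ⟨T, hT, rfl⟩
    exact ⟨interior_subset (s := Subtype.val ⁻¹' A n) hT, T.2⟩
  obtain ⟨x, hx⟩ := hn.image Subtype.val
  obtain ⟨ε, hε, hball⟩ := Metric.isOpen_iff.1 hVopen x hx
  have hIcc : Icc x (x + ε / 2) ⊆ V := fun T hT => hball <| by
    rw [Metric.mem_ball, Real.dist_eq, abs_lt]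
    constructor <;> linarith [hT.1, hT.2]
  refine ⟨x, ε / 2, n, (hVA hx).2.1.le, half_pos hε, n.cast_nonneg, fun T hT => ?_⟩
  exact (hVA (hIcc hT)).1

theorem abs_add_sub_le_of_forall_mem_Icc {φ : ℝ → ℝ} {a δ c : ℝ} (ha : 0 ≤ a) (hc : 0 ≤ c)
    (h : ∀ T ∈ Icc a (a + δ), ∀ t ≥ 0, |φ (t + T) - φ t| ≤ c * (t + 1)) :
    ∀ s ≥ a, ∀ r ∈ Icc 0 δ, |φ (s + r) - φ s| ≤ 2 * c * (s + 1) := by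
  intro s hs r hr
  -- the increment `r` at `s` is the difference of the shifts `a + r` and `a` at `s - a`
  have h₁ := h (a + r) ⟨by linarith [hr.1], by linarith [hr.2]⟩ (s - a) (by linarith)
  have h₂ := h a ⟨le_rfl, by linarith [hr.1, hr.2]⟩ (s - a) (by linarith)
  rw [show s - a + (a + r) = s + r by ring] at h₁
  rw [show s - a + a = s by ring] at h₂
  calc |φ (s + r) - φ s| ≤ |φ (s + r) - φ (s - a)| + |φ (s - a) - φ s| := abs_sub_le _ _ _
    _ ≤ 2 * c * (s + 1) := by nlinarith [abs_sub_comm (φ (s - a)) (φ s)]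

theorem abs_add_sub_le_nat_mul {φ : ℝ → ℝ} {R δ c : ℝ} (hδ : 0 ≤ δ) (hc : 0 ≤ c)
    (h : ∀ s ≥ R, ∀ r ∈ Icc 0 δ, |φ (s + r) - φ s| ≤ c * (s + 1)) (k : ℕ) :
    ∀ s ≥ R, ∀ T ∈ Icc 0 (k * δ), |φ (s + T) - φ s| ≤ k * c * (s + T + 1) := by
  induction k with
  | zero =>
    rintro s - T ⟨hT0, hT⟩
    obtain rfl : T = 0 := le_antisymm (by simpa using hT) hT0
    simp
  | succ k ih =>
    rintro s hs T ⟨hT0, hT⟩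
    set r := min T δ with hr_def
    have hrest : T - r ∈ Icc 0 (k * δ) := by
      push_cast at hT
      constructor
      · linarith [min_le_left T δ]
      · rcases le_total T δ with hTδ | hδT
        · rw [hr_def, min_eq_left hTδ, sub_self]
          positivity
        · rw [hr_def, min_eq_right hδT]
          linarith
    have hstep := h (s + (T - r)) (by linarith [hrest.1]) r ⟨le_min hT0 hδ, min_le_right T δ⟩
    have hprev := ih s hs (T - r) hrest
    rw [show s + (T - r) + r = s + T by ring] at hstep
    calc |φ (s + T) - φ s| ≤ |φ (s + T) - φ (s + (T - r))| + |φ (s + (T - r)) - φ s| :=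
          abs_sub_le _ _ _
      _ ≤ (k + 1 : ℕ) * c * (s + T + 1) := by
        have hr : 0 ≤ r := le_min hT0 hδ
        push_cast
        nlinarith [mul_nonneg (k.cast_nonneg : (0:ℝ) ≤ k) hc]

theorem exists_forall_abs_sub_le_of_tendsto_div {φ : ℝ → ℝ} (hφ : Continuous φ) {θ : ℝ}
    (hθ : 0 < θ)
    (h : ∀ T ∈ Ioo 0 θ, ∃ ℓ, Tendsto (fun t => (φ (t + T) - φ t) / t) atTop (𝓝 ℓ)) (B : ℝ) :
    ∃ C, ∀ t ≥ 0, ∀ T ∈ Icc 0 B, |φ (t + T) - φ t| ≤ C * (t + 1) := by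
  obtain ⟨a, δ, c, ha, hδ, hc, hac⟩ := exists_Icc_forall_abs_sub_le hφ hθ fun T hT =>
    let ⟨_, hℓ⟩ := h T hT
    exists_abs_le_mul_add_one_of_tendsto_div (by fun_prop) hℓ
  set k := ⌈B / δ⌉₊
  have hchop := abs_add_sub_le_nat_mul hδ.le (by positivity)
    (abs_add_sub_le_of_forall_mem_Icc ha hc hac) k
  have hBk : B ≤ k * δ := (div_le_iff₀ hδ).1 (Nat.le_ceil _)
  obtain ⟨D, hD⟩ := isCompact_Icc (a := 0) (b := a + B) |>.exists_bound_of_continuousOn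
    hφ.continuousOn
  refine ⟨k * (2 * c) * (B + 1) + 2 * D, fun t ht T hT => ?_⟩
  have hB : 0 ≤ B := hT.1.trans hT.2
  have hD0 : 0 ≤ D := (norm_nonneg _).trans (hD 0 ⟨le_rfl, by linarith⟩)
  have hk : (0:ℝ) ≤ k * (2 * c) := by positivity
  rcases le_total a t with hat | hta
  · have := hchop t hat T ⟨hT.1, hT.2.trans hBk⟩
    nlinarith [mul_le_mul_of_nonneg_left hT.2 hk, mul_nonneg hk (mul_nonneg hB ht)]
  · have h₁ := hD (t + T) ⟨by linarith [hT.1], by linarith [hT.2]⟩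
    have h₂ := hD t ⟨ht, by linarith⟩
    rw [Real.norm_eq_abs] at h₁ h₂
    calc |φ (t + T) - φ t| ≤ |φ (t + T)| + |φ t| := abs_sub _ _
      _ ≤ k * (2 * c) * (B + 1) + 2 * D := by nlinarith
      _ ≤ (k * (2 * c) * (B + 1) + 2 * D) * (t + 1) :=
        le_mul_of_one_le_right (by positivity) (by linarith)

theorem exists_forall_abs_one_div_mul_le_of_abs_sub_le {φ : ℝ → ℝ} (hφ : Continuous φ) {θ C : ℝ}
    (hC : ∀ t ≥ 0, ∀ T ∈ Icc 0 θ, |φ (t + T) - φ t| ≤ C * (t + 1)) :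
    ∃ K, ∀ t ≥ (1:ℝ), ∀ T ∈ Icc 0 θ, |(1 / t) * (φ (t + T) - φ T - φ t)| ≤ K := by
  obtain ⟨D, hD⟩ := isCompact_Icc (a := 0) (b := θ) |>.exists_bound_of_continuousOn
    hφ.continuousOn
  refine ⟨2 * C + D, fun t ht T hT => ?_⟩
  have hincr := hC t (by linarith) T hT
  have hφT := hD T hT
  rw [Real.norm_eq_abs] at hφT
  have hC0 : 0 ≤ C := by nlinarith [abs_nonneg (φ (t + T) - φ t)]
  rw [abs_mul, abs_of_pos (by positivity), one_div, inv_mul_le_iff₀ (by positivity)]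
  calc |φ (t + T) - φ T - φ t| ≤ |φ (t + T) - φ t| + |φ T| := by
        rw [sub_right_comm]; exact abs_sub _ _
    _ ≤ C * (t + 1) + D := add_le_add hincr hφT
    _ ≤ t * (2 * C + D) := by nlinarith [abs_nonneg (φ T)]

theorem exists_forall_abs_one_div_mul_sub_le_of_tendsto {φ : ℝ → ℝ} (hφ : Continuous φ) {θ : ℝ}
    (hθ : 0 < θ) {ℓ : ℝ → ℝ}
    (h : ∀ T ∈ Ioc 0 θ, Tendsto (fun t => (1 / t) * (φ (t + T) - φ T - φ t)) atTop (𝓝 (ℓ T))) :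
    ∃ C, ∀ t ≥ (1:ℝ), ∀ T ∈ Icc 0 θ, |(1 / t) * (φ (t + T) - φ T - φ t) - ℓ T| ≤ C := by
  have hincr : ∀ T ∈ Ioo 0 θ, ∃ ℓ, Tendsto (fun t => (φ (t + T) - φ t) / t) atTop (𝓝 ℓ) :=
    fun T hT => ⟨ℓ T, by
      simpa using ((h T (Ioo_subset_Ioc_self hT)).add
        (tendsto_const_nhds.div_atTop tendsto_id : Tendsto (fun t => φ T / t) atTop (𝓝 0))).congr
        fun t => by ring⟩
  obtain ⟨C, hC⟩ := exists_forall_abs_sub_le_of_tendsto_div hφ hθ hincr θ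
  obtain ⟨K, hK⟩ := exists_forall_abs_one_div_mul_le_of_abs_sub_le hφ hC
  have hK0 : 0 ≤ K := (abs_nonneg _).trans (hK 1 le_rfl 0 ⟨le_rfl, hθ.le⟩)
  have hℓ : ∀ T ∈ Icc 0 θ, |ℓ T| ≤ K + |ℓ 0| := by
    rintro T ⟨hT0, hTθ⟩
    rcases hT0.eq_or_lt with rfl | hT0
    · linarith
    · have : |ℓ T| ≤ K := le_of_tendsto (h T ⟨hT0, hTθ⟩).abs <|
        (eventually_ge_atTop 1).mono fun t ht => hK t ht T ⟨hT0.le, hTθ⟩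
      linarith [abs_nonneg (ℓ 0)]
  refine ⟨2 * K + |ℓ 0|, fun t ht T hT => ?_⟩
  linarith [abs_sub (1 / t * (φ (t + T) - φ T - φ t)) (ℓ T), hK t ht T hT, hℓ T hT]

theorem stmt2_general (f : ℝ → ℝ) (hf : LocallyIntegrableOn f (Set.Ici 0))
    (L : ℝ → ℝ)
    (hconv : ∀ θ ∈ Set.Ioc (0:ℝ) 1,
      Tendsto (fun t => (1/t) * ∫ s in (0:ℝ)..t, ∫ u in s..(s+θ), f u) atTop (𝓝 (L θ)))
    (θ : ℝ) (hθ : θ ∈ Set.Ioc (0:ℝ) 1) :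
    ∃ C : ℝ, ∀ t ≥ (1:ℝ), ∀ T ∈ Set.Icc (0:ℝ) θ,
      |(1/t) * (∫ s in (0:ℝ)..t, ∫ u in s..(s+T), f u) - L T| ≤ C := by
  have hg := hf.intervalIntegrable_indicator isClosed_Ici
  set H := doublePrimitive ((Ici 0).indicator f)
  have hmean : ∀ t ≥ (0:ℝ), ∀ T ≥ (0:ℝ),
      ∫ s in (0:ℝ)..t, ∫ u in s..(s+T), f u = H (t + T) - H T - H t := fun t ht T hT => by
    rw [integral_integral_add_eq_indicator_Ici f ht hT,
      integral_integral_add_eq_doublePrimitive hg]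
  have hconvH : ∀ T ∈ Ioc 0 θ,
      Tendsto (fun t => (1 / t) * (H (t + T) - H T - H t)) atTop (𝓝 (L T)) := fun T hT =>
    (hconv T ⟨hT.1, hT.2.trans hθ.2⟩).congr' <| by
      filter_upwards [eventually_ge_atTop 0] with t ht using by rw [hmean t ht T hT.1.le]
  obtain ⟨C, hC⟩ :=
    exists_forall_abs_one_div_mul_sub_le_of_tendsto (continuous_doublePrimitive hg) hθ.1 hconvH
  refine ⟨C, fun t ht T hT => ?_⟩
  rw [hmean t (by linarith) T hT.1]
  exact hC t ht T hT

/-- If for every `θ ∈ (0,1]` the Cesàro mean of `t ↦ ∫_t^{t+θ} f` converges to `L θ`,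
then for fixed `θ ∈ (0,1]` the quantity `|(1/t)∫₀ᵗ∫_s^{s+T} f - L T|` is uniformly
bounded over `t ∈ [1,∞)` and `T ∈ [0,θ]`. -/
theorem stmt2 (f : ℝ → ℝ) (hf : LocallyIntegrableOn f (Set.Ici 0))
    (L : ℝ → ℝ) (hL0 : L 0 = 0)
    (hconv : ∀ θ ∈ Set.Ioc (0:ℝ) 1,
      Tendsto (fun t => (1/t) * ∫ s in (0:ℝ)..t, ∫ u in s..(s+θ), f u) atTop (𝓝 (L θ)))
    (θ : ℝ) (hθ : θ ∈ Set.Ioc (0:ℝ) 1) :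
    ∃ C : ℝ, ∀ t ≥ (1:ℝ), ∀ T ∈ Set.Icc (0:ℝ) θ,
      |(1/t) * (∫ s in (0:ℝ)..t, ∫ u in s..(s+T), f u) - L T| ≤ C :=
  stmt2_general f hf L hconv θ hθ
end

section
/- Let f : [0,∞) → ℝ be locally integrable and suppose that for every θ ∈ (0,1] there exists L(θ) ∈ ℝ such that (1/t)∫₀ᵗ ∫ₛ^{s+θ} f(u) du ds → L(θ) as t → ∞. Then the limit function L is additive: for all T, T' ∈ [0,1] with T' ≤ T, one has L(T − T') = L(T) − L(T') (with L(0) = 0). -/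
open MeasureTheory Filter Set
open scoped Topology

/-- If for every `θ ∈ (0,1]` the Cesàro mean of `t ↦ ∫_t^{t+θ} f` converges to `L θ`,
then the limit function `L` is additive: for `T', T ∈ [0,1]` with `T' ≤ T`,
`L (T - T') = L T - L T'` (with `L 0 = 0`). -/
theorem stmt3 (f : ℝ → ℝ) (hf : LocallyIntegrableOn f (Set.Ici 0))
    (L : ℝ → ℝ) (hL0 : L 0 = 0)
    (hconv : ∀ θ ∈ Set.Ioc (0:ℝ) 1,
      Tendsto (fun t => (1/t) * ∫ s in (0:ℝ)..t, ∫ u in s..(s+θ), f u) atTop (𝓝 (L θ))) :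
    ∀ T ∈ Set.Icc (0:ℝ) 1, ∀ T' ∈ Set.Icc (0:ℝ) 1, T' ≤ T →
      L (T - T') = L T - L T' := by
  intro T hT T' hT' hle
  rcases eq_or_lt_of_le hT'.1 with h0 | h0
  · simp [← h0, hL0]
  rcases eq_or_lt_of_le hle with hE | hlt
  · subst hE; simp [hL0]
  -- main case : 0 < T' < T ≤ 1
  set θ := T - T' with hθdef
  have hθmem : θ ∈ Set.Ioc (0:ℝ) 1 := ⟨by linarith, by linarith [hT.2, hT'.1]⟩
  have hTmem : T ∈ Set.Ioc (0:ℝ) 1 := ⟨by linarith, hT.2⟩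
  set f' : ℝ → ℝ := (Set.Ici (0:ℝ)).indicator f with hf'def
  have hint : ∀ a b : ℝ, IntervalIntegrable f' volume a b := by
    intro a b
    have hcomp : IntegrableOn f (Set.Ici 0 ∩ Set.uIcc a b) volume :=
      hf.integrableOn_compact_subset inter_subset_left
        (isCompact_uIcc.inter_left isClosed_Ici)
    have H : IntegrableOn f' (Set.uIcc a b) volume := by
      rw [hf'def, IntegrableOn, integrable_indicator_iff measurableSet_Ici, IntegrableOn,
        Measure.restrict_restrict measurableSet_Ici]
      exact hcomp
    exact H.intervalIntegrable
  set F : ℝ → ℝ := fun b => ∫ x in (0:ℝ)..b, f' x with hFdef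
  have hFcont : Continuous F := intervalIntegral.continuous_primitive hint 0
  -- key identity
  have key : ∀ θ' s : ℝ, 0 ≤ θ' → 0 ≤ s →
      F (s + θ') - F s = ∫ u in s..(s+θ'), f u := by
    intro θ' s hθ' hs
    have h1 : F (s + θ') - F s = ∫ u in s..(s+θ'), f' u := by
      have := intervalIntegral.integral_add_adjacent_intervals (hint 0 s) (hint s (s+θ'))
      rw [hFdef]; dsimp only; linarith [this]
    rw [h1]
    apply intervalIntegral.integral_congr
    intro u hu
    rw [Set.uIcc_of_le (by linarith : s ≤ s + θ')] at hu
    exact Set.indicator_of_mem (by linarith [hu.1] : (0:ℝ) ≤ u) f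
  -- Cesàro means in terms of F
  set A : ℝ → ℝ → ℝ := fun θ' t => (1/t) * ∫ s in (0:ℝ)..t, (F (s + θ') - F s) with hAdef
  have hA : ∀ θ' ∈ Set.Ioc (0:ℝ) 1, Tendsto (A θ') atTop (𝓝 (L θ')) := by
    intro θ' hθ'
    apply (hconv θ' hθ').congr'
    filter_upwards [eventually_ge_atTop (0:ℝ)] with t ht
    rw [hAdef]; dsimp only
    congr 1
    apply intervalIntegral.integral_congr
    intro s hs
    rw [Set.uIcc_of_le ht] at hs
    exact (key θ' s (le_of_lt hθ'.1) hs.1).symm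
  -- integrability of the g-functions
  have hgint : ∀ (θ' : ℝ) (a b : ℝ),
      IntervalIntegrable (fun s => F (s + θ') - F s) volume a b := by
    intro θ' a b
    exact ((hFcont.comp (continuous_id.add continuous_const)).sub hFcont).intervalIntegrable a b
  -- the structural identity
  have struct : ∀ t : ℝ,
      (∫ s in (0:ℝ)..t, (F (s + T) - F s))
        = (∫ s in (0:ℝ)..t, (F (s + T') - F s))
          + ((∫ s in (0:ℝ)..(t+T'), (F (s + θ) - F s))
             - ∫ s in (0:ℝ)..T', (F (s + θ) - F s)) := by
    intro t
    have h1 : (∫ s in (0:ℝ)..t, (F (s + T) - F s))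
        = (∫ s in (0:ℝ)..t, (F (s + T') - F s))
          + ∫ s in (0:ℝ)..t, (F ((s + T') + θ) - F (s + T')) := by
      have hc : Continuous (fun s : ℝ => F (s + T' + θ) - F (s + T')) := by fun_prop
      rw [← intervalIntegral.integral_add (hgint T' 0 t) (hc.intervalIntegrable 0 t)]
      apply intervalIntegral.integral_congr
      intro s _
      have hst : s + T' + θ = s + T := by rw [hθdef]; ring
      show F (s + T) - F s = F (s + T') - F s + (F (s + T' + θ) - F (s + T'))
      rw [hst]; ring
    have h2 : (∫ s in (0:ℝ)..t, (F ((s + T') + θ) - F (s + T')))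
        = ∫ s in T'..(t+T'), (F (s + θ) - F s) := by
      have := intervalIntegral.integral_comp_add_right (a := (0:ℝ)) (b := t)
        (f := fun s => F (s + θ) - F s) T'
      simpa using this
    have h3 : (∫ s in T'..(t+T'), (F (s + θ) - F s))
        = (∫ s in (0:ℝ)..(t+T'), (F (s + θ) - F s))
          - ∫ s in (0:ℝ)..T', (F (s + θ) - F s) := by
      have := intervalIntegral.integral_add_adjacent_intervals
        (hgint θ 0 T') (hgint θ T' (t+T'))
      linarith
    rw [h1, h2, h3]
  -- limits
  have hlim1 : Tendsto (fun t => (1/t) * ∫ s in (0:ℝ)..(t+T'), (F (s + θ) - F s))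
      atTop (𝓝 (L θ)) := by
    have hcomp : Tendsto (fun t => A θ (t + T')) atTop (𝓝 (L θ)) :=
      (hA θ hθmem).comp (tendsto_atTop_add_const_right atTop T' tendsto_id)
    have hratio : Tendsto (fun t : ℝ => (t + T') / t) atTop (𝓝 1) := by
      have : Tendsto (fun t : ℝ => 1 + T' / t) atTop (𝓝 (1 + 0)) :=
        tendsto_const_nhds.add (tendsto_const_nhds.div_atTop tendsto_id)
      rw [add_zero] at this
      apply this.congr'
      filter_upwards [eventually_gt_atTop (0:ℝ)] with t ht
      field_simp
    have := hratio.mul hcomp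
    rw [one_mul] at this
    apply this.congr'
    filter_upwards [eventually_gt_atTop (0:ℝ)] with t ht
    rw [hAdef]; dsimp only
    have ht' : t + T' ≠ 0 := by linarith
    field_simp
  have hlim2 : Tendsto (fun t : ℝ => (1/t) * ∫ s in (0:ℝ)..T', (F (s + θ) - F s))
      atTop (𝓝 0) := by
    have : Tendsto (fun t : ℝ => (∫ s in (0:ℝ)..T', (F (s + θ) - F s)) / t) atTop (𝓝 0) :=
      tendsto_const_nhds.div_atTop tendsto_id
    apply this.congr
    intro t; rw [one_div, div_eq_mul_inv, mul_comm]
  have hmain : Tendsto (A T) atTop (𝓝 (L T' + (L θ - 0))) := by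
    have := (hA T' ⟨h0, hT'.2⟩).add (hlim1.sub hlim2)
    apply this.congr
    intro t
    rw [hAdef]; dsimp only
    rw [struct t]; ring
  have := tendsto_nhds_unique (hA T hTmem) hmain
  rw [hθdef] at *
  linarith
end

section
/- Let f : [0,∞) → ℝ be locally integrable, let θ ∈ (0,1] and L ∈ ℝ, and suppose f = f₁ + f₂ where f₁ : [0,∞) → ℝ is continuous with (1/t)∫₀ᵗ f₁(u) du → L as t → ∞, and f₂ is locally integrable with (1/t)∫₀ᵗ ∫₀ˢ f₂(u) du ds → L·θ/2 as t → ∞. Then (1/t)∫₀ᵗ ∫ₛ^{s+θ} f(u) du ds → L·θ as t → ∞ (where f is extended by 0 for negative arguments). -/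
open MeasureTheory Filter Set
open scoped Topology

private lemma aux_prim_int (g : ℝ → ℝ) (hg : LocallyIntegrableOn g (Set.Ici 0)) :
    ∀ a b : ℝ, 0 ≤ a → a ≤ b →
      IntervalIntegrable (fun x => ∫ u in (0:ℝ)..x, g u) volume a b := by
  intro a b ha hab
  have hb : (0:ℝ) ≤ b := le_trans ha hab
  have hint : IntegrableOn g (Set.uIcc 0 b) volume := by
    rw [Set.uIcc_of_le hb]
    exact hg.integrableOn_compact_subset (fun y hy => hy.1) isCompact_Icc
  have hc := intervalIntegral.continuousOn_primitive_interval (a := 0) (b := b) hint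
  apply ContinuousOn.intervalIntegrable
  apply hc.mono
  rw [Set.uIcc_of_le hb, Set.uIcc_of_le hab]
  exact fun y hy => ⟨le_trans ha hy.1, hy.2⟩

private lemma aux_base_int (g : ℝ → ℝ) (hg : LocallyIntegrableOn g (Set.Ici 0)) :
    ∀ x : ℝ, 0 ≤ x → IntervalIntegrable g volume 0 x := by
  intro x hx
  rw [intervalIntegrable_iff_integrableOn_Icc_of_le hx]
  exact hg.integrableOn_compact_subset (fun y hy => hy.1) isCompact_Icc

private lemma aux_lim (g : ℝ → ℝ) (θ c : ℝ) (hθ : 0 < θ)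
    (hgi : ∀ t : ℝ, 1 ≤ t → IntervalIntegrable g volume t (t+θ))
    (h : Tendsto (fun t => (1/t) * g t) atTop (𝓝 c)) :
    Tendsto (fun t => (1/t) * ∫ s in t..(t+θ), g s) atTop (𝓝 (c*θ)) := by
  have h1 : Tendsto (fun t => (1/t) * ∫ s in t..(t+θ), (g s - c * s)) atTop (𝓝 0) := by
    rw [Metric.tendsto_atTop]
    intro ε hε
    obtain ⟨N, hN⟩ := Metric.tendsto_atTop.mp h (ε/(4*(θ+1))) (by positivity)
    refine ⟨max N (max 1 θ), fun t ht => ?_⟩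
    have htN : N ≤ t := le_trans (le_max_left _ _) ht
    have ht1 : (1:ℝ) ≤ t := le_trans (le_trans (le_max_left _ _) (le_max_right _ _)) ht
    have htθ : θ ≤ t := le_trans (le_trans (le_max_right _ _) (le_max_right _ _)) ht
    have ht0 : (0:ℝ) < t := lt_of_lt_of_le one_pos ht1
    have hbound : ∀ s ∈ Set.uIoc t (t+θ), ‖g s - c * s‖ ≤ t * (ε/(2*(θ+1))) := by
      intro s hs
      rw [Set.uIoc_of_le (by linarith)] at hs
      have hs1 : t < s := hs.1
      have hs2 : s ≤ t + θ := hs.2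
      have hs0 : 0 < s := lt_trans ht0 hs1
      have hNs := hN s (le_trans htN hs1.le)
      rw [Real.dist_eq] at hNs
      have habs : |g s - c * s| = s * |(1/s) * g s - c| := by
        have hh : g s - c * s = s * ((1/s) * g s - c) := by field_simp
        rw [hh, abs_mul, abs_of_pos hs0]
      rw [Real.norm_eq_abs, habs]
      calc s * |(1/s) * g s - c| ≤ s * (ε/(4*(θ+1))) :=
            mul_le_mul_of_nonneg_left hNs.le hs0.le
        _ ≤ (2*t) * (ε/(4*(θ+1))) := by
            apply mul_le_mul_of_nonneg_right (by linarith) (by positivity)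
        _ = t * (ε/(2*(θ+1))) := by field_simp; ring
    have hle := intervalIntegral.norm_integral_le_of_norm_le_const hbound
    rw [Real.dist_eq, sub_zero]
    have hstep : |(1/t) * ∫ s in t..(t+θ), (g s - c * s)|
        ≤ (1/t) * (t * (ε/(2*(θ+1))) * |t + θ - t|) := by
      rw [abs_mul, abs_of_pos (by positivity : (0:ℝ) < 1/t)]
      exact mul_le_mul_of_nonneg_left hle (by positivity)
    refine lt_of_le_of_lt hstep ?_
    have habsθ : |t + θ - t| = θ := by rw [add_sub_cancel_left, abs_of_pos hθ]
    rw [habsθ]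
    have heq : (1/t) * (t * (ε/(2*(θ+1))) * θ) = ε * (θ / (2*(θ+1))) := by
      field_simp
    rw [heq]
    have hlt1 : θ / (2*(θ+1)) < 1 := by rw [div_lt_one (by positivity)]; linarith
    calc ε * (θ/(2*(θ+1))) < ε * 1 := mul_lt_mul_of_pos_left hlt1 hε
      _ = ε := mul_one ε
  have h2 : Tendsto (fun t => (1/t) * (c*(t*θ + θ^2/2))) atTop (𝓝 (c*θ)) := by
    have base : Tendsto (fun t : ℝ => c*θ + (c*θ^2/2) * t⁻¹) atTop (𝓝 (c*θ + (c*θ^2/2) * 0)) :=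
      tendsto_const_nhds.add (tendsto_const_nhds.mul tendsto_inv_atTop_zero)
    rw [mul_zero, add_zero] at base
    refine base.congr' ?_
    filter_upwards [eventually_gt_atTop 0] with t ht
    field_simp
  have key := h1.add h2
  rw [zero_add] at key
  refine key.congr' ?_
  filter_upwards [eventually_ge_atTop (1:ℝ)] with t ht
  have hint1 : IntervalIntegrable (fun s => c * s) volume t (t+θ) :=
    (continuous_const.mul continuous_id).intervalIntegrable _ _
  have hcs : ∫ s in t..(t+θ), c * s = c * (t*θ + θ^2/2) := by
    rw [intervalIntegral.integral_const_mul, integral_id]; ring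
  rw [← hcs, ← mul_add, ← intervalIntegral.integral_add ((hgi t ht).sub hint1) hint1]
  congr 1
  apply intervalIntegral.integral_congr
  intro s _
  ring

/-- Decomposition lemma (converse direction): if `f = f₁ + f₂` where `f₁` is continuous on
`[0,∞)` with Cesàro limit `L` and `f₂` is locally integrable with
`(1/t)∫₀ᵗ∫₀ˢ f₂ → L·θ/2`, then `(1/t)∫₀ᵗ∫_s^{s+θ} f → L·θ`. -/
theorem stmt5 (f f₁ f₂ : ℝ → ℝ) (hf : LocallyIntegrableOn f (Set.Ici 0))
    (hf0 : ∀ t < (0:ℝ), f t = 0)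
    (θ : ℝ) (hθ : θ ∈ Set.Ioc (0:ℝ) 1) (L : ℝ)
    (hsum : ∀ t, f t = f₁ t + f₂ t)
    (hf₁_cont : ContinuousOn f₁ (Set.Ici 0))
    (hf₁_ces : Tendsto (fun t => (1/t) * ∫ u in (0:ℝ)..t, f₁ u) atTop (𝓝 L))
    (hf₂_loc : LocallyIntegrableOn f₂ (Set.Ici 0))
    (hf₂_ces : Tendsto (fun t => (1/t) * ∫ s in (0:ℝ)..t, ∫ u in (0:ℝ)..s, f₂ u)
      atTop (𝓝 (L * θ / 2))) :
    Tendsto (fun t => (1/t) * ∫ s in (0:ℝ)..t, ∫ u in s..(s+θ), f u)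
      atTop (𝓝 (L * θ)) := by
  obtain ⟨hθ0, hθ1⟩ := hθ
  have hf₁_loc : LocallyIntegrableOn f₁ (Set.Ici 0) :=
    hf₁_cont.locallyIntegrableOn measurableSet_Ici
  have hfi := aux_base_int f hf
  have hf₁i := aux_base_int f₁ hf₁_loc
  have hf₂i := aux_base_int f₂ hf₂_loc
  have iF := aux_prim_int f hf
  have iF₁ := aux_prim_int f₁ hf₁_loc
  have iF₂ := aux_prim_int f₂ hf₂_loc
  -- main eventual identity
  have hmain : ∀ᶠ t in atTop, (1/t) * ∫ s in (0:ℝ)..t, ∫ u in s..(s+θ), f u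
      = (1/t) * (∫ s in t..(t+θ), ∫ u in (0:ℝ)..s, f₁ u)
        + (((t+θ)/t) * ((1/(t+θ)) * ∫ s in (0:ℝ)..(t+θ), ∫ u in (0:ℝ)..s, f₂ u)
           - (1/t) * ∫ s in (0:ℝ)..t, ∫ u in (0:ℝ)..s, f₂ u)
        - (1/t) * ∫ s in (0:ℝ)..θ, ∫ u in (0:ℝ)..s, f u := by
    filter_upwards [eventually_ge_atTop (1:ℝ)] with t ht1
    have ht0 : (0:ℝ) < t := lt_of_lt_of_le one_pos ht1
    have htθ : θ ≤ t := le_trans hθ1 ht1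
    have htθ0 : (0:ℝ) < t + θ := by linarith
    have stepA : (∫ s in (0:ℝ)..t, ∫ u in s..(s+θ), f u)
        = ∫ s in (0:ℝ)..t, ((∫ u in (0:ℝ)..(s+θ), f u) - ∫ u in (0:ℝ)..s, f u) := by
      apply intervalIntegral.integral_congr
      intro s hs
      rw [Set.uIcc_of_le ht0.le] at hs
      exact (intervalIntegral.integral_interval_sub_left
        (hfi (s+θ) (by linarith [hs.1])) (hfi s hs.1)).symm
    have iFshift : IntervalIntegrable (fun s => ∫ u in (0:ℝ)..(s+θ), f u) volume 0 t := by
      have := (iF θ (t+θ) hθ0.le (by linarith)).comp_add_right θ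
      simpa using this
    have stepB : (∫ s in (0:ℝ)..t, ((∫ u in (0:ℝ)..(s+θ), f u) - ∫ u in (0:ℝ)..s, f u))
        = (∫ s in (0:ℝ)..t, ∫ u in (0:ℝ)..(s+θ), f u)
          - ∫ s in (0:ℝ)..t, ∫ u in (0:ℝ)..s, f u :=
      intervalIntegral.integral_sub iFshift (iF 0 t le_rfl ht0.le)
    have stepC : (∫ s in (0:ℝ)..t, ∫ u in (0:ℝ)..(s+θ), f u)
        = ∫ s in θ..(t+θ), ∫ u in (0:ℝ)..s, f u := by
      have := intervalIntegral.integral_comp_add_right (a := 0) (b := t)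
        (f := fun s => ∫ u in (0:ℝ)..s, f u) θ
      rwa [zero_add] at this
    have hadj1 : (∫ s in θ..(t+θ), ∫ u in (0:ℝ)..s, f u)
        = (∫ s in θ..t, ∫ u in (0:ℝ)..s, f u) + ∫ s in t..(t+θ), ∫ u in (0:ℝ)..s, f u :=
      (intervalIntegral.integral_add_adjacent_intervals (iF θ t hθ0.le htθ)
        (iF t (t+θ) ht0.le (by linarith))).symm
    have hadj2 : (∫ s in (0:ℝ)..t, ∫ u in (0:ℝ)..s, f u)
        = (∫ s in (0:ℝ)..θ, ∫ u in (0:ℝ)..s, f u) + ∫ s in θ..t, ∫ u in (0:ℝ)..s, f u :=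
      (intervalIntegral.integral_add_adjacent_intervals (iF 0 θ le_rfl hθ0.le)
        (iF θ t hθ0.le htθ)).symm
    have stepE : (∫ s in t..(t+θ), ∫ u in (0:ℝ)..s, f u)
        = (∫ s in t..(t+θ), ∫ u in (0:ℝ)..s, f₁ u)
          + ∫ s in t..(t+θ), ∫ u in (0:ℝ)..s, f₂ u := by
      rw [← intervalIntegral.integral_add (iF₁ t (t+θ) ht0.le (by linarith))
        (iF₂ t (t+θ) ht0.le (by linarith))]
      apply intervalIntegral.integral_congr
      intro s hs
      rw [Set.uIcc_of_le (by linarith : t ≤ t + θ)] at hs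
      have hs0 : (0:ℝ) ≤ s := le_trans ht0.le hs.1
      show (∫ u in (0:ℝ)..s, f u) = (∫ u in (0:ℝ)..s, f₁ u) + ∫ u in (0:ℝ)..s, f₂ u
      rw [← intervalIntegral.integral_add (hf₁i s hs0) (hf₂i s hs0)]
      apply intervalIntegral.integral_congr
      intro u _
      exact hsum u
    have stepF : (∫ s in t..(t+θ), ∫ u in (0:ℝ)..s, f₂ u)
        = (∫ s in (0:ℝ)..(t+θ), ∫ u in (0:ℝ)..s, f₂ u)
          - ∫ s in (0:ℝ)..t, ∫ u in (0:ℝ)..s, f₂ u :=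
      (intervalIntegral.integral_interval_sub_left (iF₂ 0 (t+θ) le_rfl htθ0.le)
        (iF₂ 0 t le_rfl ht0.le)).symm
    rw [stepA, stepB, stepC, hadj1, hadj2, stepE, stepF]
    field_simp
    ring
  -- limits
  have h₁ : Tendsto (fun t => (1/t) * ∫ s in t..(t+θ), ∫ u in (0:ℝ)..s, f₁ u)
      atTop (𝓝 (L*θ)) := by
    apply aux_lim _ θ L hθ0 _ hf₁_ces
    intro t ht
    exact iF₁ t (t+θ) (le_trans zero_le_one ht) (by linarith)
  have h2a : Tendsto (fun t : ℝ => (t+θ)/t) atTop (𝓝 1) := by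
    have base : Tendsto (fun t : ℝ => 1 + θ * t⁻¹) atTop (𝓝 (1 + θ * 0)) :=
      tendsto_const_nhds.add (tendsto_const_nhds.mul tendsto_inv_atTop_zero)
    rw [mul_zero, add_zero] at base
    refine base.congr' ?_
    filter_upwards [eventually_gt_atTop 0] with t ht
    field_simp
  have h2b : Tendsto (fun t : ℝ => (1/(t+θ)) * ∫ s in (0:ℝ)..(t+θ), ∫ u in (0:ℝ)..s, f₂ u)
      atTop (𝓝 (L*θ/2)) := by
    have := hf₂_ces.comp (tendsto_atTop_add_const_right atTop θ tendsto_id)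
    simpa [Function.comp_def] using this
  have h₂ := (h2a.mul h2b).sub hf₂_ces
  have h₃ : Tendsto (fun t : ℝ => (1/t) * ∫ s in (0:ℝ)..θ, ∫ u in (0:ℝ)..s, f u)
      atTop (𝓝 0) := by
    have := tendsto_inv_atTop_zero.mul_const (∫ s in (0:ℝ)..θ, ∫ u in (0:ℝ)..s, f u)
    rw [zero_mul] at this
    simpa [one_div] using this
  have final := (h₁.add h₂).sub h₃
  have hval : L*θ + (1*(L*θ/2) - L*θ/2) - 0 = L*θ := by ring
  rw [hval] at final
  exact final.congr' (hmain.mono fun t ht => ht.symm)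
end

section
/- Let g ∈ L¹([0,∞);ℝ) and let f : [0,∞) → ℝ be locally integrable with Cesàro limit L ∈ ℝ, i.e. (1/t)∫₀ᵗ f(s) ds → L as t → ∞. Then the convolution (f ∗ g)(t) = ∫₀ᵗ f(t−s) g(s) ds satisfies (1/t)∫₀ᵗ (f ∗ g)(s) ds → L·∫₀^∞ g(s) ds as t → ∞. -/
open MeasureTheory Filter Set
open scoped Topology

lemma key_fubini (g : ℝ → ℝ) (hg : IntegrableOn g (Set.Ici 0))
    (f : ℝ → ℝ) (hf : LocallyIntegrableOn f (Set.Ici 0)) {t : ℝ} (ht : 0 < t) :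
    ∫ s in (0:ℝ)..t, ∫ u in (0:ℝ)..s, f (s - u) * g u
      = ∫ u in Set.Ioc (0:ℝ) t, g u * ∫ v in (0:ℝ)..(t - u), f v := by
  set f1 : ℝ → ℝ := (Set.Icc (0:ℝ) t).indicator f with hf1def
  set g1 : ℝ → ℝ := (Set.Ioc (0:ℝ) t).indicator g with hg1def
  have hIccIci : Set.Icc (0:ℝ) t ⊆ Set.Ici 0 := Set.Icc_subset_Ici_self
  have hfIcc : IntegrableOn f (Set.Icc 0 t) :=
    hf.integrableOn_compact_subset hIccIci isCompact_Icc
  have hf1 : Integrable f1 := hfIcc.integrable_indicator measurableSet_Icc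
  have hg1 : Integrable g1 :=
    (hg.mono_set (Set.Ioc_subset_Icc_self.trans hIccIci)).integrable_indicator measurableSet_Ioc
  have hconv : Integrable (fun p : ℝ × ℝ => g1 p.2 * f1 (p.1 - p.2))
      ((volume : Measure ℝ).prod volume) :=
    hg1.convolution_integrand (ContinuousLinearMap.mul ℝ ℝ) hf1
  set K : ℝ × ℝ → ℝ :=
    ({p : ℝ × ℝ | p.2 ≤ p.1}).indicator (fun p => f1 (p.1 - p.2) * g1 p.2) with hKdef
  have hmeasset : MeasurableSet {p : ℝ × ℝ | p.2 ≤ p.1} :=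
    measurableSet_le measurable_snd measurable_fst
  have hK : Integrable K ((volume : Measure ℝ).prod volume) := by
    refine Integrable.indicator ?_ hmeasset
    simpa [mul_comm] using hconv
  have hKres : Integrable K ((volume.restrict (Set.Ioc 0 t)).prod
      (volume.restrict (Set.Ioc 0 t))) := by
    rw [Measure.prod_restrict]
    exact hK.restrict
  have swap := integral_integral_swap (μ := volume.restrict (Set.Ioc 0 t))
    (ν := volume.restrict (Set.Ioc 0 t)) (f := fun s u => K (s, u)) hKres
  have hslices : ∀ᵐ s ∂(volume.restrict (Set.Ioc 0 t)),
      Integrable (fun u => K (s, u)) (volume.restrict (Set.Ioc 0 t)) := hKres.prod_right_ae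
  -- LHS identification
  have hLHS : (∫ s in (0:ℝ)..t, ∫ u in (0:ℝ)..s, f (s - u) * g u)
      = ∫ s in Set.Ioc (0:ℝ) t, ∫ u in Set.Ioc (0:ℝ) t, K (s, u) := by
    rw [intervalIntegral.integral_of_le ht.le]
    refine integral_congr_ae ?_
    filter_upwards [hslices, ae_restrict_mem measurableSet_Ioc] with s hsint hs
    rw [intervalIntegral.integral_of_le hs.1.le]
    have hsplit : Set.Ioc (0:ℝ) t = Set.Ioc 0 s ∪ Set.Ioc s t :=
      (Set.Ioc_union_Ioc_eq_Ioc hs.1.le hs.2).symm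
    have hint1 : IntegrableOn (fun u => K (s, u)) (Set.Ioc 0 s) volume := by
      have := hsint.restrict (s := Set.Ioc 0 s)
      rwa [Measure.restrict_restrict measurableSet_Ioc, Set.Ioc_inter_Ioc, max_self,
        min_eq_left hs.2] at this
    have hint2 : IntegrableOn (fun u => K (s, u)) (Set.Ioc s t) volume := by
      have := hsint.restrict (s := Set.Ioc s t)
      rwa [Measure.restrict_restrict measurableSet_Ioc, Set.Ioc_inter_Ioc,
        max_eq_left hs.1.le, min_self] at this
    rw [hsplit, setIntegral_union (Set.Ioc_disjoint_Ioc_of_le le_rfl) measurableSet_Ioc hint1 hint2]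
    have h2 : ∫ u in Set.Ioc s t, K (s, u) = 0 := by
      rw [setIntegral_congr_fun measurableSet_Ioc (g := fun _ => (0:ℝ))
        (fun u hu => by
          simp only [hKdef, Set.indicator_apply, Set.mem_setOf_eq]
          rw [if_neg (by simpa using not_le.mpr hu.1)]), integral_zero]
    have h1 : ∫ u in Set.Ioc (0:ℝ) s, K (s, u) = ∫ u in Set.Ioc (0:ℝ) s, f (s - u) * g u := by
      refine setIntegral_congr_fun measurableSet_Ioc (fun u hu => ?_)
      simp only [hKdef, Set.indicator_apply, Set.mem_setOf_eq]
      rw [if_pos hu.2, hf1def, hg1def,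
        Set.indicator_of_mem (by constructor <;> [linarith [hu.2]; linarith [hu.1, hs.2]]),
        Set.indicator_of_mem (Set.mem_Ioc.mpr ⟨hu.1, hu.2.trans hs.2⟩)]
    rw [h1, h2, add_zero]
  -- RHS identification
  have hRHS : (∫ u in Set.Ioc (0:ℝ) t, ∫ s in Set.Ioc (0:ℝ) t, K (s, u))
      = ∫ u in Set.Ioc (0:ℝ) t, g u * ∫ v in (0:ℝ)..(t - u), f v := by
    refine setIntegral_congr_fun measurableSet_Ioc (fun u hu => ?_)
    have hne : ∀ᵐ s : ℝ, s ≠ u := by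
      rw [ae_iff]
      simp
    have hae : (fun s => K (s, u))
        =ᵐ[volume.restrict (Set.Ioc (0:ℝ) t)]
        (Set.Ioc u t).indicator (fun s => f (s - u) * g u) := by
      filter_upwards [ae_restrict_of_ae hne, ae_restrict_mem measurableSet_Ioc] with s hsu hs
      rcases lt_or_lt_iff_ne.mpr hsu with h | h
      · -- s < u
        simp only [hKdef, Set.indicator_apply, Set.mem_setOf_eq, Set.mem_Ioc]
        rw [if_neg (not_le.mpr h), if_neg (by push_neg; intro hc; exact absurd hc (not_lt.mpr h.le))]
      · -- u < s
        simp only [hKdef, Set.indicator_apply, Set.mem_setOf_eq, Set.mem_Ioc]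
        rw [if_pos h.le, if_pos ⟨h, hs.2⟩, hf1def, hg1def,
          Set.indicator_of_mem (by constructor <;> [linarith [h]; linarith [hu.1, hs.2]]),
          Set.indicator_of_mem hu]
    rw [integral_congr_ae hae, setIntegral_indicator measurableSet_Ioc,
      Set.Ioc_inter_Ioc, max_eq_right hu.1.le, min_self,
      ← intervalIntegral.integral_of_le hu.2]
    rw [intervalIntegral.integral_mul_const, intervalIntegral.integral_comp_sub_right f u,
      sub_self, mul_comm]
  rw [hLHS, swap, hRHS]

lemma growth_bound (f : ℝ → ℝ) (hf : LocallyIntegrableOn f (Set.Ici 0)) (L : ℝ)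
    (hL : Tendsto (fun t => (1/t) * ∫ s in (0:ℝ)..t, f s) atTop (𝓝 L)) :
    ∃ C : ℝ, 0 ≤ C ∧ ∀ τ ≥ (0:ℝ), |∫ v in (0:ℝ)..τ, f v| ≤ C * (1 + τ) := by
  have h1 : ∀ᶠ τ in atTop, |((1/τ) * ∫ s in (0:ℝ)..τ, f s) - L| < 1 := by
    have := Metric.tendsto_nhds.mp hL 1 one_pos
    simpa [Real.dist_eq] using this
  obtain ⟨T0, hT0⟩ := eventually_atTop.mp h1
  set T : ℝ := max T0 1 with hTdef
  have hT1 : (1:ℝ) ≤ T := le_max_right _ _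
  have hT0' : (0:ℝ) ≤ T := le_trans zero_le_one hT1
  have hItg : IntegrableOn f (Set.Icc 0 T) :=
    hf.integrableOn_compact_subset Set.Icc_subset_Ici_self isCompact_Icc
  have hItgI : IntervalIntegrable (fun v => |f v|) volume 0 T := by
    rw [intervalIntegrable_iff_integrableOn_Ioc_of_le hT0']
    exact (hItg.mono_set Set.Ioc_subset_Icc_self).norm
  set M : ℝ := ∫ v in (0:ℝ)..T, |f v| with hMdef
  have hM : 0 ≤ M :=
    intervalIntegral.integral_nonneg hT0' (fun x _ => abs_nonneg _)
  refine ⟨M + (|L| + 1), by positivity, fun τ hτ => ?_⟩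
  rcases le_total τ T with hcase | hcase
  · -- small τ
    have habs : |∫ v in (0:ℝ)..τ, f v| ≤ ∫ v in (0:ℝ)..τ, |f v| :=
      intervalIntegral.abs_integral_le_integral_abs hτ
    have hmono : (∫ v in (0:ℝ)..τ, |f v|) ≤ M :=
      intervalIntegral.integral_mono_interval le_rfl hτ hcase
        (Filter.Eventually.of_forall (fun x => abs_nonneg _)) hItgI
    nlinarith [abs_nonneg L]
  · -- large τ
    have hτ1 : (1:ℝ) ≤ τ := hT1.trans hcase
    have hτpos : (0:ℝ) < τ := lt_of_lt_of_le one_pos hτ1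
    have h := hT0 τ (le_trans (le_max_left _ _) hcase)
    have hab : |(1/τ) * ∫ s in (0:ℝ)..τ, f s| ≤ |L| + 1 := by
      have := abs_sub_abs_le_abs_sub ((1/τ) * ∫ s in (0:ℝ)..τ, f s) L
      linarith
    have heq : |∫ v in (0:ℝ)..τ, f v| = τ * |(1/τ) * ∫ s in (0:ℝ)..τ, f s| := by
      rw [abs_mul, abs_of_pos (by positivity : (0:ℝ) < 1/τ)]
      field_simp
    rw [heq]
    nlinarith [abs_nonneg L]

/-- If `f` has Cesàro limit `L` and `g ∈ L¹([0,∞))`, then the convolution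
`(f ∗ g)(t) = ∫₀ᵗ f(t-s) g(s) ds` has Cesàro limit `L·∫₀^∞ g`. -/
theorem stmt8 (g : ℝ → ℝ) (hg : IntegrableOn g (Set.Ici 0))
    (f : ℝ → ℝ) (hf : LocallyIntegrableOn f (Set.Ici 0)) (L : ℝ)
    (hL : Tendsto (fun t => (1/t) * ∫ s in (0:ℝ)..t, f s) atTop (𝓝 L)) :
    Tendsto (fun t => (1/t) * ∫ s in (0:ℝ)..t, ∫ u in (0:ℝ)..s, f (s - u) * g u)
      atTop (𝓝 (L * ∫ s in Set.Ici (0:ℝ), g s)) := by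
  set F : ℝ → ℝ := fun τ => ∫ v in (0:ℝ)..τ, f v with hFdef
  obtain ⟨C, hC, hCb⟩ := growth_bound f hf L hL
  set φ : ℝ → ℝ → ℝ :=
    fun t => (Set.Ioc (0:ℝ) t).indicator (fun u => (1/t) * (g u * F (t - u))) with hφdef
  have hIocIci : ∀ t : ℝ, Set.Ioc (0:ℝ) t ⊆ Set.Ici 0 := fun t u hu => hu.1.le
  -- eventual equality with the integral of φ
  have hev : ∀ᶠ t in atTop,
      (1/t) * ∫ s in (0:ℝ)..t, ∫ u in (0:ℝ)..s, f (s - u) * g u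
        = ∫ u in Set.Ici (0:ℝ), φ t u := by
    filter_upwards [eventually_gt_atTop (0:ℝ)] with t ht
    rw [key_fubini g hg f hf ht, hφdef]
    rw [setIntegral_indicator measurableSet_Ioc,
      Set.inter_eq_self_of_subset_right (hIocIci t), ← integral_const_mul]
  -- measurability
  have hmeas : ∀ᶠ t in atTop, AEStronglyMeasurable (φ t) (volume.restrict (Set.Ici 0)) := by
    filter_upwards [eventually_ge_atTop (0:ℝ)] with t ht
    rw [hφdef, aestronglyMeasurable_indicator_iff measurableSet_Ioc]
    have hres : (volume.restrict (Set.Ici (0:ℝ))).restrict (Set.Ioc 0 t)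
        = volume.restrict (Set.Ioc 0 t) := by
      rw [Measure.restrict_restrict measurableSet_Ioc,
        Set.inter_eq_self_of_subset_left (hIocIci t)]
    rw [hres]
    have hgm : AEStronglyMeasurable g (volume.restrict (Set.Ioc 0 t)) :=
      hg.aestronglyMeasurable.mono_measure (Measure.restrict_mono (hIocIci t) le_rfl)
    have hFc : ContinuousOn (fun u => F (t - u)) (Set.Icc 0 t) := by
      have h1 : ContinuousOn (fun x => ∫ v in Set.Ioc (0:ℝ) x, f v) (Set.Icc 0 t) :=
        intervalIntegral.continuousOn_primitive
          (hf.integrableOn_compact_subset Set.Icc_subset_Ici_self isCompact_Icc)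
      have h2 : ContinuousOn F (Set.Icc 0 t) := by
        refine h1.congr (fun x hx => ?_)
        rw [hFdef]
        exact intervalIntegral.integral_of_le hx.1
      exact h2.comp (continuous_const.sub continuous_id).continuousOn
        (fun u hu => ⟨by simp only [Set.mem_Icc] at hu ⊢; linarith [hu.2],
          by simp only [Set.mem_Icc] at hu ⊢; linarith [hu.1]⟩)
    have hFm : AEStronglyMeasurable (fun u => F (t - u)) (volume.restrict (Set.Ioc 0 t)) :=
      (hFc.aestronglyMeasurable measurableSet_Icc).mono_measure
        (Measure.restrict_mono Set.Ioc_subset_Icc_self le_rfl)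
    exact (hgm.mul hFm).const_mul (1/t)
  -- bound
  have hbound_int : Integrable (fun u => (2*C) * |g u|) (volume.restrict (Set.Ici 0)) := by
    have := (hg.norm.const_mul (2*C))
    simpa [Real.norm_eq_abs] using this
  have h_bound : ∀ᶠ t in atTop, ∀ᵐ u ∂(volume.restrict (Set.Ici 0)),
      ‖φ t u‖ ≤ (2*C) * |g u| := by
    filter_upwards [eventually_ge_atTop (1:ℝ)] with t ht
    refine Filter.Eventually.of_forall (fun u => ?_)
    by_cases hu : u ∈ Set.Ioc (0:ℝ) t
    · simp only [hφdef]
      rw [Set.indicator_of_mem hu]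
      have htpos : (0:ℝ) < t := lt_of_lt_of_le one_pos ht
      have h1 : |F (t - u)| ≤ C * (1 + (t - u)) := hCb _ (sub_nonneg.mpr hu.2)
      have key : |F (t - u)| ≤ 2 * C * t := by nlinarith [hu.1]
      rw [Real.norm_eq_abs, abs_mul, abs_mul, abs_of_pos (show (0:ℝ) < 1/t by positivity)]
      have hgu := abs_nonneg (g u)
      calc (1/t) * (|g u| * |F (t - u)|) ≤ (1/t) * (|g u| * (2 * C * t)) := by
            gcongr
          _ = 2 * C * |g u| := by field_simp
    · simp only [hφdef]
      rw [Set.indicator_of_notMem hu]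
      simp only [norm_zero]
      positivity
  -- pointwise limit
  have h_lim : ∀ᵐ u ∂(volume.restrict (Set.Ici 0)),
      Tendsto (fun t => φ t u) atTop (𝓝 (g u * L)) := by
    have hne : ∀ᵐ u : ℝ ∂(volume.restrict (Set.Ici 0)), u ≠ 0 :=
      ae_restrict_of_ae (by rw [ae_iff]; simp)
    filter_upwards [ae_restrict_mem measurableSet_Ici, hne] with u hu hu0
    have hupos : 0 < u := lt_of_le_of_ne hu (Ne.symm hu0)
    have hinv : Tendsto (fun t : ℝ => 1/t) atTop (𝓝 0) := by
      simpa [one_div] using (tendsto_inv_atTop_zero (𝕜 := ℝ))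
    have hsub : Tendsto (fun t : ℝ => t - u) atTop atTop := by
      simpa [sub_eq_add_neg] using tendsto_atTop_add_const_right atTop (-u) tendsto_id
    have hc1 : Tendsto (fun t : ℝ => 1/(t - u) * F (t - u)) atTop (𝓝 L) := hL.comp hsub
    have hc2 : Tendsto (fun t : ℝ => (t - u) * (1/t)) atTop (𝓝 1) := by
      have heq : ∀ᶠ t : ℝ in atTop, 1 - u * (1/t) = (t - u) * (1/t) := by
        filter_upwards [eventually_gt_atTop (0:ℝ)] with t htpos
        field_simp
      refine Tendsto.congr' heq ?_
      have := tendsto_const_nhds (x := (1:ℝ)) (f := atTop).sub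
        ((tendsto_const_nhds (x := u) (f := atTop)).mul hinv)
      simpa using this
    have hev2 : ∀ᶠ t in atTop,
        g u * ((1/(t - u) * F (t - u)) * ((t - u) * (1/t))) = φ t u := by
      filter_upwards [eventually_ge_atTop (u + 1)] with t htu
      have h2 : t - u ≠ 0 := by intro hc; nlinarith
      have h3 : t ≠ 0 := by intro hc; nlinarith
      simp only [hφdef]
      rw [Set.indicator_of_mem (Set.mem_Ioc.mpr ⟨hupos, by linarith⟩)]
      field_simp
    refine Tendsto.congr' hev2 ?_
    have := (tendsto_const_nhds (x := g u) (f := atTop)).mul (hc1.mul hc2)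
    simpa using this
  have hDCT := tendsto_integral_filter_of_dominated_convergence
    (μ := volume.restrict (Set.Ici 0)) (F := φ) (f := fun u => g u * L)
    (fun u => (2*C) * |g u|) hmeas h_bound hbound_int h_lim
  have hval : (∫ u in Set.Ici (0:ℝ), g u * L) = L * ∫ s in Set.Ici (0:ℝ), g s := by
    rw [integral_mul_const, mul_comm]
  rw [hval] at hDCT
  exact Tendsto.congr' (by filter_upwards [hev] with t h using h.symm) hDCT
end

section
/- Let f : [0,∞) → ℝ be locally integrable with Cesàro limit L ∈ ℝ, i.e. (1/t)∫₀ᵗ f(s) ds → L as t → ∞. Then for every θ ∈ (0,1], the function t ↦ ∫_t^{t+θ} f(s) ds has Cesàro limit L·θ, i.e. (1/t)∫₀ᵗ ∫ₛ^{s+θ} f(u) du ds → L·θ as t → ∞. -/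
open MeasureTheory Filter Set
open scoped Topology

/-- If `f` has Cesàro limit `L`, then for every `θ ∈ (0,1]` the function
`t ↦ ∫_t^{t+θ} f` has Cesàro limit `L·θ`. -/
theorem stmt9 (f : ℝ → ℝ) (hf : LocallyIntegrableOn f (Set.Ici 0)) (L : ℝ)
    (hL : Tendsto (fun t => (1/t) * ∫ s in (0:ℝ)..t, f s) atTop (𝓝 L)) :
    ∀ θ ∈ Set.Ioc (0:ℝ) 1,
      Tendsto (fun t => (1/t) * ∫ s in (0:ℝ)..t, ∫ u in s..(s+θ), f u)
        atTop (𝓝 (L * θ)) := by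
  rintro θ ⟨hθ0, hθ1⟩
  set F : ℝ → ℝ := fun t => ∫ s in (0:ℝ)..t, f s with hFdef
  -- integrability of f on compacts of [0,∞)
  have hInt : ∀ b : ℝ, IntegrableOn f (Icc 0 b) :=
    fun b => hf.integrableOn_compact_subset Icc_subset_Ici_self isCompact_Icc
  have hfI : ∀ x : ℝ, 0 ≤ x → IntervalIntegrable f volume 0 x := by
    intro x hx
    have : IntegrableOn f (uIcc 0 x) := by rw [uIcc_of_le hx]; exact hInt x
    exact this.intervalIntegrable
  -- continuity of the primitive F on [0,b]
  have hFc : ∀ b : ℝ, 0 ≤ b → ContinuousOn F (Icc 0 b) := by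
    intro b hb
    have := intervalIntegral.continuousOn_primitive_interval
      (a := 0) (b := b) (μ := volume) (f := f) (by rw [uIcc_of_le hb]; exact hInt b)
    rwa [uIcc_of_le hb] at this
  have hFI : ∀ a b : ℝ, 0 ≤ a → a ≤ b → IntervalIntegrable F volume a b := by
    intro a b ha hab
    apply ContinuousOn.intervalIntegrable
    rw [uIcc_of_le hab]
    exact (hFc b (ha.trans hab)).mono (Icc_subset_Icc_left ha)
  set C : ℝ := ∫ s in (0:ℝ)..θ, F s with hCdef
  -- key identity for t ≥ 1
  have key : ∀ t : ℝ, 1 ≤ t →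
      (∫ s in (0:ℝ)..t, ∫ u in s..(s+θ), f u)
        = (∫ s in t..(t+θ), F s) - C := by
    intro t ht
    have ht0 : (0:ℝ) ≤ t := le_trans zero_le_one ht
    have hθt : θ ≤ t := le_trans hθ1 ht
    have h1 : EqOn (fun s => ∫ u in s..(s+θ), f u)
        (fun s => F (s+θ) - F s) (uIcc 0 t) := by
      intro s hs
      rw [uIcc_of_le ht0] at hs
      have hs0 : 0 ≤ s := hs.1
      exact (intervalIntegral.integral_interval_sub_left
        (hfI (s+θ) (by linarith)) (hfI s hs0)).symm
    rw [intervalIntegral.integral_congr h1]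
    have hc1 : ContinuousOn (fun s => F (s+θ)) (Icc 0 t) := by
      apply (hFc (t+θ) (by linarith)).comp
        ((continuous_add_right θ).continuousOn)
      intro s hs
      simp only [mem_Icc]
      exact ⟨by linarith [hs.1], by linarith [hs.2]⟩
    have hI1 : IntervalIntegrable (fun s => F (s+θ)) volume 0 t := by
      apply ContinuousOn.intervalIntegrable
      rwa [uIcc_of_le ht0]
    have hI2 : IntervalIntegrable F volume 0 t := hFI 0 t le_rfl ht0
    rw [intervalIntegral.integral_sub hI1 hI2]
    have h2 : (∫ s in (0:ℝ)..t, F (s+θ)) = ∫ s in θ..(t+θ), F s := by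
      rw [intervalIntegral.integral_comp_add_right F θ, zero_add]
    have A : (∫ s in θ..t, F s) + (∫ s in t..(t+θ), F s) = ∫ s in θ..(t+θ), F s :=
      intervalIntegral.integral_add_adjacent_intervals (hFI θ t hθ0.le hθt)
        (hFI t (t+θ) ht0 (by linarith))
    have B : C + (∫ s in θ..t, F s) = ∫ s in (0:ℝ)..t, F s :=
      intervalIntegral.integral_add_adjacent_intervals (hFI 0 θ le_rfl hθ0.le)
        (hFI θ t hθ0.le hθt)
    rw [h2]
    linarith
  -- split the t..(t+θ) integral
  have hsplit : ∀ t : ℝ, 1 ≤ t →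
      (1/t) * ((∫ s in t..(t+θ), F s) - C)
        = (1/t) * (∫ s in t..(t+θ), (F s - L*s))
          + (L*θ + (L*(θ^2/2) - C) * (1/t)) := by
    intro t ht
    have ht0 : (0:ℝ) < t := lt_of_lt_of_le zero_lt_one ht
    have hI2 : IntervalIntegrable (fun s => L*s) volume t (t+θ) :=
      (continuous_const.mul continuous_id).intervalIntegrable _ _
    have hI1 : IntervalIntegrable F volume t (t+θ) := hFI t (t+θ) ht0.le (by linarith)
    have hsub : (∫ s in t..(t+θ), (F s - L*s))
        = (∫ s in t..(t+θ), F s) - ∫ s in t..(t+θ), L*s :=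
      intervalIntegral.integral_sub hI1 hI2
    have hid : (∫ s in t..(t+θ), L*s) = L * (((t+θ)^2 - t^2)/2) := by
      rw [intervalIntegral.integral_const_mul, integral_id]
    rw [hsub, hid]
    field_simp
    ring
  -- the oscillation term tends to zero
  have hg1 : Tendsto (fun t => (1/t) * (∫ s in t..(t+θ), (F s - L*s)))
      atTop (𝓝 0) := by
    rw [Metric.tendsto_atTop]
    intro ε hε
    obtain ⟨T, hT⟩ := Metric.tendsto_atTop.1 hL (ε/4) (by positivity)
    refine ⟨max T 1, fun t ht => ?_⟩
    have h1t : 1 ≤ t := le_trans (le_max_right T 1) ht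
    have ht0 : (0:ℝ) < t := lt_of_lt_of_le zero_lt_one h1t
    have hbound : ∀ s ∈ Set.uIoc t (t+θ), ‖F s - L*s‖ ≤ t * ε / 2 := by
      intro s hs
      rw [uIoc_of_le (by linarith : t ≤ t+θ)] at hs
      have hs1 : t < s := hs.1
      have hs2 : s ≤ t + θ := hs.2
      have hsT : T ≤ s := le_trans (le_trans (le_max_left T 1) ht) hs1.le
      have hs0 : (0:ℝ) < s := lt_trans ht0 hs1
      have := hT s hsT
      rw [Real.dist_eq] at this
      have heq : F s - L*s = s * ((1/s) * F s - L) := by field_simp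
      rw [Real.norm_eq_abs, heq, abs_mul, abs_of_pos hs0]
      calc s * |(1/s) * F s - L| ≤ s * (ε/4) := by
            apply mul_le_mul_of_nonneg_left this.le hs0.le
        _ ≤ (2*t) * (ε/4) := by
            apply mul_le_mul_of_nonneg_right _ (by positivity)
            linarith
        _ = t * ε / 2 := by ring
    have hnorm : ‖∫ s in t..(t+θ), (F s - L*s)‖ ≤ (t * ε / 2) * |(t+θ) - t| :=
      intervalIntegral.norm_integral_le_of_norm_le_const hbound
    rw [Real.dist_eq, sub_zero, abs_mul, abs_of_pos (by positivity : (0:ℝ) < 1/t)]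
    have habs : |(t+θ) - t| = θ := by
      rw [add_sub_cancel_left, abs_of_pos hθ0]
    rw [habs] at hnorm
    calc (1/t) * |∫ s in t..(t+θ), (F s - L*s)|
        ≤ (1/t) * ((t * ε / 2) * θ) := by
          apply mul_le_mul_of_nonneg_left _ (by positivity)
          rwa [Real.norm_eq_abs] at hnorm
      _ ≤ (1/t) * (t * ε / 2) := by
          apply mul_le_mul_of_nonneg_left _ (by positivity)
          nlinarith [mul_nonneg (mul_nonneg ht0.le hε.le) (sub_nonneg.2 hθ1)]
      _ = ε/2 := by field_simp
      _ < ε := by linarith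
  -- the explicit term tends to L*θ
  have hg2 : Tendsto (fun t : ℝ => L*θ + (L*(θ^2/2) - C) * (1/t)) atTop (𝓝 (L*θ)) := by
    have h0 : Tendsto (fun t : ℝ => 1/t) atTop (𝓝 0) := by
      simpa only [one_div] using tendsto_inv_atTop_zero
    have h1 : Tendsto (fun t : ℝ => (L*(θ^2/2) - C) * (1/t)) atTop
        (𝓝 ((L*(θ^2/2) - C) * 0)) := tendsto_const_nhds.mul h0
    have h2 : Tendsto (fun _ : ℝ => L*θ) atTop (𝓝 (L*θ)) := tendsto_const_nhds
    simpa using h2.add h1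
  have hmain : Tendsto (fun t => (1/t) * (∫ s in t..(t+θ), (F s - L*s))
      + (L*θ + (L*(θ^2/2) - C) * (1/t))) atTop (𝓝 (L*θ)) := by
    simpa using hg1.add hg2
  apply hmain.congr'
  filter_upwards [eventually_ge_atTop (1:ℝ)] with t ht
  rw [key t ht, hsplit t ht]
end

section
/- Let ν be a finite signed Borel measure on [0,∞) whose differential resolvent r is integrable on [0,∞), let f : [0,∞) → ℝ be locally integrable, let ξ ∈ ℝ, and let x be the solution of the perturbed Volterra equation x'(t) = ∫_{[0,t]} x(t−s) ν(ds) + f(t), x(0) = ξ. If x has a Cesàro limit, i.e. (1/t)∫₀ᵗ x(s) ds → M ∈ ℝ as t → ∞, then for every θ ∈ (0,1], (1/t)∫₀ᵗ ∫ₛ^{s+θ} f(u) du ds → L·θ as t → ∞, where L = −M·ν([0,∞)). -/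
open MeasureTheory Filter Set
open scoped Topology

-- a linear bound on a continuous function whose Cesàro-type ratio converges
lemma aux_linear_bound {X : ℝ → ℝ} (hX : Continuous X) {M : ℝ}
    (h : Tendsto (fun t => (1/t) * X t) atTop (𝓝 M)) :
    ∃ D > 0, ∀ τ ≥ (0:ℝ), |X τ| ≤ D * (1 + τ) := by
  obtain ⟨T, hT⟩ := (Metric.tendsto_atTop.1 h) 1 one_pos
  obtain ⟨K, hK⟩ := (isCompact_Icc : IsCompact (Icc (0:ℝ) (max T 1))).exists_bound_of_continuousOn
    hX.continuousOn
  refine ⟨|K| + |M| + 2, by positivity, fun τ hτ => ?_⟩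
  rcases le_or_gt τ (max T 1) with hc | hc
  · have := hK τ ⟨hτ, hc⟩
    have h1 : |X τ| ≤ |K| := le_trans this (le_abs_self K)
    nlinarith [abs_nonneg M, abs_nonneg K]
  · have hτT : τ ≥ T := le_of_lt (lt_of_le_of_lt (le_max_left T 1) hc)
    have hτ1 : (1:ℝ) ≤ τ := le_of_lt (lt_of_le_of_lt (le_max_right T 1) hc)
    have hτ0 : τ ≠ 0 := by linarith
    have hd := hT τ hτT
    rw [Real.dist_eq] at hd
    have h2 : |(1/τ) * X τ| ≤ |M| + 1 := by
      have := abs_sub_abs_le_abs_sub ((1/τ) * X τ) M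
      linarith
    have h3 : |X τ| = τ * |(1/τ) * X τ| := by
      rw [abs_mul, abs_of_pos (by positivity : (0:ℝ) < 1/τ)]
      field_simp
    rw [h3]
    have h4 : τ * |(1/τ) * X τ| ≤ τ * (|M| + 1) := by
      apply mul_le_mul_of_nonneg_left h2 (by linarith)
    nlinarith [abs_nonneg K, abs_nonneg M]

-- average of a window of Q when Q(u)/u → c
lemma aux_cesaro_window {Q : ℝ → ℝ} (hQ : Continuous Q) {c θ : ℝ} (hθ : 0 < θ)
    (h : Tendsto (fun u => (1/u) * Q u) atTop (𝓝 c)) :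
    Tendsto (fun t => (1/t) * ∫ u in t..(t+θ), Q u) atTop (𝓝 (c * θ)) := by
  have key : Tendsto (fun t => (1/t) * ∫ u in t..(t+θ), (Q u - c * u)) atTop (𝓝 0) := by
    rw [Metric.tendsto_atTop]
    intro ε hε
    set δ : ℝ := ε / ((1+θ)*θ + 1) with hδdef
    have hδ : 0 < δ := by positivity
    obtain ⟨N, hN⟩ := (Metric.tendsto_atTop.1 h) δ hδ
    refine ⟨max N 1, fun t ht => ?_⟩
    have htN : t ≥ N := le_trans (le_max_left N 1) ht
    have ht1 : (1:ℝ) ≤ t := le_trans (le_max_right N 1) ht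
    have ht0 : (0:ℝ) < t := by linarith
    rw [Real.dist_eq, sub_zero]
    have hbound : ∀ u ∈ Set.uIoc t (t+θ), ‖Q u - c * u‖ ≤ (t+θ) * δ := by
      intro u hu
      rw [Set.mem_uIoc] at hu
      have hu' : t < u ∧ u ≤ t + θ := by
        rcases hu with h1 | h1
        · exact ⟨h1.1, h1.2⟩
        · exfalso; linarith [h1.1, h1.2]
      have hu0 : (0:ℝ) < u := by linarith
      have hud := hN u (by linarith)
      rw [Real.dist_eq] at hud
      have heq : Q u - c * u = u * ((1/u) * Q u - c) := by field_simp
      rw [Real.norm_eq_abs, heq, abs_mul, abs_of_pos hu0]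
      have : |(1/u) * Q u - c| ≤ δ := le_of_lt hud
      calc u * |(1/u) * Q u - c| ≤ u * δ := mul_le_mul_of_nonneg_left this (le_of_lt hu0)
        _ ≤ (t+θ) * δ := mul_le_mul_of_nonneg_right hu'.2 (le_of_lt hδ)
    have hI := intervalIntegral.norm_integral_le_of_norm_le_const hbound
    have habs : |t + θ - t| = θ := by rw [add_sub_cancel_left, abs_of_pos hθ]
    rw [habs] at hI
    have h5 : |(1/t) * ∫ u in t..(t+θ), (Q u - c * u)| ≤ (1/t) * ((t+θ) * δ * θ) := by
      rw [abs_mul, abs_of_pos (by positivity : (0:ℝ) < 1/t)]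
      exact mul_le_mul_of_nonneg_left (by simpa [Real.norm_eq_abs] using hI) (by positivity)
    have h6 : (1/t) * ((t+θ) * δ * θ) ≤ (1+θ) * δ * θ := by
      have htt : t + θ ≤ (1+θ) * t := by nlinarith
      have hmm := mul_le_mul_of_nonneg_right htt (mul_nonneg hδ.le hθ.le)
      rw [div_mul_eq_mul_div, one_mul, div_le_iff₀ ht0]
      nlinarith
    have h7 : (1+θ) * δ * θ < ε := by
      rw [hδdef]
      have hpos : (0:ℝ) < (1+θ)*θ + 1 := by positivity
      rw [show (1+θ) * (ε/((1+θ)*θ+1)) * θ = ε * ((1+θ)*θ) / ((1+θ)*θ+1) by ring,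
        div_lt_iff₀ hpos]
      nlinarith
    linarith
  have h2 : Tendsto (fun t : ℝ => c * θ + (c * θ^2/2) * (1/t)) atTop (𝓝 (c * θ)) := by
    have : Tendsto (fun t : ℝ => (1:ℝ)/t) atTop (𝓝 0) := by
      simpa [one_div] using (tendsto_inv_atTop_zero (𝕜 := ℝ))
    simpa using tendsto_const_nhds.add (this.const_mul (c * θ^2/2))
  have hsum := key.add h2
  rw [zero_add] at hsum
  apply hsum.congr'
  filter_upwards [eventually_ge_atTop (1:ℝ)] with t ht1
  have ht0 : t ≠ 0 := by linarith
  have hi1 : IntervalIntegrable Q volume t (t+θ) := hQ.intervalIntegrable _ _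
  have hi2 : IntervalIntegrable (fun u => c * u) volume t (t+θ) :=
    (continuous_const.mul continuous_id).intervalIntegrable _ _
  have hsub : (∫ u in t..(t+θ), (Q u - c * u)) = (∫ u in t..(t+θ), Q u) - ∫ u in t..(t+θ), c * u :=
    intervalIntegral.integral_sub hi1 hi2
  have hid : (∫ u in t..(t+θ), c * u) = c * (((t+θ)^2 - t^2)/2) := by
    rw [intervalIntegral.integral_const_mul, integral_id]
  rw [hsub, hid]
  field_simp
  ring

lemma aux_window_avg {X : ℝ → ℝ} (θ : ℝ) {M : ℝ}
    (h : Tendsto (fun t => (1/t) * X t) atTop (𝓝 M)) :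
    Tendsto (fun t => (1/t) * (X (t+θ) - X t)) atTop (𝓝 0) := by
  have h2 : Tendsto (fun t => (1/(t+θ)) * X (t+θ)) atTop (𝓝 M) :=
    h.comp (tendsto_atTop_add_const_right atTop θ tendsto_id)
  have hc : Tendsto (fun t : ℝ => (1 + θ * (1/t))) atTop (𝓝 1) := by
    have : Tendsto (fun t : ℝ => (1:ℝ)/t) atTop (𝓝 0) := by
      simpa [one_div] using (tendsto_inv_atTop_zero (𝕜 := ℝ))
    simpa using tendsto_const_nhds.add (this.const_mul θ)
  have h1 : Tendsto (fun t => (1/t) * X (t+θ)) atTop (𝓝 M) := by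
    have hm := hc.mul h2
    rw [one_mul] at hm
    apply hm.congr'
    filter_upwards [eventually_ge_atTop (max 1 (|θ| + 1))] with t ht
    have ht1 : (1:ℝ) ≤ t := le_trans (le_max_left _ _) ht
    have ht2 : |θ| + 1 ≤ t := le_trans (le_max_right _ _) ht
    have ht0 : t ≠ 0 := by linarith
    have htθ : t + θ ≠ 0 := by
      have := neg_abs_le θ
      have : -θ ≤ |θ| := neg_le_abs θ
      nlinarith [abs_nonneg θ]
    field_simp
  have := h1.sub h
  rw [sub_self] at this
  apply this.congr
  intro t
  ring

lemma aux_cesaro_conv (μ : Measure ℝ) [IsFiniteMeasure μ] (hμ0 : μ (Iio 0) = 0)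
    {x : ℝ → ℝ} (hx : Continuous x) {M : ℝ}
    (hM : Tendsto (fun t => (1/t) * ∫ s in (0:ℝ)..t, x s) atTop (𝓝 M)) :
    Tendsto (fun t => (1/t) * ∫ s in (0:ℝ)..t,
        ∫ v, (Icc 0 s).indicator (fun v => x (s - v)) v ∂μ)
      atTop (𝓝 (M * (μ univ).toReal)) := by
  set X : ℝ → ℝ := fun τ => ∫ s in (0:ℝ)..τ, x s with hXdef
  have hXc : Continuous X :=
    intervalIntegral.continuous_primitive (fun a b => hx.intervalIntegrable a b) 0
  obtain ⟨D, hD, hDb⟩ := aux_linear_bound hXc hM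
  -- the kernel
  set S : Set (ℝ × ℝ) := {q : ℝ × ℝ | q.2 ∈ Icc 0 q.1} with hSdef
  have hSm : MeasurableSet S := by
    have : IsClosed S := by
      have : S = {q : ℝ × ℝ | 0 ≤ q.2} ∩ {q : ℝ × ℝ | q.2 ≤ q.1} := by
        ext q; simp [hSdef, Set.mem_Icc, Set.mem_setOf_eq]
      rw [this]
      exact (isClosed_le continuous_const continuous_snd).inter
        (isClosed_le continuous_snd continuous_fst)
    exact this.measurableSet
  set k : ℝ × ℝ → ℝ := S.indicator (fun q => x (q.1 - q.2)) with hkdef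
  have hkm : StronglyMeasurable k :=
    ((hx.comp (continuous_fst.sub continuous_snd)).stronglyMeasurable).indicator hSm
  have hk_eq : ∀ s v : ℝ, (Icc 0 s).indicator (fun v => x (s - v)) v = k (s, v) := by
    intro s v
    rw [hkdef, Set.indicator_apply, Set.indicator_apply]
    simp only [hSdef, Set.mem_setOf_eq]
  -- the inner integral in v
  have hφm : ∀ t : ℝ, StronglyMeasurable (fun v => ∫ s in Ioc (0:ℝ) t, k (s, v)) := by
    intro t
    exact hkm.integral_prod_left'
  -- swap step
  have hswap : ∀ t : ℝ, 0 ≤ t →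
      (∫ s in (0:ℝ)..t, ∫ v, k (s, v) ∂μ) = ∫ v, (∫ s in Ioc (0:ℝ) t, k (s, v)) ∂μ := by
    intro t ht
    rw [intervalIntegral.integral_of_le ht]
    have hprodfin : IsFiniteMeasure ((volume.restrict (Ioc (0:ℝ) t)).prod μ) := by
      infer_instance
    obtain ⟨C, hC⟩ := (isCompact_Icc : IsCompact (Icc (0:ℝ) t)).exists_bound_of_continuousOn
      hx.continuousOn
    have hC0 : 0 ≤ C := le_trans (norm_nonneg _) (hC 0 ⟨le_refl 0, ht⟩)
    have hnull : ((volume.restrict (Ioc (0:ℝ) t)).prod μ) ((Ioc (0:ℝ) t)ᶜ ×ˢ univ) = 0 := by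
      rw [Measure.prod_prod, Measure.restrict_apply measurableSet_Ioc.compl,
        Set.compl_inter_self]
      simp
    have hae : ∀ᵐ p ∂((volume.restrict (Ioc (0:ℝ) t)).prod μ), ‖k p‖ ≤ C := by
      rw [ae_iff]
      apply measure_mono_null _ hnull
      intro p hp
      simp only [Set.mem_setOf_eq, not_le] at hp
      by_contra hmem
      simp only [Set.mem_prod, Set.mem_compl_iff, Set.mem_univ, and_true] at hmem
      push_neg at hmem
      have hp1 : p.1 ∈ Ioc (0:ℝ) t := hmem
      have : ‖k p‖ ≤ C := by
        rw [hkdef, Set.indicator_apply]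
        by_cases hpS : p ∈ S
        · have h1 : 0 ≤ p.2 := hpS.1
          have h2 : p.2 ≤ p.1 := hpS.2
          simp only [if_pos hpS]
          exact hC _ ⟨by linarith, by linarith [hp1.2]⟩
        · simp only [if_neg hpS, norm_zero]; exact hC0
      linarith
    have hint : Integrable (Function.uncurry fun s v => k (s, v))
        ((volume.restrict (Ioc (0:ℝ) t)).prod μ) := by
      refine (integrable_const C).mono' ?_ ?_
      · exact (hkm.comp_measurable measurable_id).aestronglyMeasurable
      · exact hae
    exact integral_integral_swap hint
  -- value of the inner integral
  have hφval : ∀ t v : ℝ, 0 ≤ t → 0 ≤ v →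
      (∫ s in Ioc (0:ℝ) t, k (s, v)) = if v ≤ t then X (t - v) else 0 := by
    intro t v ht hv
    have hk2 : ∀ s : ℝ, k (s, v) = (Ici v).indicator (fun s => x (s - v)) s := by
      intro s
      rw [hkdef, Set.indicator_apply, Set.indicator_apply]
      have : ((s, v) ∈ S) ↔ (s ∈ Ici v) := by
        simp only [hSdef, Set.mem_setOf_eq, Set.mem_Icc, Set.mem_Ici]
        constructor
        · intro h; exact h.2
        · intro h; exact ⟨hv, h⟩
      by_cases hmem : (s, v) ∈ S
      · rw [if_pos hmem, if_pos (this.1 hmem)]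
      · rw [if_neg hmem, if_neg (fun hc => hmem (this.2 hc))]
    have h1 : (∫ s in Ioc (0:ℝ) t, k (s, v)) = ∫ s in Ioc (0:ℝ) t ∩ Ici v, x (s - v) := by
      rw [show (fun s => k (s, v)) = (Ici v).indicator (fun s => x (s - v)) from funext hk2]
      exact setIntegral_indicator measurableSet_Ici
    rw [h1]
    by_cases hvt : v ≤ t
    · rw [if_pos hvt]
      have hae : (Ioc (0:ℝ) t ∩ Ici v : Set ℝ) =ᵐ[volume] (Ioc v t : Set ℝ) := by
        rw [MeasureTheory.ae_eq_set]
        constructor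
        · apply measure_mono_null (show (Ioc (0:ℝ) t ∩ Ici v) \ Ioc v t ⊆ {v} from ?_)
            Real.volume_singleton
          intro s hs
          simp only [Set.mem_diff, Set.mem_inter_iff, Set.mem_Ioc, Set.mem_Ici,
            Set.mem_singleton_iff, not_and, not_lt] at hs ⊢
          rcases hs with ⟨⟨⟨hs1, hs2⟩, hs3⟩, hs4⟩
          have := hs4
          by_contra hne
          have : v < s := lt_of_le_of_ne hs3 (Ne.symm hne)
          have := hs4 this
          linarith
        · apply measure_mono_null _ (measure_empty (μ := volume))
          intro s hs
          simp only [Set.mem_diff, Set.mem_Ioc, Set.mem_inter_iff, Set.mem_Ici] at hs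
          exact absurd ⟨⟨lt_of_le_of_lt hv hs.1.1, hs.1.2⟩, le_of_lt hs.1.1⟩ hs.2
      rw [setIntegral_congr_set hae, ← intervalIntegral.integral_of_le hvt,
        intervalIntegral.integral_comp_sub_right (fun s => x s) v]
      simp [hXdef]
    · rw [if_neg hvt]
      have : (Ioc (0:ℝ) t ∩ Ici v : Set ℝ) = ∅ := by
        ext s
        simp only [Set.mem_inter_iff, Set.mem_Ioc, Set.mem_Ici, Set.mem_empty_iff_false,
          iff_false, not_and]
        intro h1 h2
        linarith [h1.2]
      rw [this]
      simp
  -- a.e. nonnegativity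
  have haev : ∀ᵐ v ∂μ, 0 ≤ v := by
    rw [ae_iff]
    have : {v : ℝ | ¬ 0 ≤ v} = Iio 0 := by ext v; simp [not_le]
    rw [this]; exact hμ0
  -- dominated convergence
  have hDCT : Tendsto (fun t => ∫ v, (1/t) * (∫ s in Ioc (0:ℝ) t, k (s, v)) ∂μ)
      atTop (𝓝 (∫ _, M ∂μ)) := by
    apply MeasureTheory.tendsto_integral_filter_of_dominated_convergence
      (bound := fun _ => 2 * D)
    · filter_upwards with t
      exact ((hφm t).const_mul (1/t)).aestronglyMeasurable
    · filter_upwards [eventually_ge_atTop (1:ℝ)] with t ht1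
      filter_upwards [haev] with v hv
      have ht0 : (0:ℝ) < t := by linarith
      rw [hφval t v (by linarith) hv]
      by_cases hvt : v ≤ t
      · rw [if_pos hvt]
        have hb := hDb (t - v) (by linarith)
        have h1 : |X (t - v)| ≤ D * (1 + t) := by
          have : D * (1 + (t - v)) ≤ D * (1 + t) := by nlinarith
          linarith
        rw [Real.norm_eq_abs, abs_mul, abs_of_pos (by positivity : (0:ℝ) < 1/t)]
        have h2 : (1/t) * |X (t - v)| ≤ (1/t) * (D * (1 + t)) :=
          mul_le_mul_of_nonneg_left h1 (by positivity)
        have h3 : (1/t) * (D * (1 + t)) ≤ 2 * D := by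
          rw [div_mul_eq_mul_div, one_mul, div_le_iff₀ ht0]
          nlinarith
        linarith
      · rw [if_neg hvt]
        simp only [mul_zero, norm_zero]
        positivity
    · exact integrable_const _
    · filter_upwards [haev] with v hv
      have hgoal : Tendsto (fun t => (1 - v * (1/t)) * ((1/(t + -v)) * X (t + -v)))
          atTop (𝓝 M) := by
        have hc : Tendsto (fun t : ℝ => (1 - v * (1/t))) atTop (𝓝 1) := by
          have : Tendsto (fun t : ℝ => (1:ℝ)/t) atTop (𝓝 0) := by
            simpa [one_div] using (tendsto_inv_atTop_zero (𝕜 := ℝ))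
          simpa using tendsto_const_nhds.sub (this.const_mul v)
        have h2 : Tendsto (fun t => (1/(t + -v)) * X (t + -v)) atTop (𝓝 M) :=
          hM.comp (tendsto_atTop_add_const_right atTop (-v) tendsto_id)
        simpa using hc.mul h2
      apply hgoal.congr'
      filter_upwards [eventually_ge_atTop (max (v+1) 1)] with t ht
      have ht1 : v + 1 ≤ t := le_trans (le_max_left _ _) ht
      have ht2 : (1:ℝ) ≤ t := le_trans (le_max_right _ _) ht
      have ht0 : t ≠ 0 := by linarith
      have htv : t - v ≠ 0 := by intro h; rw [sub_eq_zero] at h; linarith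
      rw [hφval t v (by linarith) hv, if_pos (by linarith : v ≤ t)]
      rw [show t + -v = t - v by ring]
      field_simp
  -- put everything together
  have hfinal : (∫ _, M ∂μ) = M * (μ univ).toReal := by
    rw [MeasureTheory.integral_const, smul_eq_mul, mul_comm]
    rfl
  rw [hfinal] at hDCT
  apply hDCT.congr'
  filter_upwards [eventually_ge_atTop (0:ℝ)] with t ht
  rw [MeasureTheory.integral_const_mul, ← hswap t ht]
  congr 1

lemma aux_g_intervalIntegrable (μ : Measure ℝ) [IsFiniteMeasure μ] {x : ℝ → ℝ}
    (hx : Continuous x) (a b : ℝ) :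
    IntervalIntegrable (fun s => ∫ v, (Icc 0 s).indicator (fun v => x (s - v)) v ∂μ)
      volume a b := by
  set S : Set (ℝ × ℝ) := {q : ℝ × ℝ | q.2 ∈ Icc 0 q.1} with hSdef
  have hSm : MeasurableSet S := by
    have : IsClosed S := by
      have : S = {q : ℝ × ℝ | 0 ≤ q.2} ∩ {q : ℝ × ℝ | q.2 ≤ q.1} := by
        ext q; simp [hSdef, Set.mem_Icc, Set.mem_setOf_eq]
      rw [this]
      exact (isClosed_le continuous_const continuous_snd).inter
        (isClosed_le continuous_snd continuous_fst)
    exact this.measurableSet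
  set k : ℝ × ℝ → ℝ := S.indicator (fun q => x (q.1 - q.2)) with hkdef
  have hkm : StronglyMeasurable k :=
    ((hx.comp (continuous_fst.sub continuous_snd)).stronglyMeasurable).indicator hSm
  have hfun : (fun s => ∫ v, (Icc 0 s).indicator (fun v => x (s - v)) v ∂μ)
      = fun s => ∫ v, k (s, v) ∂μ := rfl
  rw [hfun, intervalIntegrable_iff]
  set R : ℝ := max |a| |b| with hRdef
  have hR0 : (0:ℝ) ≤ R := le_trans (abs_nonneg a) (le_max_left _ _)
  obtain ⟨C, hC⟩ := (isCompact_Icc : IsCompact (Icc (-R) R)).exists_bound_of_continuousOn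
    hx.continuousOn
  have hC0 : 0 ≤ C := le_trans (norm_nonneg _) (hC 0 ⟨by linarith, hR0⟩)
  apply Measure.integrableOn_of_bounded (M := C * (μ univ).toReal)
  · rw [Set.uIoc]
    exact (measure_Ioc_lt_top).ne
  · exact hkm.integral_prod_right'.aestronglyMeasurable
  · filter_upwards [ae_restrict_mem measurableSet_uIoc] with s hs
    apply MeasureTheory.norm_integral_le_of_norm_le_const
    apply Filter.Eventually.of_forall
    intro v
    rw [hkdef, Set.indicator_apply]
    by_cases hmem : ((s, v) : ℝ × ℝ) ∈ S
    · have h1 : 0 ≤ v := hmem.1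
      have h2 : v ≤ s := hmem.2
      rw [if_pos hmem]
      rw [Set.mem_uIoc] at hs
      have hsR : -R ≤ s ∧ s ≤ R := by
        have ha : -R ≤ a := by
          have := neg_abs_le a; have : -R ≤ -|a| := by
            simp only [neg_le_neg_iff]; exact le_max_left _ _
          linarith [neg_abs_le a]
        have hb : -R ≤ b := by
          have : -R ≤ -|b| := by
            simp only [neg_le_neg_iff]; exact le_max_right _ _
          linarith [neg_abs_le b]
        have haR : a ≤ R := le_trans (le_abs_self a) (le_max_left _ _)
        have hbR : b ≤ R := le_trans (le_abs_self b) (le_max_right _ _)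
        rcases hs with h | h
        · exact ⟨by linarith [h.1], by linarith [h.2]⟩
        · exact ⟨by linarith [h.1], by linarith [h.2]⟩
      exact hC _ ⟨by linarith [hsR.1], by linarith [hsR.2]⟩
    · rw [if_neg hmem, norm_zero]
      exact hC0


/-- Suppose the differential resolvent `r` of `ν` is integrable on `[0,∞)` and `x` solves
`x' = x ∗ ν + f`, `x(0) = ξ`. If the Cesàro mean of `x` converges to `M`, then for every
`θ ∈ (0,1]`, `(1/t)∫₀ᵗ∫_s^{s+θ} f → L·θ`, where `L = -M·ν([0,∞))`. -/
theorem stmt11 (ν : MeasureTheory.SignedMeasure ℝ)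
    (hsupp : ∀ A : Set ℝ, A ⊆ Set.Iio 0 → ν A = 0)
    (r : ℝ → ℝ) (hr_cont : ContinuousOn r (Set.Ici 0)) (hr0 : r 0 = 1)
    (hr_eq : ∀ t ≥ (0:ℝ),
      r t = 1 + ∫ s in (0:ℝ)..t, sInt ν (Set.Icc 0 s) (fun u => r (s - u)))
    (hr_int : IntegrableOn r (Set.Ici 0))
    (f : ℝ → ℝ) (hf : LocallyIntegrableOn f (Set.Ici 0))
    (ξ : ℝ) (x : ℝ → ℝ) (hx_cont : ContinuousOn x (Set.Ici 0)) (hx0 : x 0 = ξ)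
    (hx_eq : ∀ t ≥ (0:ℝ),
      x t = ξ + ∫ s in (0:ℝ)..t, (sInt ν (Set.Icc 0 s) (fun u => x (s - u)) + f s))
    (M : ℝ)
    (hM : Tendsto (fun t => (1/t) * ∫ s in (0:ℝ)..t, x s) atTop (𝓝 M)) :
    ∀ θ ∈ Set.Ioc (0:ℝ) 1,
      Tendsto (fun t => (1/t) * ∫ s in (0:ℝ)..t, ∫ u in s..(s+θ), f u)
        atTop (𝓝 ((-M * ν (Set.Ici 0)) * θ)) := by
  intro θ hθmem
  obtain ⟨hθ0, hθ1⟩ := hθmem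
  set μp := ν.toJordanDecomposition.posPart with hμpdef
  set μm := ν.toJordanDecomposition.negPart with hμmdef
  -- signed measure evaluation via Jordan decomposition
  have hνapp : ∀ A : Set ℝ, MeasurableSet A → ν A = (μp A).toReal - (μm A).toReal := by
    intro A hA
    conv_lhs => rw [← ν.toSignedMeasure_toJordanDecomposition]
    rw [MeasureTheory.JordanDecomposition.toSignedMeasure]
    simp [MeasureTheory.Measure.toSignedMeasure_apply, hA]
    rfl
  -- both Jordan parts vanish on negatives
  obtain ⟨u, hum, hu1, hu2⟩ := ν.toJordanDecomposition.mutuallySingular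
  have hμp0 : μp (Iio 0) = 0 := by
    have h1 : μp (Iio 0 ∩ u) + μp (Iio 0 \ u) = μp (Iio 0) := measure_inter_add_diff _ hum
    have h2 : μp (Iio 0 ∩ u) = 0 :=
      le_antisymm (le_trans (measure_mono inter_subset_right) hu1.le) zero_le
    have h3 : ν (Iio 0 \ u) = 0 := hsupp _ diff_subset
    have h4 : μm (Iio 0 \ u) = 0 :=
      le_antisymm (le_trans (measure_mono (fun y hy => hy.2)) hu2.le) zero_le
    rw [hνapp _ (measurableSet_Iio.diff hum), h4] at h3
    simp only [ENNReal.toReal_zero, sub_zero] at h3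
    have h5 : μp (Iio 0 \ u) = 0 := by
      rcases (ENNReal.toReal_eq_zero_iff _).1 h3 with h | h
      · exact h
      · exact absurd h (measure_ne_top _ _)
    rw [← h1, h2, h5, add_zero]
  have hμm0 : μm (Iio 0) = 0 := by
    have h1 : μm (Iio 0 ∩ u) + μm (Iio 0 \ u) = μm (Iio 0) := measure_inter_add_diff _ hum
    have h4 : μm (Iio 0 \ u) = 0 :=
      le_antisymm (le_trans (measure_mono (fun y hy => hy.2)) hu2.le) zero_le
    have h3 : ν (Iio 0 ∩ u) = 0 := hsupp _ inter_subset_left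
    have h2 : μp (Iio 0 ∩ u) = 0 :=
      le_antisymm (le_trans (measure_mono inter_subset_right) hu1.le) zero_le
    rw [hνapp _ (measurableSet_Iio.inter hum), h2] at h3
    simp only [ENNReal.toReal_zero, zero_sub, neg_eq_zero] at h3
    have h5 : μm (Iio 0 ∩ u) = 0 := by
      rcases (ENNReal.toReal_eq_zero_iff _).1 h3 with h | h
      · exact h
      · exact absurd h (measure_ne_top _ _)
    rw [← h1, h4, h5, add_zero]
  have hμpuniv : μp univ = μp (Ici 0) := by
    apply le_antisymm
    · calc μp univ = μp (Iio 0 ∪ Ici 0) := by rw [Set.Iio_union_Ici]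
        _ ≤ μp (Iio 0) + μp (Ici 0) := measure_union_le _ _
        _ = μp (Ici 0) := by rw [hμp0, zero_add]
    · exact measure_mono (subset_univ _)
  have hμmuniv : μm univ = μm (Ici 0) := by
    apply le_antisymm
    · calc μm univ = μm (Iio 0 ∪ Ici 0) := by rw [Set.Iio_union_Ici]
        _ ≤ μm (Iio 0) + μm (Ici 0) := measure_union_le _ _
        _ = μm (Ici 0) := by rw [hμm0, zero_add]
    · exact measure_mono (subset_univ _)
  have hν_Ici : ν (Ici 0) = (μp univ).toReal - (μm univ).toReal := by
    rw [hνapp _ measurableSet_Ici, hμpuniv, hμmuniv]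
  -- continuous extension of x
  set xt : ℝ → ℝ := fun v => x (max v 0) with hxtdef
  have hxtc : Continuous xt :=
    hx_cont.comp_continuous (continuous_id.max continuous_const)
      (fun v => mem_Ici.2 (le_max_right v 0))
  have hxt : ∀ v : ℝ, 0 ≤ v → xt v = x v := by
    intro v hv; rw [hxtdef]; simp [max_eq_left hv]
  have hMX : Tendsto (fun t => (1/t) * ∫ s in (0:ℝ)..t, xt s) atTop (𝓝 M) := by
    apply hM.congr'
    filter_upwards [eventually_ge_atTop (0:ℝ)] with t ht
    congr 1
    apply intervalIntegral.integral_congr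
    intro s hs
    rw [uIcc_of_le ht] at hs
    exact (hxt s hs.1).symm
  -- the convolution pieces
  set gp : ℝ → ℝ := fun s => ∫ v, (Icc 0 s).indicator (fun v => xt (s - v)) v ∂μp with hgpdef
  set gm : ℝ → ℝ := fun s => ∫ v, (Icc 0 s).indicator (fun v => xt (s - v)) v ∂μm with hgmdef
  have hgpI : ∀ a b : ℝ, IntervalIntegrable gp volume a b := fun a b =>
    aux_g_intervalIntegrable μp hxtc a b
  have hgmI : ∀ a b : ℝ, IntervalIntegrable gm volume a b := fun a b =>
    aux_g_intervalIntegrable μm hxtc a b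
  set ht : ℝ → ℝ := fun s => gp s - gm s with hhtdef
  have hhtI : ∀ a b : ℝ, IntervalIntegrable ht volume a b := fun a b =>
    (hgpI a b).sub (hgmI a b)
  have hsInt : ∀ s : ℝ, 0 ≤ s → sInt ν (Icc 0 s) (fun w => x (s - w)) = ht s := by
    intro s hs
    have hcong : ∀ (m : Measure ℝ),
        (∫ w in Icc 0 s, x (s - w) ∂m) = ∫ w in Icc 0 s, xt (s - w) ∂m := by
      intro m
      apply setIntegral_congr_fun measurableSet_Icc
      intro w hw
      exact (hxt (s - w) (by linarith [hw.2] : 0 ≤ s - w)).symm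
    simp only [sInt]
    rw [hcong μp, hcong μm, ← MeasureTheory.integral_indicator measurableSet_Icc,
      ← MeasureTheory.integral_indicator measurableSet_Icc]
  -- indicator version of f
  set ft : ℝ → ℝ := (Ici 0).indicator f with hftdef
  have hftI : ∀ a b : ℝ, IntervalIntegrable ft volume a b := by
    intro a b
    rw [intervalIntegrable_iff]
    rw [hftdef, MeasureTheory.IntegrableOn, MeasureTheory.integrable_indicator_iff
      measurableSet_Ici]
    have hcomp : IntegrableOn f (Icc 0 (max a b)) volume :=
      hf.integrableOn_compact_subset (fun y hy => hy.1) isCompact_Icc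
    have hsub : (Ici 0 ∩ Set.uIoc a b : Set ℝ) ⊆ Icc 0 (max a b) := by
      intro y hy
      rcases hy with ⟨hy1, hy2⟩
      rw [Set.mem_uIoc] at hy2
      constructor
      · exact hy1
      · rcases hy2 with h | h
        · exact le_trans h.2 (le_max_right a b)
        · exact le_trans h.2 (le_max_left a b)
    have := hcomp.mono_set hsub
    rw [MeasureTheory.IntegrableOn, Measure.restrict_restrict measurableSet_Ici]
    exact this
  have hft : ∀ v : ℝ, 0 ≤ v → ft v = f v := by
    intro v hv; rw [hftdef]; exact Set.indicator_of_mem hv f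
  -- primitives
  set F : ℝ → ℝ := fun τ => ∫ s in (0:ℝ)..τ, ft s with hFdef
  have hFc : Continuous F := intervalIntegral.continuous_primitive hftI 0
  set H : ℝ → ℝ := fun τ => ∫ s in (0:ℝ)..τ, ht s with hHdef
  have hHc : Continuous H := intervalIntegral.continuous_primitive hhtI 0
  set Xt : ℝ → ℝ := fun τ => ∫ s in (0:ℝ)..τ, xt s with hXtdef
  -- the key identity F = x - ξ - H on the nonnegative axis
  have hkey : ∀ w : ℝ, 0 ≤ w → F w = xt w - ξ - H w := by
    intro w hw
    have hx_eq' := hx_eq w hw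
    have hcong : (∫ s in (0:ℝ)..w, (sInt ν (Icc 0 s) (fun u => x (s - u)) + f s))
        = ∫ s in (0:ℝ)..w, (ht s + ft s) := by
      apply intervalIntegral.integral_congr
      intro s hs
      rw [uIcc_of_le hw] at hs
      show sInt ν (Icc 0 s) (fun u => x (s - u)) + f s = ht s + ft s
      rw [hsInt s hs.1, hft s hs.1]
    rw [hcong, intervalIntegral.integral_add (hhtI 0 w) (hftI 0 w)] at hx_eq'
    have hxw : x w = xt w := (hxt w hw).symm
    rw [hxw] at hx_eq'
    rw [hFdef, hHdef]
    simp only at hx_eq' ⊢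
    linarith [hx_eq']
  -- Cesàro limit of H
  set c : ℝ := M * ((μp univ).toReal - (μm univ).toReal) with hcdef
  have hHrat : Tendsto (fun w => (1/w) * H w) atTop (𝓝 c) := by
    have hgp := aux_cesaro_conv μp hμp0 hxtc hMX
    have hgm := aux_cesaro_conv μm hμm0 hxtc hMX
    have hdiff := hgp.sub hgm
    have hHw : ∀ w : ℝ, H w = (∫ s in (0:ℝ)..w, gp s) - ∫ s in (0:ℝ)..w, gm s := by
      intro w
      simp only [hHdef, hhtdef]
      exact intervalIntegral.integral_sub (hgpI 0 w) (hgmI 0 w)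
    have heq : ∀ w : ℝ, (1/w) * (∫ s in (0:ℝ)..w, gp s) - (1/w) * (∫ s in (0:ℝ)..w, gm s)
        = (1/w) * H w := by
      intro w
      rw [hHw w, mul_sub]
    have := hdiff.congr heq
    rwa [show M * (μp univ).toReal - M * (μm univ).toReal = c by rw [hcdef]; ring] at this
  have hwin : Tendsto (fun t => (1/t) * ∫ w in t..(t+θ), H w) atTop (𝓝 (c * θ)) :=
    aux_cesaro_window hHc hθ0 hHrat
  have hXwin : Tendsto (fun t => (1/t) * (Xt (t+θ) - Xt t)) atTop (𝓝 0) :=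
    aux_window_avg θ hMX
  have hinv : Tendsto (fun t : ℝ => (1:ℝ)/t) atTop (𝓝 0) := by
    simpa [one_div] using (tendsto_inv_atTop_zero (𝕜 := ℝ))
  have hconst : ∀ C : ℝ, Tendsto (fun t : ℝ => (1/t) * C) atTop (𝓝 0) := by
    intro C
    simpa using hinv.mul_const C
  -- combine
  have hbig := ((hXwin.sub (hconst (θ * ξ))).sub hwin).sub (hconst (∫ s in (0:ℝ)..θ, F s))
  rw [show ((((0:ℝ) - 0) - c * θ) - 0) = (-M * ν (Ici 0)) * θ by
    rw [hν_Ici, hcdef]; ring] at hbig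
  apply hbig.congr'
  filter_upwards [eventually_ge_atTop (1:ℝ)] with t ht1
  have ht0 : (0:ℝ) ≤ t := by linarith
  have hθt : θ ≤ t := le_trans hθ1 ht1
  have e1 : (∫ s in (0:ℝ)..t, ∫ w in s..(s+θ), f w)
      = ∫ s in (0:ℝ)..t, (F (s+θ) - F s) := by
    apply intervalIntegral.integral_congr
    intro s hs
    rw [uIcc_of_le ht0] at hs
    have hs0 : 0 ≤ s := hs.1
    show (∫ w in s..(s+θ), f w) = F (s+θ) - F s
    have hin : (∫ w in s..(s+θ), f w) = ∫ w in s..(s+θ), ft w := by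
      apply intervalIntegral.integral_congr
      intro w hw
      rw [uIcc_of_le (by linarith : s ≤ s + θ)] at hw
      exact (hft w (by linarith [hw.1])).symm
    rw [hin]
    exact (intervalIntegral.integral_interval_sub_left (hftI 0 (s+θ)) (hftI 0 s)).symm
  have hFI : ∀ a b : ℝ, IntervalIntegrable F volume a b := fun a b =>
    hFc.intervalIntegrable a b
  have e2 : (∫ s in (0:ℝ)..t, (F (s+θ) - F s))
      = (∫ w in t..(t+θ), F w) - ∫ w in (0:ℝ)..θ, F w := by
    have hFsh : IntervalIntegrable (fun s => F (s+θ)) volume 0 t :=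
      (hFc.comp (continuous_add_right θ)).intervalIntegrable 0 t
    rw [intervalIntegral.integral_sub hFsh (hFI 0 t),
      intervalIntegral.integral_comp_add_right F θ, zero_add]
    have h1 : (∫ w in θ..(t+θ), F w) = (∫ w in θ..t, F w) + ∫ w in t..(t+θ), F w :=
      (intervalIntegral.integral_add_adjacent_intervals (hFI θ t) (hFI t (t+θ))).symm
    have h2 : (∫ w in (0:ℝ)..t, F w) = (∫ w in (0:ℝ)..θ, F w) + ∫ w in θ..t, F w :=
      (intervalIntegral.integral_add_adjacent_intervals (hFI 0 θ) (hFI θ t)).symm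
    rw [h1, h2]; ring
  have e3 : (∫ w in t..(t+θ), F w)
      = (Xt (t+θ) - Xt t) - θ * ξ - ∫ w in t..(t+θ), H w := by
    have hc1 : (∫ w in t..(t+θ), F w) = ∫ w in t..(t+θ), (xt w - ξ - H w) := by
      apply intervalIntegral.integral_congr
      intro w hw
      rw [uIcc_of_le (by linarith : t ≤ t + θ)] at hw
      exact hkey w (by linarith [hw.1])
    rw [hc1, intervalIntegral.integral_sub
        ((hxtc.intervalIntegrable t (t+θ)).sub intervalIntegrable_const)
        (hHc.intervalIntegrable t (t+θ)),
      intervalIntegral.integral_sub (hxtc.intervalIntegrable t (t+θ))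
        intervalIntegrable_const,
      intervalIntegral.integral_const]
    have e4 : (∫ w in t..(t+θ), xt w) = Xt (t+θ) - Xt t := by
      rw [hXtdef]
      simp only
      exact (intervalIntegral.integral_interval_sub_left
        (hxtc.intervalIntegrable 0 (t+θ)) (hxtc.intervalIntegrable 0 t)).symm
    rw [e4]
    simp only [add_sub_cancel_left, smul_eq_mul]
  rw [e1, e2, e3]
  ring
end

section
/- Let ν be a finite signed Borel measure on [0,∞), let f : [0,∞) → ℝ be locally integrable, let ξ ∈ ℝ, and let x be the solution of the perturbed Volterra equation x'(t) = ∫_{[0,t]} x(t−s) ν(ds) + f(t), x(0) = ξ. If both x and x' have Cesàro limits, i.e. (1/t)∫₀ᵗ x(s) ds → M ∈ ℝ and (1/t)∫₀ᵗ x'(s) ds → m ∈ ℝ as t → ∞, then f has Cesàro limit m − M·ν([0,∞)), i.e. (1/t)∫₀ᵗ f(s) ds → m − M·ν([0,∞)) as t → ∞. -/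
open MeasureTheory Filter Set
open scoped Topology

noncomputable def convKer (y : ℝ → ℝ) : ℝ × ℝ → ℝ :=
  Set.indicator {q : ℝ × ℝ | 0 ≤ q.2 ∧ q.2 ≤ q.1} (fun q => y (q.1 - q.2))

lemma convKer_meas {y : ℝ → ℝ} (hy : Continuous y) : StronglyMeasurable (convKer y) := by
  have hset : MeasurableSet {q : ℝ × ℝ | 0 ≤ q.2 ∧ q.2 ≤ q.1} :=
    ((isClosed_le continuous_const continuous_snd).inter
      (isClosed_le continuous_snd continuous_fst)).measurableSet
  exact (hy.comp (continuous_fst.sub continuous_snd)).stronglyMeasurable.indicator hset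

lemma conv_eq (μ : Measure ℝ) (y : ℝ → ℝ) (s : ℝ) :
    (∫ u in Icc 0 s, y (s - u) ∂μ) = ∫ u, convKer y (s, u) ∂μ := by
  rw [← integral_indicator measurableSet_Icc]
  refine integral_congr_ae (Eventually.of_forall fun u => ?_)
  simp only [convKer]
  by_cases h : u ∈ Icc 0 s
  · rw [indicator_of_mem h, indicator_of_mem (show (s, u) ∈ {q : ℝ × ℝ | 0 ≤ q.2 ∧ q.2 ≤ q.1} from ⟨h.1, h.2⟩)]
  · rw [indicator_of_notMem h, indicator_of_notMem
      (show (s, u) ∉ {q : ℝ × ℝ | 0 ≤ q.2 ∧ q.2 ≤ q.1} from by simpa [Set.mem_Icc] using h)]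

lemma conv_meas (μ : Measure ℝ) [IsFiniteMeasure μ] {y : ℝ → ℝ} (hy : Continuous y) :
    StronglyMeasurable (fun s => ∫ u in Icc 0 s, y (s - u) ∂μ) := by
  have h := (convKer_meas hy).integral_prod_right' (ν := μ)
  have he : (fun s => ∫ u in Icc 0 s, y (s - u) ∂μ) = fun s => ∫ u, convKer y (s, u) ∂μ :=
    funext (conv_eq μ y)
  rw [he]
  exact h

lemma conv_intervalIntegrable (μ : Measure ℝ) [IsFiniteMeasure μ] {y : ℝ → ℝ}
    (hy : Continuous y) {t : ℝ} (ht : 0 ≤ t) :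
    IntervalIntegrable (fun s => ∫ u in Icc 0 s, y (s - u) ∂μ) volume 0 t := by
  rw [intervalIntegrable_iff_integrableOn_Ioc_of_le ht]
  obtain ⟨C, hC⟩ := isCompact_Icc.exists_bound_of_continuousOn (f := y) (s := Icc 0 t)
    hy.continuousOn
  refine Integrable.mono' (integrable_const (C * (μ univ).toReal))
    ((conv_meas μ hy).aestronglyMeasurable.restrict) ?_
  filter_upwards [ae_restrict_mem measurableSet_Ioc] with s hs
  calc ‖∫ u in Icc 0 s, y (s - u) ∂μ‖ ≤ C * (μ (Icc 0 s)).toReal := by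
        refine norm_setIntegral_le_of_norm_le_const (measure_lt_top _ _) ?_
        intro u hu
        exact hC (s - u) ⟨sub_nonneg.2 hu.2, le_trans (by linarith [hu.1]) hs.2⟩
    _ ≤ C * (μ univ).toReal := by
        have h0 : 0 ≤ C := le_trans (norm_nonneg _) (hC 0 ⟨le_refl 0, ht⟩)
        exact mul_le_mul_of_nonneg_left (ENNReal.toReal_mono (measure_ne_top _ _)
          (measure_mono (subset_univ _))) h0

lemma conv_tendsto (μ : Measure ℝ) [IsFiniteMeasure μ] (hμ0 : μ (Iio 0) = 0)
    {y : ℝ → ℝ} (hy : Continuous y) {M : ℝ}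
    (hM : Tendsto (fun t => (1/t) * ∫ s in (0:ℝ)..t, y s) atTop (𝓝 M)) :
    Tendsto (fun t => (1/t) * ∫ s in (0:ℝ)..t, (∫ u in Icc 0 s, y (s - u) ∂μ))
      atTop (𝓝 (M * (μ (Ici 0)).toReal)) := by
  set Y : ℝ → ℝ := fun r => ∫ s in (0:ℝ)..r, y s with hYdef
  have hYc : Continuous Y := intervalIntegral.continuous_primitive
    (fun a b => hy.intervalIntegrable a b) 0
  have hae : ∀ᵐ u ∂μ, 0 ≤ u := by
    rw [ae_iff]
    convert hμ0 using 2
    ext u; simp [not_le]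
  -- linear bound on the primitive Y
  obtain ⟨C, hC0, hC⟩ : ∃ C : ℝ, 0 < C ∧ ∀ r : ℝ, 0 ≤ r → |Y r| ≤ C * (1 + r) := by
    obtain ⟨N, hN⟩ := (Metric.tendsto_atTop.mp hM) 1 one_pos
    set R := max N 1 with hR
    obtain ⟨C₀, hC₀⟩ := isCompact_Icc.exists_bound_of_continuousOn (f := Y) (s := Icc 0 R)
      hYc.continuousOn
    refine ⟨max C₀ 0 + |M| + 1, by positivity, fun r hr => ?_⟩
    rcases le_or_gt r R with h | h
    · have h1 : |Y r| ≤ max C₀ 0 := le_trans (hC₀ r ⟨hr, h⟩) (le_max_left _ _)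
      nlinarith [abs_nonneg (Y r), le_max_right C₀ 0, abs_nonneg M]
    · have hrN : N ≤ r := le_trans (le_max_left _ _) h.le
      have hr1 : (1:ℝ) ≤ r := le_trans (le_max_right _ _) h.le
      have hdist := hN r hrN
      rw [Real.dist_eq] at hdist
      have hrpos : (0:ℝ) < r := lt_of_lt_of_le one_pos hr1
      have h2 : (1/r) * |Y r| ≤ |M| + 1 := by
        have : |(1/r) * Y r| ≤ |M| + 1 := by
          calc |(1/r) * Y r| = |((1/r) * Y r - M) + M| := by ring_nf
            _ ≤ |(1/r) * Y r - M| + |M| := abs_add_le _ _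
            _ ≤ |M| + 1 := by linarith [le_of_lt hdist]
        rwa [abs_mul, abs_of_pos (by positivity : (0:ℝ) < 1/r)] at this
      have h3 : |Y r| ≤ (|M| + 1) * r := by
        have hmul := mul_le_mul_of_nonneg_left h2 hrpos.le
        rw [← mul_assoc, mul_one_div_cancel (ne_of_gt hrpos), one_mul] at hmul
        linarith [hmul]
      nlinarith [le_max_right C₀ 0, abs_nonneg M]
  -- key identity via Fubini
  have key : ∀ t : ℝ, 0 < t →
      (1/t) * (∫ s in (0:ℝ)..t, (∫ u in Icc 0 s, y (s - u) ∂μ))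
        = ∫ u, Set.indicator (Icc 0 t) (fun u => (1/t) * Y (t - u)) u ∂μ := by
    intro t ht
    rw [intervalIntegral.integral_of_le ht.le]
    have hswap : (∫ s in Ioc (0:ℝ) t, (∫ u, convKer y (s, u) ∂μ))
        = ∫ u, (∫ s in Ioc (0:ℝ) t, convKer y (s, u)) ∂μ := by
      apply integral_integral_swap
      obtain ⟨C₁, hC₁⟩ := isCompact_Icc.exists_bound_of_continuousOn (f := y) (s := Icc 0 t)
        hy.continuousOn
      have hC₁0 : 0 ≤ C₁ := le_trans (norm_nonneg _) (hC₁ 0 ⟨le_refl 0, ht.le⟩)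
      refine Integrable.mono' (integrable_const C₁) (convKer_meas hy).aestronglyMeasurable ?_
      have hfst : ∀ᵐ p ∂((volume.restrict (Ioc (0:ℝ) t)).prod μ), p.1 ∈ Ioc (0:ℝ) t := by
        rw [← Measure.restrict_univ (μ := μ), Measure.prod_restrict]
        filter_upwards [ae_restrict_mem (measurableSet_Ioc.prod MeasurableSet.univ)] with p hp
        exact hp.1
      filter_upwards [hfst] with p hp
      show ‖convKer y p‖ ≤ C₁
      by_cases hmem : p ∈ {q : ℝ × ℝ | 0 ≤ q.2 ∧ q.2 ≤ q.1}
      · rw [convKer, indicator_of_mem hmem]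
        exact hC₁ _ ⟨sub_nonneg.2 hmem.2, le_trans (by linarith [hmem.1]) hp.2⟩
      · rw [convKer, indicator_of_notMem hmem]
        simpa using hC₁0
    calc (1/t) * ∫ s in Ioc (0:ℝ) t, (∫ u in Icc 0 s, y (s - u) ∂μ)
        = (1/t) * ∫ s in Ioc (0:ℝ) t, (∫ u, convKer y (s, u) ∂μ) := by
          simp only [conv_eq]
      _ = (1/t) * ∫ u, (∫ s in Ioc (0:ℝ) t, convKer y (s, u)) ∂μ := by rw [hswap]
      _ = ∫ u, (1/t) * (∫ s in Ioc (0:ℝ) t, convKer y (s, u)) ∂μ := (integral_const_mul _ _).symm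
      _ = ∫ u, Set.indicator (Icc 0 t) (fun u => (1/t) * Y (t - u)) u ∂μ := by
          apply integral_congr_ae
          filter_upwards [hae] with u hu
          rcases le_or_gt u t with h | h
          · rw [indicator_of_mem (mem_Icc.mpr ⟨hu, h⟩)]
            congr 1
            have h1 : ∀ s : ℝ, convKer y (s, u) = Set.indicator (Ici u) (fun s => y (s - u)) s := by
              intro s
              by_cases hs : u ≤ s
              · rw [convKer, indicator_of_mem (show (s,u) ∈ {q : ℝ × ℝ | 0 ≤ q.2 ∧ q.2 ≤ q.1} from ⟨hu, hs⟩),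
                  indicator_of_mem (mem_Ici.mpr hs)]
              · rw [convKer, indicator_of_notMem (show (s,u) ∉ {q : ℝ × ℝ | 0 ≤ q.2 ∧ q.2 ≤ q.1} from
                  fun hc => hs hc.2), indicator_of_notMem (fun hc => hs (mem_Ici.mp hc))]
            simp only [h1]
            rw [setIntegral_indicator measurableSet_Ici]
            have hset : (Ioc (0:ℝ) t ∩ Ici u : Set ℝ) =ᵐ[volume] Ioc u t := by
              rw [MeasureTheory.ae_eq_set]
              constructor
              · refine measure_mono_null ?_ (Real.volume_singleton (a := u))
                rintro s ⟨⟨⟨h0s, hst⟩, hus⟩, hnot⟩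
                have hnlt : ¬ u < s := fun hlt => hnot ⟨hlt, hst⟩
                exact mem_singleton_iff.2 (le_antisymm (not_lt.1 hnlt) hus)
              · have hsub : Ioc u t ⊆ Ioc (0:ℝ) t ∩ Ici u :=
                  fun s hs => ⟨⟨lt_of_le_of_lt hu hs.1, hs.2⟩, hs.1.le⟩
                rw [diff_eq_empty.2 hsub]
                exact measure_empty
            rw [setIntegral_congr_set hset, ← intervalIntegral.integral_of_le h,
              intervalIntegral.integral_comp_sub_right _ u, sub_self]
          · rw [indicator_of_notMem (fun hc => (not_le.2 h) hc.2)]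
            have hz : ∀ s ∈ Ioc (0:ℝ) t, convKer y (s, u) = 0 := by
              intro s hs
              apply indicator_of_notMem
              rintro ⟨_, hus⟩
              exact absurd (le_trans hus hs.2) (not_le.2 h)
            rw [setIntegral_eq_zero_of_forall_eq_zero hz, mul_zero]
  -- dominated convergence
  have hint : Tendsto (fun t => ∫ u, Set.indicator (Icc 0 t) (fun u => (1/t) * Y (t - u)) u ∂μ)
      atTop (𝓝 (∫ u, Set.indicator (Ici (0:ℝ)) (fun _ => M) u ∂μ)) := by
    apply tendsto_integral_filter_of_dominated_convergence (bound := fun _ => 2 * C)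
    · filter_upwards with t
      exact ((continuous_const.mul
        (hYc.comp (continuous_const.sub continuous_id))).aestronglyMeasurable).indicator
        measurableSet_Icc
    · filter_upwards [eventually_ge_atTop (1:ℝ)] with t ht1
      filter_upwards with u
      by_cases hmem : u ∈ Icc 0 t
      · rw [indicator_of_mem hmem]
        have h1 : |Y (t - u)| ≤ C * (1 + (t - u)) := hC _ (sub_nonneg.2 hmem.2)
        have ht0 : (0:ℝ) < t := lt_of_lt_of_le one_pos ht1
        rw [Real.norm_eq_abs, abs_mul, abs_of_pos (by positivity : (0:ℝ) < 1/t)]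
        have h2 : C * (1 + (t - u)) ≤ C * (2 * t) := by nlinarith [hmem.1, hmem.2]
        calc (1/t) * |Y (t-u)| ≤ (1/t) * (C * (2*t)) :=
              mul_le_mul_of_nonneg_left (le_trans h1 h2) (by positivity)
          _ = 2 * C := by field_simp
      · rw [indicator_of_notMem hmem]
        simp only [norm_zero]
        positivity
    · exact integrable_const _
    · filter_upwards [hae] with u hu
      rw [indicator_of_mem (mem_Ici.mpr hu)]
      have hsubtend : Tendsto (fun t : ℝ => t - u) atTop atTop := by
        simpa [sub_eq_add_neg] using tendsto_atTop_add_const_right atTop (-u) tendsto_id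
      have hA : Tendsto (fun t : ℝ => (1/(t - u)) * Y (t - u)) atTop (𝓝 M) := hM.comp hsubtend
      have hB : Tendsto (fun t : ℝ => (t - u)/t) atTop (𝓝 1) := by
        have h0 : Tendsto (fun t : ℝ => 1 - u * t⁻¹) atTop (𝓝 (1 - u * 0)) :=
          tendsto_const_nhds.sub (tendsto_const_nhds.mul tendsto_inv_atTop_zero)
        rw [mul_zero, sub_zero] at h0
        apply h0.congr'
        filter_upwards [eventually_gt_atTop (0:ℝ)] with t htp
        field_simp
      have hAB := hA.mul hB
      rw [mul_one] at hAB
      apply hAB.congr'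
      filter_upwards [eventually_ge_atTop (u + 1)] with t htge
      have htu : (0:ℝ) < t - u := by linarith
      have ht0 : (0:ℝ) < t := by linarith [hu]
      rw [indicator_of_mem (mem_Icc.mpr ⟨hu, by linarith⟩)]
      field_simp
  have hval : (∫ u, Set.indicator (Ici (0:ℝ)) (fun _ => M) u ∂μ) = M * (μ (Ici 0)).toReal := by
    rw [integral_indicator_const _ measurableSet_Ici, smul_eq_mul, mul_comm, measureReal_def]
  rw [hval] at hint
  refine Tendsto.congr' ?_ hint
  filter_upwards [eventually_gt_atTop (0:ℝ)] with t ht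
  exact (key t ht).symm

/-- Suppose `x` solves `x' = x ∗ ν + f`, `x(0) = ξ`. If the Cesàro mean of `x` converges to
`M` and the Cesàro mean of `x'`, namely `(x(t)-ξ)/t`, converges to `m`, then `f` has Cesàro
limit `m - M·ν([0,∞))`. -/
theorem stmt13 (ν : MeasureTheory.SignedMeasure ℝ)
    (hsupp : ∀ A : Set ℝ, A ⊆ Set.Iio 0 → ν A = 0)
    (f : ℝ → ℝ) (hf : LocallyIntegrableOn f (Set.Ici 0))
    (ξ : ℝ) (x : ℝ → ℝ) (hx_cont : ContinuousOn x (Set.Ici 0)) (hx0 : x 0 = ξ)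
    (hx_eq : ∀ t ≥ (0:ℝ),
      x t = ξ + ∫ s in (0:ℝ)..t, (sInt ν (Set.Icc 0 s) (fun u => x (s - u)) + f s))
    (M m : ℝ)
    (hM : Tendsto (fun t => (1/t) * ∫ s in (0:ℝ)..t, x s) atTop (𝓝 M))
    (hm : Tendsto (fun t => (x t - ξ) / t) atTop (𝓝 m)) :
    Tendsto (fun t => (1/t) * ∫ s in (0:ℝ)..t, f s)
      atTop (𝓝 (m - M * ν (Set.Ici 0))) := by
  set y : ℝ → ℝ := fun r => x (max r 0) with hydef
  have hy : Continuous y := by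
    rw [← continuousOn_univ]
    exact hx_cont.comp ((continuous_id.max continuous_const).continuousOn)
      (fun r _ => le_max_right r 0)
  have hyx : ∀ r : ℝ, 0 ≤ r → y r = x r := fun r hr => by
    simp only [hydef, max_eq_left hr]
  have hMy : Tendsto (fun t => (1/t) * ∫ s in (0:ℝ)..t, y s) atTop (𝓝 M) := by
    apply hM.congr'
    filter_upwards [eventually_ge_atTop (0:ℝ)] with t ht
    congr 1
    apply intervalIntegral.integral_congr
    intro s hs
    rw [uIcc_of_le ht] at hs
    exact (hyx s hs.1).symm
  set μp := ν.toJordanDecomposition.posPart with hμp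
  set μn := ν.toJordanDecomposition.negPart with hμn
  obtain ⟨i, hi₁, hi₂, hi₃, hpos, hneg⟩ := ν.toJordanDecomposition_spec
  have hp0 : μp (Iio 0) = 0 := by
    rw [hμp, hpos, SignedMeasure.toMeasureOfZeroLE_apply ν hi₂ hi₁ measurableSet_Iio]
    have h0 : ν (i ∩ Iio 0) = 0 := hsupp _ inter_subset_right
    simp [h0]
  have hn0 : μn (Iio 0) = 0 := by
    rw [hμn, hneg, SignedMeasure.toMeasureOfLEZero_apply ν hi₃ hi₁.compl measurableSet_Iio]
    have h0 : ν (iᶜ ∩ Iio 0) = 0 := hsupp _ inter_subset_right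
    simp [h0]
  have hν_val : ν (Ici 0) = (μp (Ici 0)).toReal - (μn (Ici 0)).toReal := by
    conv_lhs => rw [← ν.toSignedMeasure_toJordanDecomposition]
    exact Measure.toSignedMeasure_sub_apply measurableSet_Ici
  have hgp : ∀ s : ℝ, 0 ≤ s → sInt ν (Icc 0 s) (fun u => x (s - u))
      = (∫ u in Icc 0 s, y (s - u) ∂μp) - (∫ u in Icc 0 s, y (s - u) ∂μn) := by
    intro s _
    have h1 : ∀ μ : Measure ℝ, (∫ u in Icc 0 s, x (s - u) ∂μ) = ∫ u in Icc 0 s, y (s - u) ∂μ := by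
      intro μ
      refine setIntegral_congr_fun measurableSet_Icc fun u hu => ?_
      exact (hyx (s - u) (sub_nonneg.2 hu.2)).symm
    rw [sInt, ← hμp, ← hμn, h1, h1]
  have hII : ∀ t : ℝ, 0 ≤ t →
      IntervalIntegrable (fun s => sInt ν (Icc 0 s) (fun u => x (s - u))) volume 0 t := by
    intro t ht
    have h2 := (conv_intervalIntegrable μp hy ht).sub (conv_intervalIntegrable μn hy ht)
    rw [intervalIntegrable_iff_integrableOn_Ioc_of_le ht] at h2 ⊢
    exact h2.congr_fun (fun s hs => (hgp s hs.1.le).symm) measurableSet_Ioc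
  have hfI : ∀ t : ℝ, 0 ≤ t → IntervalIntegrable f volume 0 t := by
    intro t ht
    rw [intervalIntegrable_iff_integrableOn_Ioc_of_le ht]
    exact (hf.integrableOn_compact_subset Icc_subset_Ici_self isCompact_Icc).mono_set
      Ioc_subset_Icc_self
  have hconv : Tendsto (fun t => (1/t) * ∫ s in (0:ℝ)..t, sInt ν (Icc 0 s) (fun u => x (s - u)))
      atTop (𝓝 (M * ν (Ici 0))) := by
    have hp := conv_tendsto μp hp0 hy hMy
    have hn := conv_tendsto μn hn0 hy hMy
    have h3 : M * ν (Ici 0) = M * (μp (Ici 0)).toReal - M * (μn (Ici 0)).toReal := by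
      rw [hν_val]; ring
    rw [h3]
    apply (hp.sub hn).congr'
    filter_upwards [eventually_ge_atTop (0:ℝ)] with t ht
    rw [← mul_sub, ← intervalIntegral.integral_sub (conv_intervalIntegrable μp hy ht)
      (conv_intervalIntegrable μn hy ht)]
    congr 1
    apply intervalIntegral.integral_congr
    intro s hs
    rw [uIcc_of_le ht] at hs
    exact (hgp s hs.1).symm
  have hfin : ∀ᶠ t in atTop, (x t - ξ)/t - (1/t) * (∫ s in (0:ℝ)..t, sInt ν (Icc 0 s)
      (fun u => x (s - u))) = (1/t) * ∫ s in (0:ℝ)..t, f s := by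
    filter_upwards [eventually_ge_atTop (0:ℝ)] with t ht
    have hxe := hx_eq t ht
    have hsplit : (∫ s in (0:ℝ)..t, (sInt ν (Icc 0 s) (fun u => x (s - u)) + f s))
        = (∫ s in (0:ℝ)..t, sInt ν (Icc 0 s) fun u => x (s - u)) + ∫ s in (0:ℝ)..t, f s :=
      intervalIntegral.integral_add (hII t ht) (hfI t ht)
    rw [hsplit] at hxe
    have h4 : ∫ s in (0:ℝ)..t, f s
        = (x t - ξ) - ∫ s in (0:ℝ)..t, sInt ν (Icc 0 s) fun u => x (s - u) := by linarith
    rw [h4]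
    ring
  exact Tendsto.congr' hfin (hm.sub hconv)
end

section
/- Let f : [0,∞) → [0,∞) be a nonnegative locally integrable function and L ∈ ℝ. The following are equivalent: (i) for every θ ∈ (0,1], (1/t)∫₀ᵗ ∫ₛ^{s+θ} f(u) du ds → L·θ as t → ∞, and (1/t)∫_t^{t+1} f(s) ds → 0 as t → ∞; (ii) (1/t)∫₀ᵗ f(s) ds → L as t → ∞. -/
open MeasureTheory Filter Set
open scoped Topology

namespace Stmt17Aux

/-- The primitive `F t = ∫₀ᵗ f`. -/
noncomputable def F (f : ℝ → ℝ) (s : ℝ) : ℝ := ∫ u in (0:ℝ)..s, f u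

lemma uIcc_subset_Ici {a b : ℝ} (ha : 0 ≤ a) (hb : 0 ≤ b) :
    Set.uIcc a b ⊆ Set.Ici 0 := by
  intro x hx
  rcases Set.mem_uIcc.1 hx with h | h <;> simp only [Set.mem_Ici] <;> linarith [h.1]

lemma intInt {f : ℝ → ℝ} (hf : LocallyIntegrableOn f (Set.Ici 0))
    {a b : ℝ} (ha : 0 ≤ a) (hb : 0 ≤ b) : IntervalIntegrable f volume a b :=
  (hf.integrableOn_compact_subset (uIcc_subset_Ici ha hb) isCompact_uIcc).intervalIntegrable

lemma F_add {f : ℝ → ℝ} (hf : LocallyIntegrableOn f (Set.Ici 0))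
    {a b : ℝ} (ha : 0 ≤ a) (hb : 0 ≤ b) :
    F f b = F f a + ∫ u in a..b, f u :=
  (intervalIntegral.integral_add_adjacent_intervals
    (intInt hf le_rfl ha) (intInt hf ha hb)).symm

lemma F_mono {f : ℝ → ℝ} (hf : LocallyIntegrableOn f (Set.Ici 0))
    (hpos : ∀ t ≥ (0:ℝ), 0 ≤ f t) : MonotoneOn (F f) (Set.Ici 0) := by
  intro a ha b hb hab
  rw [F_add hf ha hb]
  have : 0 ≤ ∫ u in a..b, f u :=
    intervalIntegral.integral_nonneg hab (fun u hu => hpos u (le_trans ha hu.1))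
  linarith

lemma F_intInt {f : ℝ → ℝ} (hf : LocallyIntegrableOn f (Set.Ici 0))
    (hpos : ∀ t ≥ (0:ℝ), 0 ≤ f t) {a b : ℝ} (ha : 0 ≤ a) (hb : 0 ≤ b) :
    IntervalIntegrable (F f) volume a b :=
  ((F_mono hf hpos).mono (uIcc_subset_Ici ha hb)).intervalIntegrable

/-- Key identity: `∫₀ᵗ ∫ₛ^{s+θ} f = ∫ₜ^{t+θ} F − ∫₀^θ F`. -/
lemma key {f : ℝ → ℝ} (hf : LocallyIntegrableOn f (Set.Ici 0))
    (hpos : ∀ t ≥ (0:ℝ), 0 ≤ f t) {θ t : ℝ} (hθ : 0 ≤ θ) (hθt : θ ≤ t) :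
    ∫ s in (0:ℝ)..t, ∫ u in s..(s+θ), f u
      = (∫ s in t..(t+θ), F f s) - ∫ s in (0:ℝ)..θ, F f s := by
  have ht : 0 ≤ t := le_trans hθ hθt
  have h1 : ∫ s in (0:ℝ)..t, ∫ u in s..(s+θ), f u
      = ∫ s in (0:ℝ)..t, (F f (s+θ) - F f s) := by
    apply intervalIntegral.integral_congr
    intro s hs
    have hs0 : 0 ≤ s := by
      rw [Set.uIcc_of_le ht] at hs; exact hs.1
    show (∫ u in s..(s+θ), f u) = F f (s+θ) - F f s
    rw [F_add hf hs0 (by linarith : (0:ℝ) ≤ s + θ)]; ring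
  have hFshift : IntervalIntegrable (fun s => F f (s+θ)) volume 0 t := by
    apply MonotoneOn.intervalIntegrable
    intro x hx y hy hxy
    have hx0 : 0 ≤ x := by rw [Set.uIcc_of_le ht] at hx; exact hx.1
    have hy0 : 0 ≤ y := by rw [Set.uIcc_of_le ht] at hy; exact hy.1
    exact F_mono hf hpos (by simp; linarith) (by simp; linarith) (by linarith)
  rw [h1, intervalIntegral.integral_sub hFshift (F_intInt hf hpos le_rfl ht),
    intervalIntegral.integral_comp_add_right (F f) θ, zero_add]
  have e1 : (∫ s in θ..(t+θ), F f s)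
      = (∫ s in θ..t, F f s) + ∫ s in t..(t+θ), F f s :=
    (intervalIntegral.integral_add_adjacent_intervals
      (F_intInt hf hpos hθ ht) (F_intInt hf hpos ht (by linarith))).symm
  have e2 : (∫ s in (0:ℝ)..t, F f s)
      = (∫ s in (0:ℝ)..θ, F f s) + ∫ s in θ..t, F f s :=
    (intervalIntegral.integral_add_adjacent_intervals
      (F_intInt hf hpos le_rfl hθ) (F_intInt hf hpos hθ ht)).symm
  rw [e1, e2]; ring

lemma lower_bd {f : ℝ → ℝ} (hf : LocallyIntegrableOn f (Set.Ici 0))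
    (hpos : ∀ t ≥ (0:ℝ), 0 ≤ f t) {t θ : ℝ} (ht : 0 ≤ t) (hθ : 0 ≤ θ) :
    θ * F f t ≤ ∫ s in t..(t+θ), F f s := by
  have h := intervalIntegral.integral_mono_on (μ := volume)
    (by linarith : t ≤ t + θ) (intervalIntegrable_const (c := F f t))
    (F_intInt hf hpos ht (by linarith))
    (fun x hx => F_mono hf hpos ht (le_trans ht hx.1) hx.1)
  simpa [mul_comm] using h

lemma upper_bd {f : ℝ → ℝ} (hf : LocallyIntegrableOn f (Set.Ici 0))
    (hpos : ∀ t ≥ (0:ℝ), 0 ≤ f t) {t θ : ℝ} (ht : 0 ≤ t) (hθ : 0 ≤ θ) :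
    (∫ s in t..(t+θ), F f s) ≤ θ * F f (t+θ) := by
  have h := intervalIntegral.integral_mono_on (μ := volume)
    (by linarith : t ≤ t + θ) (F_intInt hf hpos ht (by linarith))
    (intervalIntegrable_const (c := F f (t+θ)))
    (fun x hx => F_mono hf hpos (le_trans ht hx.1) (by simp; linarith) hx.2)
  simpa [mul_comm] using h

lemma tendsto_const_mul_inv (c : ℝ) :
    Tendsto (fun t : ℝ => (1/t) * c) atTop (𝓝 0) := by
  have := (tendsto_inv_atTop_zero (𝕜 := ℝ)).mul_const c
  simpa [one_div] using this

lemma shift {f : ℝ → ℝ} {L : ℝ}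
    (hL : Tendsto (fun t => (1/t) * F f t) atTop (𝓝 L)) {c : ℝ} (hc : 0 ≤ c) :
    Tendsto (fun t => (1/t) * F f (t+c)) atTop (𝓝 L) := by
  have h1 : Tendsto (fun t => (1/(t+c)) * F f (t+c)) atTop (𝓝 L) :=
    hL.comp (tendsto_atTop_add_const_right atTop c tendsto_id)
  have h2 : Tendsto (fun t : ℝ => 1 + c * (1/t)) atTop (𝓝 1) := by
    have := (tendsto_const_nhds (x := (1:ℝ)) (f := atTop)).add
      ((tendsto_const_mul_inv c).const_mul 1)
    simpa [mul_comm] using (tendsto_const_nhds (x := (1:ℝ)) (f := atTop)).add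
      (((tendsto_const_mul_inv c)).const_mul 1 |>.congr (fun t => by ring))
  have h3 := h2.mul h1
  rw [one_mul] at h3
  apply h3.congr'
  filter_upwards [eventually_ge_atTop (1:ℝ)] with t ht
  have ht0 : (0:ℝ) < t := by linarith
  have htc : (0:ℝ) < t + c := by linarith
  field_simp

lemma tendsto_avg {f : ℝ → ℝ} {L : ℝ} (hf : LocallyIntegrableOn f (Set.Ici 0))
    (hpos : ∀ t ≥ (0:ℝ), 0 ≤ f t)
    (hL : Tendsto (fun t => (1/t) * F f t) atTop (𝓝 L)) {θ : ℝ} (hθ : 0 ≤ θ) :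
    Tendsto (fun t => (1/t) * ∫ s in t..(t+θ), F f s) atTop (𝓝 (L * θ)) := by
  have hlow : Tendsto (fun t => θ * ((1/t) * F f t)) atTop (𝓝 (L * θ)) := by
    simpa [mul_comm] using hL.const_mul θ
  have hup : Tendsto (fun t => θ * ((1/t) * F f (t+θ))) atTop (𝓝 (L * θ)) := by
    simpa [mul_comm] using (shift hL hθ).const_mul θ
  refine tendsto_of_tendsto_of_tendsto_of_le_of_le' hlow hup ?_ ?_
  · filter_upwards [eventually_ge_atTop (0:ℝ)] with t ht
    have h := lower_bd hf hpos ht hθ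
    have h1t : (0:ℝ) ≤ 1/t := by positivity
    calc θ * ((1/t) * F f t) = (1/t) * (θ * F f t) := by ring
      _ ≤ (1/t) * ∫ s in t..(t+θ), F f s := mul_le_mul_of_nonneg_left h h1t
  · filter_upwards [eventually_ge_atTop (0:ℝ)] with t ht
    have h := upper_bd hf hpos ht hθ
    have h1t : (0:ℝ) ≤ 1/t := by positivity
    calc (1/t) * ∫ s in t..(t+θ), F f s ≤ (1/t) * (θ * F f (t+θ)) :=
        mul_le_mul_of_nonneg_left h h1t
      _ = θ * ((1/t) * F f (t+θ)) := by ring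

end Stmt17Aux

open Stmt17Aux

/-- For a nonnegative locally integrable `f`, the following are equivalent:
(i) `(1/t)∫₀ᵗ∫_s^{s+θ} f → L·θ` for every `θ ∈ (0,1]` and `(1/t)∫_t^{t+1} f → 0`;
(ii) `f` has Cesàro limit `L`. -/
theorem stmt17 (f : ℝ → ℝ) (hf : LocallyIntegrableOn f (Set.Ici 0))
    (hpos : ∀ t ≥ (0:ℝ), 0 ≤ f t) (L : ℝ) :
    ((∀ θ ∈ Set.Ioc (0:ℝ) 1,
        Tendsto (fun t => (1/t) * ∫ s in (0:ℝ)..t, ∫ u in s..(s+θ), f u)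
          atTop (𝓝 (L * θ))) ∧
      Tendsto (fun t => (1/t) * ∫ s in t..(t+1), f s) atTop (𝓝 0)) ↔
    Tendsto (fun t => (1/t) * ∫ s in (0:ℝ)..t, f s) atTop (𝓝 L) := by
  have hFdef : ∀ t : ℝ, (∫ s in (0:ℝ)..t, f s) = F f t := fun t => rfl
  constructor
  · rintro ⟨h1, h2⟩
    have hG1 := h1 1 ⟨one_pos, le_rfl⟩
    -- average of F over [t, t+1] tends to L
    have hA : Tendsto (fun t => (1/t) * ∫ s in t..(t+1), F f s) atTop (𝓝 L) := by
      have hsum := hG1.add (tendsto_const_mul_inv (∫ s in (0:ℝ)..1, F f s))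
      rw [add_zero, mul_one] at hsum
      apply hsum.congr'
      filter_upwards [eventually_ge_atTop (1:ℝ)] with t ht
      rw [key hf hpos zero_le_one ht]
      ring
    have hlow : Tendsto
        (fun t => (1/t) * (∫ s in t..(t+1), F f s) - (1/t) * ∫ s in t..(t+1), f s)
        atTop (𝓝 L) := by
      have := hA.sub h2; rwa [sub_zero] at this
    refine tendsto_of_tendsto_of_tendsto_of_le_of_le' hlow hA ?_ ?_
    · filter_upwards [eventually_ge_atTop (1:ℝ)] with t ht
      have ht0 : (0:ℝ) ≤ t := by linarith
      have h1t : (0:ℝ) ≤ 1/t := by positivity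
      have hub := upper_bd hf hpos ht0 zero_le_one
      rw [one_mul, F_add hf ht0 (by linarith : (0:ℝ) ≤ t + 1)] at hub
      have := mul_le_mul_of_nonneg_left hub h1t
      rw [hFdef t]
      nlinarith
    · filter_upwards [eventually_ge_atTop (1:ℝ)] with t ht
      have ht0 : (0:ℝ) ≤ t := by linarith
      have h1t : (0:ℝ) ≤ 1/t := by positivity
      have hlb := lower_bd hf hpos ht0 zero_le_one
      rw [one_mul] at hlb
      rw [hFdef t]
      exact mul_le_mul_of_nonneg_left hlb h1t
  · intro hL
    simp only [hFdef] at hL ⊢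
    constructor
    · intro θ hθ
      have hB := tendsto_avg hf hpos hL (le_of_lt hθ.1)
      have hC := hB.sub (tendsto_const_mul_inv (∫ s in (0:ℝ)..θ, F f s))
      rw [sub_zero] at hC
      apply hC.congr'
      filter_upwards [eventually_ge_atTop (1:ℝ)] with t ht
      rw [key hf hpos (le_of_lt hθ.1) (le_trans hθ.2 ht)]
      ring
    · have hD := (shift hL zero_le_one).sub hL
      rw [sub_self] at hD
      apply hD.congr'
      filter_upwards [eventually_ge_atTop (0:ℝ)] with t ht
      rw [F_add hf ht (by linarith : (0:ℝ) ≤ t + 1)]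
      ring
end

section
/- Let β : [0,∞) → [0,∞) be twice continuously differentiable, strictly increasing and convex (β'' ≥ 0), with β(t) → ∞ and β'(t) → ∞ as t → ∞, and define f : [0,∞) → ℝ by f(t) = β'(t)·sin(β(t))·t. Then for every θ ∈ (0,1], the function t ↦ ∫_t^{t+θ} f(s) ds has Cesàro limit 0, i.e. (1/t)∫₀ᵗ ∫ₛ^{s+θ} f(u) du ds → 0 as t → ∞, but f itself does not have a Cesàro limit, i.e. (1/t)∫₀ᵗ f(s) ds does not converge as t → ∞. -/
open MeasureTheory Filter Set
open scoped Topology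

/-- For `β : [0,∞) → [0,∞)` twice continuously differentiable, strictly increasing and
convex, with `β(t) → ∞` and `β'(t) → ∞`, the function `f(t) = β'(t)·sin(β(t))·t` is such
that every interval average `t ↦ ∫_t^{t+θ} f`, `θ ∈ (0,1]`, has Cesàro limit `0`, yet `f`
itself has no Cesàro limit. -/
theorem stmt18 (β β' β'' : ℝ → ℝ)
    (hβ_nonneg : ∀ t ≥ (0:ℝ), 0 ≤ β t)
    (hβ' : ∀ t ∈ Set.Ici (0:ℝ), HasDerivWithinAt β (β' t) (Set.Ici 0) t)
    (hβ'' : ∀ t ∈ Set.Ici (0:ℝ), HasDerivWithinAt β' (β'' t) (Set.Ici 0) t)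
    (hβ''_cont : ContinuousOn β'' (Set.Ici 0))
    (hmono : StrictMonoOn β (Set.Ici 0))
    (hconvex : ∀ t ≥ (0:ℝ), 0 ≤ β'' t)
    (hβ_inf : Tendsto β atTop atTop)
    (hβ'_inf : Tendsto β' atTop atTop)
    (f : ℝ → ℝ) (hf : ∀ t, f t = β' t * Real.sin (β t) * t) :
    (∀ θ ∈ Set.Ioc (0:ℝ) 1,
      Tendsto (fun t => (1/t) * ∫ s in (0:ℝ)..t, ∫ u in s..(s+θ), f u)
        atTop (𝓝 0)) ∧
    ¬ ∃ L : ℝ, Tendsto (fun t => (1/t) * ∫ s in (0:ℝ)..t, f s) atTop (𝓝 L) := by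
  have hβc : ContinuousOn β (Ici 0) := fun t ht => (hβ' t ht).continuousWithinAt
  have hβ'c : ContinuousOn β' (Ici 0) := fun t ht => (hβ'' t ht).continuousWithinAt
  have hfeq : f = fun t => β' t * Real.sin (β t) * t := funext hf
  have hcosc : ContinuousOn (fun s => Real.cos (β s)) (Ici 0) :=
    Real.continuous_cos.comp_continuousOn hβc
  have hsinc : ContinuousOn (fun s => Real.sin (β s)) (Ici 0) :=
    Real.continuous_sin.comp_continuousOn hβc
  have hfc : ContinuousOn f (Ici 0) := by
    rw [hfeq]; exact (hβ'c.mul hsinc).mul continuousOn_id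
  have hsub : ∀ a b : ℝ, 0 ≤ a → 0 ≤ b → uIcc a b ⊆ Ici 0 := fun a b ha hb x hx =>
    le_trans (le_min ha hb) hx.1
  have hIcc : ∀ a b : ℝ, 0 ≤ a → Icc a b ⊆ Ici 0 := fun a b ha x hx => le_trans ha hx.1
  have hinteg : ∀ g : ℝ → ℝ, ContinuousOn g (Ici 0) → ∀ a b : ℝ, 0 ≤ a → 0 ≤ b →
      IntervalIntegrable g volume a b := fun g hg a b ha hb =>
    (hg.mono (hsub a b ha hb)).intervalIntegrable
  have hderβ : ∀ x : ℝ, 0 < x → HasDerivAt β (β' x) x := fun x hx =>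
    (hβ' x (le_of_lt hx)).hasDerivAt (mem_of_superset (Ioi_mem_nhds hx) Ioi_subset_Ici_self)
  have hderβ2 : ∀ x : ℝ, 0 < x → HasDerivAt β' (β'' x) x := fun x hx =>
    (hβ'' x (le_of_lt hx)).hasDerivAt (mem_of_superset (Ioi_mem_nhds hx) Ioi_subset_Ici_self)
  set G : ℝ → ℝ := fun t => ∫ s in (0:ℝ)..t, Real.cos (β s) with hGdef
  have hGc : ∀ b : ℝ, 0 ≤ b → ContinuousOn G (Icc 0 b) := by
    intro b hb
    have huI : uIcc (0:ℝ) b = Icc 0 b := uIcc_of_le hb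
    rw [← huI]
    exact intervalIntegral.continuousOn_primitive_interval
      ((hcosc.mono (hsub 0 b le_rfl hb)).integrableOn_compact (by rw [huI]; exact isCompact_Icc))
  -- FTC/integration by parts: key identity A
  have keyA : ∀ t : ℝ, 0 ≤ t → ∫ s in (0:ℝ)..t, f s = -t * Real.cos (β t) + G t := by
    intro t ht
    have hGcont : ContinuousOn G (Icc 0 t) := hGc t ht
    have hcont : ContinuousOn (fun s => -s * Real.cos (β s) + G s) (Icc 0 t) :=
      ((continuousOn_id.neg.mul (hcosc.mono (hIcc 0 t le_rfl)))).add hGcont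
    have hderiv : ∀ x ∈ Ioo 0 t, HasDerivWithinAt (fun s => -s * Real.cos (β s) + G s)
        (f x) (Ioi x) x := by
      intro x hx
      have hb := hderβ x hx.1
      have hcos : HasDerivAt (fun s => Real.cos (β s)) (-Real.sin (β x) * β' x) x :=
        (Real.hasDerivAt_cos (β x)).comp x hb
      have h1 : HasDerivAt (fun s => -s * Real.cos (β s))
          (-1 * Real.cos (β x) + -x * (-Real.sin (β x) * β' x)) x :=
        ((hasDerivAt_id x).neg.mul hcos)
      have h2 : HasDerivAt G (Real.cos (β x)) x := by
        refine intervalIntegral.integral_hasDerivAt_right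
          (hinteg _ hcosc 0 x le_rfl (le_of_lt hx.1)) ?_ ?_
        · exact ContinuousAt.stronglyMeasurableAtFilter isOpen_Ioi
            (fun y hy => (Real.continuous_cos.continuousAt).comp (hderβ y hy).continuousAt)
            x hx.1
        · exact (Real.continuous_cos.continuousAt).comp (hderβ x hx.1).continuousAt
      have h3 := h1.add h2
      have : -1 * Real.cos (β x) + -x * (-Real.sin (β x) * β' x) + Real.cos (β x) = f x := by
        rw [hf]; ring
      rw [this] at h3
      exact h3.hasDerivWithinAt
    have := intervalIntegral.integral_eq_sub_of_hasDeriv_right_of_le ht hcont hderiv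
      (hinteg f hfc 0 t le_rfl ht)
    rw [this]
    have hG0 : G 0 = 0 := intervalIntegral.integral_same
    rw [hG0]
    ring

  -- threshold a₀
  obtain ⟨a₁, ha₁⟩ := eventually_atTop.1 (hβ'_inf.eventually_ge_atTop 1)
  set a₀ : ℝ := max a₁ 1 with ha₀def
  have ha₀1 : (1:ℝ) ≤ a₀ := le_max_right _ _
  have ha₀0 : (0:ℝ) ≤ a₀ := le_trans zero_le_one ha₀1
  have hβ'ge : ∀ x : ℝ, a₀ ≤ x → 1 ≤ β' x := fun x hx => ha₁ x ((le_max_left _ _).trans hx)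
  have hβ'pos : ∀ x : ℝ, a₀ ≤ x → 0 < β' x := fun x hx => lt_of_lt_of_le one_pos (hβ'ge x hx)
  have hβ'ne : ∀ x : ℝ, a₀ ≤ x → β' x ≠ 0 := fun x hx => ne_of_gt (hβ'pos x hx)
  have hβ'mono : MonotoneOn β' (Ici 0) := by
    apply monotoneOn_of_deriv_nonneg (convex_Ici 0) hβ'c
    · intro x hx
      rw [interior_Ici] at hx
      exact (hderβ2 x hx).differentiableAt.differentiableWithinAt
    · intro x hx
      rw [interior_Ici] at hx
      rw [(hderβ2 x hx).deriv]
      exact hconvex x (le_of_lt hx)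
  have hsubA : ∀ a b : ℝ, a₀ ≤ a → a ≤ b → uIcc a b ⊆ Ici a₀ := fun a b ha hab x hx =>
    le_trans (le_min ha (ha.trans hab)) hx.1
  have hIciA : Ici a₀ ⊆ Ici (0:ℝ) := fun x hx => le_trans ha₀0 hx
  -- continuity of quotient integrands on Ici a₀
  have hq0 : ContinuousOn (fun s => β'' s / (β' s)^2) (Ici a₀) :=
    (hβ''_cont.mono hIciA).div ((hβ'c.mono hIciA).pow 2)
      (fun x hx => pow_ne_zero 2 (hβ'ne x hx))
  have hq1 : ContinuousOn (fun s => Real.sin (β s) * (β'' s / (β' s)^2)) (Ici a₀) :=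
    (hsinc.mono hIciA).mul hq0
  have hq2 : ContinuousOn (fun s => 1/β' s - s * (β'' s / (β' s)^2)) (Ici a₀) :=
    ((continuousOn_const.div (hβ'c.mono hIciA) (fun x hx => hβ'ne x hx))).sub
      (continuousOn_id.mul hq0)
  have hq3 : ContinuousOn (fun s => Real.sin (β s) * (1/β' s - s * (β'' s / (β' s)^2)))
      (Ici a₀) := (hsinc.mono hIciA).mul hq2
  have hIccA : ∀ a b : ℝ, a₀ ≤ a → Icc a b ⊆ Ici a₀ := fun a b ha x hx => ha.trans hx.1
  have hintegA : ∀ g : ℝ → ℝ, ContinuousOn g (Ici a₀) → ∀ a b : ℝ, a₀ ≤ a → a ≤ b →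
      IntervalIntegrable g volume a b := fun g hg a b ha hab =>
    (hg.mono (hsubA a b ha hab)).intervalIntegrable
  -- keyC : FTC for β''/β'^2
  have keyC : ∀ a b : ℝ, a₀ ≤ a → a ≤ b →
      ∫ s in a..b, β'' s / (β' s)^2 = 1/β' a - 1/β' b := by
    intro a b ha hab
    have hcont : ContinuousOn (fun s => -(β' s)⁻¹) (Icc a b) :=
      (((hβ'c.mono hIciA).mono (hIccA a b ha)).inv₀
        (fun x hx => hβ'ne x (hIccA a b ha hx))).neg
    have hderiv : ∀ x ∈ Ioo a b, HasDerivWithinAt (fun s => -(β' s)⁻¹)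
        (β'' x / (β' x)^2) (Ioi x) x := by
      intro x hx
      have hxa : a₀ ≤ x := ha.trans (le_of_lt hx.1)
      have h := ((hderβ2 x (lt_of_lt_of_le (lt_of_lt_of_le one_pos ha₀1) hxa)).inv
        (hβ'ne x hxa)).neg
      have he : -(-β'' x / β' x ^ 2) = β'' x / (β' x)^2 := by ring
      rw [he] at h
      exact h.hasDerivWithinAt
    rw [intervalIntegral.integral_eq_sub_of_hasDeriv_right_of_le hab hcont hderiv
      (hintegA _ hq0 a b ha hab)]
    rw [one_div, one_div]
    ring
  have hq0nonneg : ∀ x : ℝ, a₀ ≤ x → 0 ≤ β'' x / (β' x)^2 := fun x hx =>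
    div_nonneg (hconvex x (hIciA hx)) (sq_nonneg _)
  -- keyB1 : integration by parts for cos
  have keyB1 : ∀ a b : ℝ, a₀ ≤ a → a ≤ b →
      ∫ s in a..b, Real.cos (β s) = Real.sin (β b)/β' b - Real.sin (β a)/β' a
        + ∫ s in a..b, Real.sin (β s) * (β'' s / (β' s)^2) := by
    intro a b ha hab
    have hzb : ∀ x : ℝ, a₀ ≤ x → (0:ℝ) < x := fun x hx =>
      lt_of_lt_of_le (lt_of_lt_of_le one_pos ha₀1) hx
    have hcont : ContinuousOn (fun s => Real.sin (β s) / β' s) (Icc a b) :=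
      ((hsinc.mono hIciA).div (hβ'c.mono hIciA) (fun x hx => hβ'ne x hx)).mono
        (hIccA a b ha)
    have hderiv : ∀ x ∈ Ioo a b, HasDerivWithinAt (fun s => Real.sin (β s) / β' s)
        (Real.cos (β x) - Real.sin (β x) * (β'' x / (β' x)^2)) (Ioi x) x := by
      intro x hx
      have hxa : a₀ ≤ x := ha.trans (le_of_lt hx.1)
      have hne := hβ'ne x hxa
      have hsin : HasDerivAt (fun s => Real.sin (β s)) (Real.cos (β x) * β' x) x :=
        (Real.hasDerivAt_sin (β x)).comp x (hderβ x (hzb x hxa))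
      have h := hsin.div (hderβ2 x (hzb x hxa)) hne
      have he : (Real.cos (β x) * β' x * β' x - Real.sin (β x) * β'' x) / β' x ^ 2
          = Real.cos (β x) - Real.sin (β x) * (β'' x / (β' x)^2) := by
        field_simp
      rw [he] at h
      exact h.hasDerivWithinAt
    have hFTC := intervalIntegral.integral_eq_sub_of_hasDeriv_right_of_le hab hcont hderiv
      ((hintegA _ ((Real.continuous_cos.comp_continuousOn (hβc.mono hIciA)).sub hq1)
        a b ha hab))
    have hsplit : ∫ s in a..b, (Real.cos (β s) - Real.sin (β s) * (β'' s / (β' s)^2))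
        = (∫ s in a..b, Real.cos (β s)) - ∫ s in a..b, Real.sin (β s) * (β'' s / (β' s)^2) :=
      intervalIntegral.integral_sub (hintegA _ (hcosc.mono hIciA) a b ha hab)
        (hintegA _ hq1 a b ha hab)
    rw [hsplit] at hFTC
    rw [sub_eq_iff_eq_add] at hFTC
    rw [hFTC]
  -- keyB2 : integration by parts for s * cos
  have keyB2 : ∀ a b : ℝ, a₀ ≤ a → a ≤ b →
      ∫ s in a..b, s * Real.cos (β s) = b * Real.sin (β b)/β' b - a * Real.sin (β a)/β' a
        - ∫ s in a..b, Real.sin (β s) * (1/β' s - s * (β'' s / (β' s)^2)) := by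
    intro a b ha hab
    have hzb : ∀ x : ℝ, a₀ ≤ x → (0:ℝ) < x := fun x hx =>
      lt_of_lt_of_le (lt_of_lt_of_le one_pos ha₀1) hx
    have hcont : ContinuousOn (fun s => s * Real.sin (β s) / β' s) (Icc a b) :=
      (((continuousOn_id.mul (hsinc.mono hIciA)).div (hβ'c.mono hIciA)
        (fun x hx => hβ'ne x hx))).mono (hIccA a b ha)
    have hderiv : ∀ x ∈ Ioo a b, HasDerivWithinAt (fun s => s * Real.sin (β s) / β' s)
        (x * Real.cos (β x) + Real.sin (β x) * (1/β' x - x * (β'' x / (β' x)^2))) (Ioi x) x := by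
      intro x hx
      have hxa : a₀ ≤ x := ha.trans (le_of_lt hx.1)
      have hne := hβ'ne x hxa
      have hsin : HasDerivAt (fun s => Real.sin (β s)) (Real.cos (β x) * β' x) x :=
        (Real.hasDerivAt_sin (β x)).comp x (hderβ x (hzb x hxa))
      have hnum : HasDerivAt (fun s => s * Real.sin (β s))
          (1 * Real.sin (β x) + x * (Real.cos (β x) * β' x)) x :=
        (hasDerivAt_id x).mul hsin
      have h := hnum.div (hderβ2 x (hzb x hxa)) hne
      have he : ((1 * Real.sin (β x) + x * (Real.cos (β x) * β' x)) * β' x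
            - x * Real.sin (β x) * β'' x) / β' x ^ 2
          = x * Real.cos (β x) + Real.sin (β x) * (1/β' x - x * (β'' x / (β' x)^2)) := by
        field_simp
        ring
      rw [he] at h
      exact h.hasDerivWithinAt
    have hid : ContinuousOn (fun s : ℝ => s * Real.cos (β s)) (Ici a₀) :=
      continuousOn_id.mul (Real.continuous_cos.comp_continuousOn (hβc.mono hIciA))
    have hFTC := intervalIntegral.integral_eq_sub_of_hasDeriv_right_of_le hab hcont hderiv
      (hintegA _ (hid.add hq3) a b ha hab)
    have hsplit : ∫ s in a..b, (s * Real.cos (β s)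
          + Real.sin (β s) * (1/β' s - s * (β'' s / (β' s)^2)))
        = (∫ s in a..b, s * Real.cos (β s))
          + ∫ s in a..b, Real.sin (β s) * (1/β' s - s * (β'' s / (β' s)^2)) :=
      intervalIntegral.integral_add (hintegA _ hid a b ha hab) (hintegA _ hq3 a b ha hab)
    rw [hsplit] at hFTC
    have : (∫ s in a..b, s * Real.cos (β s))
        = (b * Real.sin (β b) / β' b - a * Real.sin (β a) / β' a)
          - ∫ s in a..b, Real.sin (β s) * (1/β' s - s * (β'' s / (β' s)^2)) := by
      rw [← hFTC]; ring
    rw [this]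

  have habs2 : ∀ x y : ℝ, |x - y| ≤ |x| + |y| := fun x y => by
    rw [sub_eq_add_neg, ← abs_neg y]; exact abs_add_le x (-y)
  have hsinb : ∀ x : ℝ, a₀ ≤ x → |Real.sin (β x) / β' x| ≤ 1 / β' x := by
    intro x hx
    rw [abs_div, abs_of_pos (hβ'pos x hx)]
    exact div_le_div_of_nonneg_right (Real.abs_sin_le_one _) (hβ'pos x hx).le
  have hinvle : ∀ x : ℝ, a₀ ≤ x → 1 / β' x ≤ 1 := fun x hx =>
    (div_le_one (hβ'pos x hx)).mpr (hβ'ge x hx)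
  -- bound on G
  set C : ℝ := |G a₀| + 3 with hCdef
  have hCpos : (0:ℝ) < C := by positivity
  have hGbound : ∀ t : ℝ, a₀ ≤ t → |G t| ≤ C := by
    intro t ht
    have hGsplit : G a₀ + (∫ s in a₀..t, Real.cos (β s)) = G t :=
      intervalIntegral.integral_add_adjacent_intervals
        (hinteg _ hcosc 0 a₀ le_rfl ha₀0) (hinteg _ hcosc a₀ t ha₀0 (ha₀0.trans ht))
    have h1 : |∫ s in a₀..t, Real.sin (β s) * (β'' s / (β' s)^2)| ≤ 1 := by
      have habs := intervalIntegral.abs_integral_le_integral_abs (μ := volume)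
        (f := fun s => Real.sin (β s) * (β'' s / (β' s)^2)) ht
      have hmono2 : (∫ s in a₀..t, |Real.sin (β s) * (β'' s / (β' s)^2)|)
          ≤ ∫ s in a₀..t, β'' s / (β' s)^2 := by
        apply intervalIntegral.integral_mono_on ht
          ((hintegA _ hq1 a₀ t le_rfl ht).abs) (hintegA _ hq0 a₀ t le_rfl ht)
        intro x hx
        rw [abs_mul]
        calc |Real.sin (β x)| * |β'' x / (β' x)^2| ≤ 1 * |β'' x / (β' x)^2| :=
              mul_le_mul_of_nonneg_right (Real.abs_sin_le_one _) (abs_nonneg _)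
          _ = β'' x / (β' x)^2 := by rw [one_mul, abs_of_nonneg (hq0nonneg x hx.1)]
      have hq := keyC a₀ t le_rfl ht
      have h2 : (0:ℝ) < 1 / β' t := one_div_pos.mpr (hβ'pos t ht)
      have h3 := hinvle a₀ le_rfl
      linarith [habs, hmono2, hq ▸ hmono2]
    have hkb := keyB1 a₀ t le_rfl ht
    have h4 := hsinb t ht
    have h5 := hsinb a₀ le_rfl
    have h6 := hinvle t ht
    have h7 := hinvle a₀ le_rfl
    have h8 : |∫ s in a₀..t, Real.cos (β s)| ≤ 3 := by
      rw [hkb]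
      calc |Real.sin (β t) / β' t - Real.sin (β a₀) / β' a₀
            + ∫ s in a₀..t, Real.sin (β s) * (β'' s / (β' s)^2)|
          ≤ |Real.sin (β t) / β' t - Real.sin (β a₀) / β' a₀|
            + |∫ s in a₀..t, Real.sin (β s) * (β'' s / (β' s)^2)| := abs_add_le _ _
        _ ≤ |Real.sin (β t) / β' t| + |Real.sin (β a₀) / β' a₀|
            + |∫ s in a₀..t, Real.sin (β s) * (β'' s / (β' s)^2)| := by
            linarith [habs2 (Real.sin (β t) / β' t) (Real.sin (β a₀) / β' a₀)]
        _ ≤ 3 := by linarith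
    calc |G t| = |G a₀ + ∫ s in a₀..t, Real.cos (β s)| := by rw [hGsplit]
      _ ≤ |G a₀| + |∫ s in a₀..t, Real.cos (β s)| := abs_add_le _ _
      _ ≤ C := by rw [hCdef]; linarith
  -- bound on ∫ s cos β s over [t, t+θ]
  have hidc : ContinuousOn (fun s : ℝ => s * Real.cos (β s)) (Ici 0) :=
    continuousOn_id.mul hcosc
  have hB2 : ∀ t θ : ℝ, a₀ ≤ t → 0 < θ → θ ≤ 1 →
      |∫ s in t..(t+θ), s * Real.cos (β s)| ≤ 8 * t / β' t := by
    intro t θ ht hθ0 hθ1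
    have htθ : t ≤ t + θ := by linarith
    have ht1 : (1:ℝ) ≤ t := ha₀1.trans ht
    have hβ'tpos : 0 < β' t := hβ'pos t ht
    have hβ'le : ∀ x ∈ Icc t (t+θ), β' t ≤ β' x := fun x hx =>
      hβ'mono (hIciA ht) (hIciA (ht.trans hx.1)) hx.1
    have hq := keyC t (t+θ) ht htθ
    -- term 3
    have t3 : |∫ s in t..(t+θ), Real.sin (β s) * (1/β' s - s * (β'' s / (β' s)^2))|
        ≤ θ / β' t + (t + θ) / β' t := by
      have habs := intervalIntegral.abs_integral_le_integral_abs (μ := volume)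
        (f := fun s => Real.sin (β s) * (1/β' s - s * (β'' s / (β' s)^2))) htθ
      have hgcont : ContinuousOn (fun s : ℝ => 1/β' t + s * (β'' s / (β' s)^2)) (Ici a₀) :=
        continuousOn_const.add (continuousOn_id.mul hq0)
      have hptw : (∫ s in t..(t+θ), |Real.sin (β s) * (1/β' s - s * (β'' s / (β' s)^2))|)
          ≤ ∫ s in t..(t+θ), (1/β' t + s * (β'' s / (β' s)^2)) := by
        apply intervalIntegral.integral_mono_on htθ
          ((hintegA _ hq3 t (t+θ) ht htθ).abs) (hintegA _ hgcont t (t+θ) ht htθ)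
        intro x hx
        have hxa : a₀ ≤ x := ht.trans hx.1
        have hxq := hq0nonneg x hxa
        have hx0 : 0 ≤ x := hIciA hxa
        have h1 : 0 ≤ x * (β'' x / (β' x)^2) := mul_nonneg hx0 hxq
        have h2 : (0:ℝ) < 1 / β' x := one_div_pos.mpr (hβ'pos x hxa)
        have h3 : 1 / β' x ≤ 1 / β' t :=
          one_div_le_one_div_of_le hβ'tpos (hβ'le x hx)
        rw [abs_mul]
        calc |Real.sin (β x)| * |1/β' x - x * (β'' x / (β' x)^2)|
            ≤ 1 * |1/β' x - x * (β'' x / (β' x)^2)| :=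
              mul_le_mul_of_nonneg_right (Real.abs_sin_le_one _) (abs_nonneg _)
          _ = |1/β' x - x * (β'' x / (β' x)^2)| := one_mul _
          _ ≤ |1/β' x| + |x * (β'' x / (β' x)^2)| := habs2 _ _
          _ = 1/β' x + x * (β'' x / (β' x)^2) := by
              rw [abs_of_pos h2, abs_of_nonneg h1]
          _ ≤ 1/β' t + x * (β'' x / (β' x)^2) := by linarith
      have hsplit : (∫ s in t..(t+θ), (1/β' t + s * (β'' s / (β' s)^2)))
          = θ * (1/β' t) + ∫ s in t..(t+θ), s * (β'' s / (β' s)^2) := by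
        rw [intervalIntegral.integral_add intervalIntegrable_const
          (hintegA (fun s => s * (β'' s / (β' s)^2)) (continuousOn_id.mul hq0) t (t+θ) ht htθ)]
        rw [intervalIntegral.integral_const]
        simp
      have hsq : (∫ s in t..(t+θ), s * (β'' s / (β' s)^2))
          ≤ (t+θ) * ∫ s in t..(t+θ), β'' s / (β' s)^2 := by
        rw [← intervalIntegral.integral_const_mul]
        apply intervalIntegral.integral_mono_on htθ
          (hintegA (fun s => s * (β'' s / (β' s)^2)) (continuousOn_id.mul hq0) t (t+θ) ht htθ)
          (hintegA _ (continuousOn_const.mul hq0) t (t+θ) ht htθ)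
        intro x hx
        exact mul_le_mul_of_nonneg_right hx.2 (hq0nonneg x (ht.trans hx.1))
      have h2 : (0:ℝ) < 1 / β' (t+θ) := one_div_pos.mpr (hβ'pos (t+θ) (ht.trans htθ))
      have h3 : (0:ℝ) < t + θ := by linarith
      have h5 : (t+θ) * (∫ s in t..(t+θ), β'' s / (β' s)^2) ≤ (t+θ) * (1/β' t) := by
        apply mul_le_mul_of_nonneg_left _ (le_of_lt h3)
        rw [hq]; linarith
      have h6 : θ * (1/β' t) = θ / β' t := by ring
      have h7 : (t+θ) * (1/β' t) = (t+θ) / β' t := by ring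
      linarith
    have t1 : |(t+θ) * Real.sin (β (t+θ)) / β' (t+θ)| ≤ (t+θ) / β' t := by
      rw [abs_div, abs_mul, abs_of_pos (hβ'pos (t+θ) (ht.trans htθ))]
      apply div_le_div₀ (by positivity)
      · calc |t+θ| * |Real.sin (β (t+θ))| ≤ |t+θ| * 1 :=
            mul_le_mul_of_nonneg_left (Real.abs_sin_le_one _) (abs_nonneg _)
          _ = t+θ := by rw [mul_one, abs_of_pos (by linarith : (0:ℝ) < t+θ)]
      · exact hβ'tpos
      · exact hβ'le (t+θ) ⟨htθ, le_rfl⟩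
    have t2 : |t * Real.sin (β t) / β' t| ≤ t / β' t := by
      rw [abs_div, abs_mul, abs_of_pos hβ'tpos]
      apply div_le_div_of_nonneg_right _ hβ'tpos.le
      calc |t| * |Real.sin (β t)| ≤ |t| * 1 :=
            mul_le_mul_of_nonneg_left (Real.abs_sin_le_one _) (abs_nonneg _)
        _ = t := by rw [mul_one, abs_of_pos (by linarith : (0:ℝ) < t)]
    rw [keyB2 t (t+θ) ht htθ]
    calc |(t+θ) * Real.sin (β (t+θ)) / β' (t+θ) - t * Real.sin (β t) / β' t
          - ∫ s in t..(t+θ), Real.sin (β s) * (1/β' s - s * (β'' s / (β' s)^2))|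
        ≤ |(t+θ) * Real.sin (β (t+θ)) / β' (t+θ) - t * Real.sin (β t) / β' t|
          + |∫ s in t..(t+θ), Real.sin (β s) * (1/β' s - s * (β'' s / (β' s)^2))| := habs2 _ _
      _ ≤ |(t+θ) * Real.sin (β (t+θ)) / β' (t+θ)| + |t * Real.sin (β t) / β' t|
          + |∫ s in t..(t+θ), Real.sin (β s) * (1/β' s - s * (β'' s / (β' s)^2))| := by
          linarith [habs2 ((t+θ) * Real.sin (β (t+θ)) / β' (t+θ)) (t * Real.sin (β t) / β' t)]
      _ ≤ (t+θ)/β' t + t/β' t + (θ/β' t + (t+θ)/β' t) := by linarith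
      _ = (3*t + 3*θ)/β' t := by field_simp; ring
      _ ≤ 8 * t / β' t := by
          apply div_le_div_of_nonneg_right _ hβ'tpos.le
          linarith

  -- primitive F of f
  set F : ℝ → ℝ := fun s => ∫ u in (0:ℝ)..s, f u with hFdef
  have hFc : ∀ b : ℝ, 0 ≤ b → ContinuousOn F (Icc 0 b) := by
    intro b hb
    have huI : uIcc (0:ℝ) b = Icc 0 b := uIcc_of_le hb
    rw [← huI]
    exact intervalIntegral.continuousOn_primitive_interval
      ((hfc.mono (hsub 0 b le_rfl hb)).integrableOn_compact (by rw [huI]; exact isCompact_Icc))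
  constructor
  · -- Part 1
    intro θ hθ
    obtain ⟨hθ0, hθ1⟩ := hθ
    set D : ℝ := |∫ s in (0:ℝ)..θ, F s| with hDdef
    apply squeeze_zero_norm' (a := fun t => 8 / β' t + (C + D) / t)
    · filter_upwards [eventually_ge_atTop a₀] with t ht
      have ht0 : (0:ℝ) < t := lt_of_lt_of_le (lt_of_lt_of_le one_pos ha₀1) ht
      have htθ : t ≤ t + θ := by linarith
      have htθ0 : (0:ℝ) ≤ t + θ := by linarith
      have hθt : θ ≤ t := hθ1.trans (ha₀1.trans ht)
      have hFint : ∀ u v : ℝ, 0 ≤ u → u ≤ v → v ≤ t + θ →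
          IntervalIntegrable F volume u v := by
        intro u v hu huv hv
        apply ((hFc (t+θ) htθ0).mono ?_).intervalIntegrable
        rw [uIcc_of_le huv]
        exact fun x hx => ⟨hu.trans hx.1, hx.2.trans hv⟩
      have hE1 : (∫ s in (0:ℝ)..t, ∫ u in s..(s+θ), f u)
          = ∫ s in (0:ℝ)..t, (F (s+θ) - F s) := by
        apply intervalIntegral.integral_congr
        intro s hs
        rw [uIcc_of_le ht0.le] at hs
        have hs0 : (0:ℝ) ≤ s := hs.1
        exact (intervalIntegral.integral_interval_sub_left
          (hinteg f hfc 0 (s+θ) le_rfl (by linarith)) (hinteg f hfc 0 s le_rfl hs0)).symm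
      have hFshift : IntervalIntegrable (fun s => F (s+θ)) volume 0 t := by
        have := (hFint θ (t+θ) hθ0.le (by linarith) le_rfl).comp_add_right θ
        simpa using this
      have hE2 : (∫ s in (0:ℝ)..t, (F (s+θ) - F s))
          = (∫ s in (0:ℝ)..t, F (s+θ)) - ∫ s in (0:ℝ)..t, F s :=
        intervalIntegral.integral_sub hFshift (hFint 0 t le_rfl ht0.le (by linarith))
      have hE3 : (∫ s in (0:ℝ)..t, F (s+θ)) = ∫ s in θ..(t+θ), F s := by
        rw [intervalIntegral.integral_comp_add_right F θ, zero_add]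
      have hE4 : (∫ s in θ..t, F s) + (∫ s in t..(t+θ), F s) = ∫ s in θ..(t+θ), F s :=
        intervalIntegral.integral_add_adjacent_intervals
          (hFint θ t hθ0.le hθt (by linarith)) (hFint t (t+θ) ht0.le htθ le_rfl)
      have hE5 : (∫ s in (0:ℝ)..θ, F s) + (∫ s in θ..t, F s) = ∫ s in (0:ℝ)..t, F s :=
        intervalIntegral.integral_add_adjacent_intervals
          (hFint 0 θ le_rfl hθ0.le (by linarith)) (hFint θ t hθ0.le hθt (by linarith))
      have hE : (∫ s in (0:ℝ)..t, ∫ u in s..(s+θ), f u)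
          = (∫ s in t..(t+θ), F s) - ∫ s in (0:ℝ)..θ, F s := by
        rw [hE1, hE2, hE3, ← hE4, ← hE5]; ring
      -- split ∫ F over [t, t+θ]
      have hFsplit : (∫ s in t..(t+θ), F s)
          = -(∫ s in t..(t+θ), s * Real.cos (β s)) + ∫ s in t..(t+θ), G s := by
        have hcg : (∫ s in t..(t+θ), F s)
            = ∫ s in t..(t+θ), (-(s * Real.cos (β s)) + G s) := by
          apply intervalIntegral.integral_congr
          intro s hs
          rw [uIcc_of_le htθ] at hs
          have hs0 : (0:ℝ) ≤ s := ht0.le.trans hs.1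
          rw [hFdef]
          simp only []
          rw [keyA s hs0]; ring
        rw [hcg, intervalIntegral.integral_add, intervalIntegral.integral_neg]
        · exact ((hidc.mono (hsub t (t+θ) ht0.le htθ0)).intervalIntegrable).neg
        · apply ContinuousOn.intervalIntegrable
          apply (hGc (t+θ) htθ0).mono
          rw [uIcc_of_le htθ]
          exact fun x hx => ⟨ht0.le.trans hx.1, hx.2⟩
      have hGint : |∫ s in t..(t+θ), G s| ≤ C := by
        have := intervalIntegral.norm_integral_le_of_norm_le_const (C := C)
          (f := G) (a := t) (b := t+θ) ?_
        · rw [Real.norm_eq_abs] at this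
          have h9 : |t + θ - t| = θ := by rw [abs_of_pos (by linarith : (0:ℝ) < t+θ-t)]; ring
          rw [h9] at this
          nlinarith
        · intro x hx
          rw [uIoc_of_le htθ] at hx
          rw [Real.norm_eq_abs]
          exact hGbound x (ht.trans hx.1.le)
      have hB := hB2 t θ ht hθ0 hθ1
      have hEbound : |∫ s in (0:ℝ)..t, ∫ u in s..(s+θ), f u| ≤ 8 * t / β' t + (C + D) := by
        rw [hE]
        calc |(∫ s in t..(t+θ), F s) - ∫ s in (0:ℝ)..θ, F s|
            ≤ |∫ s in t..(t+θ), F s| + D := habs2 _ _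
          _ ≤ 8 * t / β' t + C + D := by
              rw [hFsplit]
              have := abs_add_le (-(∫ s in t..(t+θ), s * Real.cos (β s))) (∫ s in t..(t+θ), G s)
              rw [abs_neg] at this
              linarith
          _ = 8 * t / β' t + (C + D) := by ring
      rw [Real.norm_eq_abs, abs_mul, abs_of_pos (by positivity : (0:ℝ) < 1/t)]
      have hβ'tpos : 0 < β' t := hβ'pos t ht
      calc (1/t) * |∫ s in (0:ℝ)..t, ∫ u in s..(s+θ), f u|
          ≤ (1/t) * (8 * t / β' t + (C + D)) :=
            mul_le_mul_of_nonneg_left hEbound (by positivity)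
        _ = 8 / β' t + (C + D) / t := by
            have hne1 : t ≠ 0 := ne_of_gt ht0
            have hne2 : (β' t) ≠ 0 := ne_of_gt hβ'tpos
            field_simp
    · have h1 : Tendsto (fun t => 8 / β' t) atTop (𝓝 0) := by
        simpa [div_eq_mul_inv] using (hβ'_inf.inv_tendsto_atTop.const_mul (8:ℝ))
      have h2 : Tendsto (fun t : ℝ => (C + D) / t) atTop (𝓝 0) :=
        tendsto_const_nhds.div_atTop tendsto_id
      simpa using h1.add h2
  · -- Part 2
    rintro ⟨L, hL⟩
    have hGz : Tendsto (fun t => (1/t) * G t) atTop (𝓝 0) := by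
      apply squeeze_zero_norm' (a := fun t => C / t)
      · filter_upwards [eventually_ge_atTop a₀] with t ht
        have ht0 : (0:ℝ) < t := lt_of_lt_of_le (lt_of_lt_of_le one_pos ha₀1) ht
        rw [Real.norm_eq_abs, abs_mul, abs_of_pos (by positivity : (0:ℝ) < 1/t)]
        calc (1/t) * |G t| ≤ (1/t) * C :=
            mul_le_mul_of_nonneg_left (hGbound t ht) (by positivity)
          _ = C / t := by ring
      · exact tendsto_const_nhds.div_atTop tendsto_id
    have hcoseq : ∀ᶠ t in atTop, (1/t) * G t - (1/t) * ∫ s in (0:ℝ)..t, f s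
        = Real.cos (β t) := by
      filter_upwards [eventually_ge_atTop a₀] with t ht
      have ht0 : (0:ℝ) < t := lt_of_lt_of_le (lt_of_lt_of_le one_pos ha₀1) ht
      rw [keyA t ht0.le]
      have hne1 : t ≠ 0 := ne_of_gt ht0
      field_simp
      ring
    have hcoslim : Tendsto (fun t => Real.cos (β t)) atTop (𝓝 (0 - L)) :=
      (hGz.sub hL).congr' hcoseq
    have hex : ∀ c : ℝ, (∀ k : ℕ, Real.cos ((k:ℝ) * (2 * Real.pi) + c) = Real.cos c) →
        ∀ n : ℕ, ∃ t : ℝ, (n:ℝ) ≤ t ∧ Real.cos (β t) = Real.cos c := by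
      intro c hc n
      have hc0 : 0 ≤ c → True := fun _ => trivial
      obtain ⟨k, hk⟩ := exists_nat_ge ((β n - c) / (2 * Real.pi))
      have h2π : (0:ℝ) < 2 * Real.pi := by positivity
      have hkβ : β n ≤ (k:ℝ) * (2 * Real.pi) + c := by
        have := (div_le_iff₀ h2π).mp hk
        linarith
      obtain ⟨b, hb1, hb2⟩ :=
        ((hβ_inf.eventually_ge_atTop ((k:ℝ) * (2 * Real.pi) + c)).and
          (eventually_ge_atTop (n:ℝ))).exists
      have hncast : (0:ℝ) ≤ (n:ℝ) := Nat.cast_nonneg n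
      obtain ⟨t, htmem, hβt⟩ := intermediate_value_Icc hb2 (hβc.mono (hIcc _ b hncast))
        (⟨hkβ, hb1⟩ : (k:ℝ) * (2 * Real.pi) + c ∈ Icc (β n) (β b))
      exact ⟨t, htmem.1, by rw [hβt, hc k]⟩
    have hex1 := hex 0 (fun k => by
      simpa using Real.cos_nat_mul_two_pi k)
    have hex2 := hex Real.pi (fun k => by rw [Real.cos_nat_mul_two_pi_add_pi, Real.cos_pi])
    choose u hu hcosu using hex1
    choose v hv hcosv using hex2
    have hulim : Tendsto u atTop atTop :=
      tendsto_atTop_mono hu tendsto_natCast_atTop_atTop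
    have hvlim : Tendsto v atTop atTop :=
      tendsto_atTop_mono hv tendsto_natCast_atTop_atTop
    have h1 : (0:ℝ) - L = 1 := by
      refine tendsto_nhds_unique ((hcoslim.comp hulim).congr ?_) tendsto_const_nhds
      intro n
      simp only [Function.comp_apply, hcosu n, Real.cos_zero]
    have h2 : (0:ℝ) - L = -1 := by
      refine tendsto_nhds_unique ((hcoslim.comp hvlim).congr ?_) tendsto_const_nhds
      intro n
      simp only [Function.comp_apply, hcosv n, Real.cos_pi]
    linarith
end

section
/- Let k ∈ L¹([0,∞);ℝ) and suppose its integral resolvent r_k, i.e. the function satisfying r_k(t) = k(t) + ∫₀ᵗ r_k(t−s) k(s) ds for almost every t ≥ 0, satisfies r_k ∈ L¹([0,∞);ℝ). Let f : [0,∞) → ℝ be locally integrable and define x(t) = f(t) + ∫₀ᵗ r_k(t−s) f(s) ds. Then x has a Cesàro limit if and only if f has a Cesàro limit; moreover, if (1/t)∫₀ᵗ f(s) ds → L as t → ∞ then (1/t)∫₀ᵗ x(s) ds → L·(1 + ∫₀^∞ r_k(s) ds) as t → ∞. -/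
/-!
Write `F` and `X` for the primitives of `f` and `x`, and `a ∗ b` for the Volterra convolution
`t ↦ ∫₀ᵗ a(t - s) b(s) ds`. Fubini turns `x = f + r_k ∗ f` into `X = F + F ∗ r_k`, and the
resolvent equation `r_k = k + r_k ∗ k` inverts this to `F = X - X ∗ k`. If `G` is continuous with
`G(t)/t → L` and `h ∈ L¹(0, ∞)`, dominated convergence gives `(G ∗ h)(t)/t → L ∫₀^∞ h`; applied
to the first identity this yields the Cesàro limit of `x`, applied to the second that of `f`.
-/

open MeasureTheory Filter Set
open scoped Topology

section

variable {E : Type*} [NormedAddCommGroup E]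

theorem MeasureTheory.LocallyIntegrableOn.locallyIntegrable_indicator {X : Type*}
    [TopologicalSpace X] [MeasurableSpace X] [OpensMeasurableSpace X] [LocallyCompactSpace X]
    {μ : Measure X} {f : X → E} {s : Set X} (hf : LocallyIntegrableOn f s μ) (hs : IsClosed s) :
    LocallyIntegrable (s.indicator f) μ :=
  locallyIntegrable_iff.2 fun _ hK => (integrableOn_indicator_iff hs.measurableSet).2
    (hf.integrableOn_compact_subset inter_subset_left (hK.inter_left hs))

theorem MeasureTheory.LocallyIntegrableOn.intervalIntegrable_Ici {f : ℝ → E} {c t : ℝ}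
    (hf : LocallyIntegrableOn f (Ici c)) (ht : c ≤ t) : IntervalIntegrable f volume c t :=
  (intervalIntegrable_iff_integrableOn_Icc_of_le ht).2
    (hf.integrableOn_compact_subset Icc_subset_Ici_self isCompact_Icc)

theorem locallyIntegrableOn_Ici_of_integrableOn_Ioc {f : ℝ → E} {c : ℝ}
    (hf : ∀ t, IntegrableOn f (Ioc c t)) : LocallyIntegrableOn f (Ici c) := by
  refine (locallyIntegrableOn_iff isClosed_Ici.isLocallyClosed).2 fun K hKc hK => ?_
  obtain ⟨T, hT⟩ := hK.bddAbove
  exact (integrableOn_Icc_iff_integrableOn_Ioc (f := f)).2 (hf T) |>.mono_set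
    fun u hu => ⟨hKc hu, hT hu⟩

theorem continuousOn_primitive_Ici [NormedSpace ℝ E] {f : ℝ → E} {c : ℝ}
    (hf : LocallyIntegrableOn f (Ici c)) :
    ContinuousOn (fun t => ∫ s in c..t, f s) (Ici c) := fun t (ht : c ≤ t) => by
  have hcont := intervalIntegral.continuousOn_primitive_interval'
    (hf.intervalIntegrable_Ici (by linarith : c ≤ t + 1)) left_mem_uIcc
  rw [uIcc_of_le (by linarith)] at hcont
  refine (hcont t ⟨ht, by linarith⟩).mono_of_mem_nhdsWithin ?_
  rw [← Ici_inter_Iic]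
  exact inter_mem_nhdsWithin _ (Iic_mem_nhds (by linarith))

end

noncomputable def causalConv (a b : ℝ → ℝ) (t : ℝ) : ℝ := ∫ s in (0:ℝ)..t, a (t - s) * b s

infixl:70 " ∗ " => causalConv

section

variable {a a' b b' A B W : ℝ → ℝ} {t : ℝ}

theorem causalConv_comm (a b : ℝ → ℝ) : a ∗ b = b ∗ a := by
  funext t
  simpa [causalConv, mul_comm] using
    (intervalIntegral.integral_comp_sub_left (fun s => a s * b (t - s)) t (a := 0) (b := t))

theorem causalConv_congr (ha : EqOn a a' (Ici 0)) (hb : EqOn b b' (Ici 0)) :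
    EqOn (a ∗ b) (a' ∗ b') (Ici 0) := fun t (ht : 0 ≤ t) =>
  intervalIntegral.integral_congr fun s hs => by
    rw [uIcc_of_le ht] at hs
    simp only [ha (sub_nonneg.2 hs.2 : 0 ≤ t - s), hb hs.1]

theorem causalConv_congr_ae_right (hb : b =ᵐ[volume.restrict (Ici 0)] b') :
    EqOn (a ∗ b) (a ∗ b') (Ici 0) := fun t (ht : 0 ≤ t) => by
  refine intervalIntegral.integral_congr_ae ?_
  filter_upwards [(ae_restrict_iff' measurableSet_Ici).1 hb] with s hs hst
  rw [uIoc_of_le ht] at hst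
  rw [hs hst.1.le]

theorem intervalIntegrable_causalConv_integrand (ha : ContinuousOn a (Ici 0))
    (hb : LocallyIntegrableOn b (Ici 0)) (ht : 0 ≤ t) :
    IntervalIntegrable (fun s => a (t - s) * b s) volume 0 t :=
  (hb.intervalIntegrable_Ici ht).continuousOn_mul <| ha.comp (by fun_prop) fun s hs => by
    rw [uIcc_of_le ht] at hs
    exact sub_nonneg.2 hs.2

theorem causalConv_add_left (ha : ContinuousOn a (Ici 0)) (ha' : ContinuousOn a' (Ici 0))
    (hb : LocallyIntegrableOn b (Ici 0)) (ht : 0 ≤ t) :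
    ((a + a') ∗ b) t = (a ∗ b) t + (a' ∗ b) t := by
  simp only [causalConv, Pi.add_apply, add_mul]
  exact intervalIntegral.integral_add (intervalIntegrable_causalConv_integrand ha hb ht)
    (intervalIntegrable_causalConv_integrand ha' hb ht)

theorem causalConv_add_right (ha : ContinuousOn a (Ici 0)) (hb : LocallyIntegrableOn b (Ici 0))
    (hb' : LocallyIntegrableOn b' (Ici 0)) (ht : 0 ≤ t) :
    (a ∗ (b + b')) t = (a ∗ b) t + (a ∗ b') t := by
  simp only [causalConv, Pi.add_apply, mul_add]
  exact intervalIntegral.integral_add (intervalIntegrable_causalConv_integrand ha hb ht)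
    (intervalIntegrable_causalConv_integrand ha hb' ht)

theorem causalConv_eq_intervalIntegral (hA : ∀ u < 0, A u = 0) (φ : ℝ → ℝ) {c : ℝ}
    (hc : 0 ≤ c) (hct : c ≤ t) : (A ∗ φ) c = ∫ s in (0:ℝ)..t, A (c - s) * φ s := by
  have hvanish : EqOn (fun s => A (c - s) * φ s)
      ((Ioc 0 c).indicator fun s => A (c - s) * φ s) (Ioc 0 t) := fun s hs => by
    by_cases hsc : s ≤ c
    · exact (indicator_of_mem (show s ∈ Ioc (0:ℝ) c from ⟨hs.1, hsc⟩)
        (fun s => A (c - s) * φ s)).symm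
    · rw [indicator_of_notMem fun h => hsc h.2]
      simp only [hA (c - s) (by linarith), zero_mul]
  rw [causalConv, intervalIntegral.integral_of_le hc,
    intervalIntegral.integral_of_le (hc.trans hct),
    setIntegral_congr_fun measurableSet_Ioc hvanish, setIntegral_indicator measurableSet_Ioc,
    inter_eq_right.2 (Ioc_subset_Ioc_right hct)]

theorem integrable_causalConv_kernel (hA : LocallyIntegrable A) (hB : LocallyIntegrable B)
    (hW : Continuous W) (t : ℝ) :
    Integrable (fun p : ℝ × ℝ => A (p.1 - p.2) * B p.2 * W (t - p.1))
      ((volume.restrict (Ioc 0 t)).prod (volume.restrict (Ioc 0 t))) := by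
  -- On the square `p.1 - p.2 ∈ [-t, t]`, so truncating `A` there changes nothing and makes
  -- Mathlib's integrability of convolution integrands applicable.
  have hA' : Integrable ((Icc (-t) t).indicator A) :=
    (integrable_indicator_iff measurableSet_Icc).2 (hA.integrableOn_isCompact isCompact_Icc)
  have hB' : IntegrableOn B (Ioc 0 t) :=
    (hB.integrableOn_isCompact isCompact_Icc).mono_set Ioc_subset_Icc_self
  have hAB := (hB'.convolution_integrand (ContinuousLinearMap.mul ℝ ℝ) hA').restrict
    (s := Ioc 0 t ×ˢ univ)
  rw [← Measure.restrict_prod_eq_prod_univ] at hAB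
  obtain ⟨C, hC⟩ := isCompact_Icc.exists_bound_of_continuousOn (hW.continuousOn (s := Icc 0 t))
  have hsquare : ∀ᵐ p ∂(volume.restrict (Ioc 0 t)).prod (volume.restrict (Ioc 0 t)),
      p ∈ Ioc (0:ℝ) t ×ˢ Ioc 0 t := by
    rw [Measure.prod_restrict]
    exact ae_restrict_mem (measurableSet_Ioc.prod measurableSet_Ioc)
  refine (hAB.mul_bdd (g := fun p => W (t - p.1)) (c := C)
    (hW.comp (by fun_prop)).aestronglyMeasurable ?_).congr ?_
  · filter_upwards [hsquare] with p hp
    exact hC _ ⟨by linarith [hp.1.2], by linarith [hp.1.1]⟩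
  · filter_upwards [hsquare] with p hp
    have hmem : p.1 - p.2 ∈ Icc (-t) t :=
      ⟨by linarith [hp.1.1, hp.2.2], by linarith [hp.1.2, hp.2.1]⟩
    simp only [ContinuousLinearMap.mul_apply', indicator_of_mem hmem]
    ring

theorem causalConv_right_comm_of_causal (hA : LocallyIntegrable A) (hA0 : ∀ u < 0, A u = 0)
    (hB : LocallyIntegrable B) (hW : Continuous W) (ht : 0 ≤ t) :
    ((A ∗ B) ∗ W) t = ((A ∗ W) ∗ B) t := by
  have hlhs : ((A ∗ B) ∗ W) t = ∫ a in Ioc 0 t, ∫ b in Ioc 0 t, A (a - b) * B b * W (t - a) := by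
    rw [causalConv_comm (A ∗ B) W, causalConv, intervalIntegral.integral_of_le ht]
    refine setIntegral_congr_fun measurableSet_Ioc fun a ha => ?_
    rw [causalConv_eq_intervalIntegral hA0 B ha.1.le ha.2, intervalIntegral.integral_of_le ht,
      ← integral_const_mul]
    exact setIntegral_congr_fun measurableSet_Ioc fun b _ => by ring
  have hrhs : ((A ∗ W) ∗ B) t = ∫ b in Ioc 0 t, ∫ a in Ioc 0 t, A (a - b) * B b * W (t - a) := by
    rw [causalConv, intervalIntegral.integral_of_le ht]
    refine setIntegral_congr_fun measurableSet_Ioc fun b hb => ?_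
    have hreflect := intervalIntegral.integral_comp_sub_left
      (fun s => A (t - b - s) * W s) t (a := 0) (b := t)
    simp only [sub_self, sub_zero, sub_sub_sub_cancel_left] at hreflect
    rw [causalConv_eq_intervalIntegral hA0 W (sub_nonneg.2 hb.2) (sub_le_self t hb.1.le),
      ← hreflect, intervalIntegral.integral_of_le ht, ← integral_mul_const]
    exact setIntegral_congr_fun measurableSet_Ioc fun a _ => by ring
  rw [hlhs, hrhs, integral_integral_swap (integrable_causalConv_kernel hA hB hW t)]

theorem integrableOn_causalConv_of_causal (hA : LocallyIntegrable A) (hA0 : ∀ u < 0, A u = 0)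
    (hB : LocallyIntegrable B) (t : ℝ) : IntegrableOn (A ∗ B) (Ioc 0 t) := by
  refine IntegrableOn.congr_fun
    (integrable_causalConv_kernel hA hB continuous_const t (W := fun _ => 1)).integral_prod_left
    (fun a ha => ?_) measurableSet_Ioc
  rw [causalConv_eq_intervalIntegral hA0 B ha.1.le ha.2,
    intervalIntegral.integral_of_le (ha.1.le.trans ha.2)]
  simp only [mul_one]

theorem MeasureTheory.LocallyIntegrableOn.causalConv (hA : LocallyIntegrableOn A (Ici 0))
    (hB : LocallyIntegrableOn B (Ici 0)) : LocallyIntegrableOn (A ∗ B) (Ici 0) := by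
  have hcausal := locallyIntegrableOn_Ici_of_integrableOn_Ioc <| integrableOn_causalConv_of_causal
    (hA.locallyIntegrable_indicator isClosed_Ici) (fun u hu => indicator_of_notMem (not_le.2 hu) A)
    (hB.locallyIntegrable_indicator isClosed_Ici)
  exact hcausal.congr <| ae_restrict_of_forall_mem measurableSet_Ici <|
    causalConv_congr eqOn_indicator eqOn_indicator

theorem causalConv_right_comm (hA : LocallyIntegrableOn A (Ici 0))
    (hB : LocallyIntegrableOn B (Ici 0)) (hW : ContinuousOn W (Ici 0)) :
    EqOn ((A ∗ B) ∗ W) ((A ∗ W) ∗ B) (Ici 0) := by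
  set A' := (Ici 0).indicator A
  set B' := (Ici 0).indicator B
  set W' := fun u => W (max u 0)
  have hAA' : EqOn A A' (Ici 0) := eqOn_indicator.symm
  have hBB' : EqOn B B' (Ici 0) := eqOn_indicator.symm
  have hWW' : EqOn W W' (Ici 0) := fun u (hu : 0 ≤ u) => by simp only [W', max_eq_left hu]
  intro t ht
  calc ((A ∗ B) ∗ W) t = ((A' ∗ B') ∗ W') t := causalConv_congr (causalConv_congr hAA' hBB') hWW' ht
    _ = ((A' ∗ W') ∗ B') t :=
      causalConv_right_comm_of_causal (hA.locallyIntegrable_indicator isClosed_Ici)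
        (fun u hu => indicator_of_notMem (not_le.2 hu) A)
        (hB.locallyIntegrable_indicator isClosed_Ici)
        (hW.comp_continuous (by fun_prop) fun u => le_max_right u 0) ht
    _ = ((A ∗ W) ∗ B) t := (causalConv_congr (causalConv_congr hAA' hWW') hBB' ht).symm

theorem intervalIntegral_causalConv (ha : LocallyIntegrableOn a (Ici 0))
    (hb : LocallyIntegrableOn b (Ici 0)) (ht : 0 ≤ t) :
    ∫ s in (0:ℝ)..t, (a ∗ b) s = ((fun u => ∫ s in (0:ℝ)..u, a s) ∗ b) t := by
  have hprim : ∀ c : ℝ → ℝ, (fun u => ∫ s in (0:ℝ)..u, c s) = (fun _ => 1) ∗ c := fun c => by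
    funext u
    simp only [causalConv, one_mul]
  rw [hprim, congrFun (hprim (a ∗ b)) t, causalConv_comm (fun _ => 1) (a ∗ b),
    causalConv_comm (fun _ => 1) a]
  exact causalConv_right_comm ha hb continuousOn_const ht

theorem eqOn_primitive_add_causalConv {f r x : ℝ → ℝ} (hf : LocallyIntegrableOn f (Ici 0))
    (hr : LocallyIntegrableOn r (Ici 0)) (hx : EqOn x (f + f ∗ r) (Ici 0)) :
    EqOn (fun t => ∫ s in (0:ℝ)..t, x s)
      ((fun t => ∫ s in (0:ℝ)..t, f s) + (fun t => ∫ s in (0:ℝ)..t, f s) ∗ r) (Ici 0) :=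
  fun t (ht : 0 ≤ t) => by
    rw [Pi.add_apply, ← intervalIntegral_causalConv hf hr ht,
      ← intervalIntegral.integral_add (hf.intervalIntegrable_Ici ht)
        ((hf.causalConv hr).intervalIntegrable_Ici ht)]
    refine intervalIntegral.integral_congr (hx.mono ?_)
    rw [uIcc_of_le ht]
    exact Icc_subset_Ici_self

theorem eqOn_sub_causalConv_of_resolvent {k r F X : ℝ → ℝ} (hk : LocallyIntegrableOn k (Ici 0))
    (hr : LocallyIntegrableOn r (Ici 0)) (hres : r =ᵐ[volume.restrict (Ici 0)] k + r ∗ k)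
    (hF : ContinuousOn F (Ici 0)) (hX : ContinuousOn X (Ici 0))
    (hXF : EqOn X (F + F ∗ r) (Ici 0)) : EqOn F (X - X ∗ k) (Ici 0) := by
  have hFr : ContinuousOn (F ∗ r) (Ici 0) :=
    (hX.sub hF).congr fun t ht => by simp [hXF ht]
  intro t ht
  have hFr_eq : (F ∗ r) t = (F ∗ k) t + ((F ∗ r) ∗ k) t := by
    rw [causalConv_congr_ae_right hres ht, causalConv_add_right hF hk (hr.causalConv hk) ht,
      causalConv_comm F (r ∗ k), causalConv_right_comm hr hk hF ht, causalConv_comm r F]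
  have hXk_eq : (X ∗ k) t = (F ∗ k) t + ((F ∗ r) ∗ k) t := by
    rw [causalConv_congr hXF (eqOn_refl k _) ht, causalConv_add_left hF hFr hk ht]
  simp only [Pi.sub_apply, hXF ht, Pi.add_apply, hXk_eq, hFr_eq]
  ring

end

theorem exists_abs_le_mul_one_add_of_tendsto_div {G : ℝ → ℝ} {L : ℝ} (hG : ContinuousOn G (Ici 0))
    (hGL : Tendsto (fun t => (1/t) * G t) atTop (𝓝 L)) :
    ∃ D, ∀ s, 0 ≤ s → |G s| ≤ D * (1 + s) := by
  obtain ⟨T, hT⟩ := eventually_atTop.1 <| hGL.abs.eventually (gt_mem_nhds (lt_add_one |L|))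
  obtain ⟨C, hC⟩ := isCompact_Icc.exists_bound_of_continuousOn
    (hG.mono (Icc_subset_Ici_self : Icc 0 (max T 1) ⊆ Ici 0))
  refine ⟨max C (|L| + 1), fun s hs => ?_⟩
  have hD : 0 ≤ max C (|L| + 1) := (by positivity : (0:ℝ) ≤ |L| + 1).trans (le_max_right _ _)
  rcases le_or_gt s (max T 1) with hsT | hsT
  · calc |G s| ≤ C := hC s ⟨hs, hsT⟩
      _ ≤ max C (|L| + 1) * 1 := by rw [mul_one]; exact le_max_left _ _
      _ ≤ max C (|L| + 1) * (1 + s) := by gcongr; linarith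
  · have hs1 : 1 < s := (le_max_right T 1).trans_lt hsT
    have hGs := hT s ((le_max_left T 1).trans hsT.le)
    rw [abs_mul, abs_of_pos (by positivity : 0 < 1 / s), one_div, inv_mul_lt_iff₀ (by linarith)]
      at hGs
    calc |G s| ≤ s * (|L| + 1) := hGs.le
      _ ≤ max C (|L| + 1) * (1 + s) := by
        rw [mul_comm]; gcongr
        · exact le_max_right _ _
        · linarith

theorem tendsto_comp_sub_div {G : ℝ → ℝ} {L : ℝ} (hGL : Tendsto (fun t => (1/t) * G t) atTop (𝓝 L))
    (s : ℝ) : Tendsto (fun t => G (t - s) / t) atTop (𝓝 L) := by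
  have hshift : Tendsto (fun t => (1 / (t - s)) * G (t - s)) atTop (𝓝 L) :=
    hGL.comp (tendsto_atTop_add_const_right _ (-s) tendsto_id)
  have hratio : Tendsto (fun t => 1 - s / t) atTop (𝓝 1) := by
    simpa using (tendsto_const_nhds (x := (1:ℝ))).sub
      ((tendsto_const_nhds (x := s)).div_atTop tendsto_id)
  refine (by simpa using hshift.mul hratio : Tendsto _ _ (𝓝 L)).congr' ?_
  filter_upwards [eventually_gt_atTop (max s 0)] with t ht
  have ht0 : t ≠ 0 := ((le_max_right s 0).trans_lt ht).ne'
  have hts : t - s ≠ 0 := sub_ne_zero.2 ((le_max_left s 0).trans_lt ht).ne'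
  field_simp

theorem tendsto_causalConv_div {G h : ℝ → ℝ} {L : ℝ} (hG : ContinuousOn G (Ici 0))
    (hGL : Tendsto (fun t => (1/t) * G t) atTop (𝓝 L)) (hh : IntegrableOn h (Ici 0)) :
    Tendsto (fun t => (1/t) * (G ∗ h) t) atTop (𝓝 (L * ∫ s in Ici 0, h s)) := by
  set G' := fun u => G (max u 0)
  have hG' : Continuous G' := hG.comp_continuous (by fun_prop) fun u => le_max_right u 0
  have hGG' : EqOn G G' (Ici 0) := fun u (hu : 0 ≤ u) => by simp only [G', max_eq_left hu]
  obtain ⟨D, hD⟩ := exists_abs_le_mul_one_add_of_tendsto_div hG hGL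
  have hD0 : 0 ≤ D := by simpa using (abs_nonneg _).trans (hD 0 le_rfl)
  set Φ : ℝ → ℝ → ℝ := fun t => (Iic t).indicator fun s => G' (t - s) / t * h s
  have hΦ : ∀ t, 0 ≤ t → ∫ s in Ici 0, Φ t s = (1/t) * (G ∗ h) t := fun t ht => by
    rw [setIntegral_indicator measurableSet_Iic, Ici_inter_Iic, integral_Icc_eq_integral_Ioc,
      causalConv_congr hGG' (eqOn_refl h _) ht, causalConv, intervalIntegral.integral_of_le ht,
      ← integral_const_mul]
    exact setIntegral_congr_fun measurableSet_Ioc fun s _ => by ring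
  rw [← integral_const_mul]
  refine (tendsto_integral_filter_of_dominated_convergence (l := atTop) (F := Φ)
    (f := fun s => L * h s) (fun s => 2 * D * |h s|) ?_ ?_ (hh.abs.const_mul _) ?_).congr' ?_
  · exact Eventually.of_forall fun t => ((hG'.comp (by fun_prop)).div_const t
      |>.aestronglyMeasurable.mul hh.aestronglyMeasurable).indicator measurableSet_Iic
  · filter_upwards [eventually_ge_atTop 1] with t ht
    refine ae_restrict_of_forall_mem measurableSet_Ici fun s (hs : 0 ≤ s) => ?_
    by_cases hst : s ≤ t
    · have hGt : |G' (t - s)| ≤ 2 * D * t := by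
        rw [← hGG' (sub_nonneg.2 hst : 0 ≤ t - s)]
        nlinarith [hD (t - s) (sub_nonneg.2 hst)]
      simp only [Φ, indicator_of_mem (show s ∈ Iic t from hst), norm_mul, norm_div,
        Real.norm_eq_abs, abs_of_pos (by linarith : 0 < t)]
      gcongr
      rwa [div_le_iff₀ (by linarith)]
    · simp only [Φ, indicator_of_notMem (show s ∉ Iic t from hst), norm_zero]
      positivity
  · refine ae_restrict_of_forall_mem measurableSet_Ici fun s (hs : 0 ≤ s) => ?_
    refine ((tendsto_comp_sub_div hGL s).mul_const (h s)).congr' ?_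
    filter_upwards [eventually_ge_atTop s] with t hst
    simp only [Φ, indicator_of_mem (show s ∈ Iic t from hst), ← hGG' (sub_nonneg.2 hst : 0 ≤ t - s)]
  · filter_upwards [eventually_ge_atTop 0] with t ht
    exact hΦ t ht

/-- Let `k ∈ L¹([0,∞))` with integrable integral resolvent `r_k` (so
`r_k = k + r_k ∗ k` a.e. on `[0,∞)`), and let `x = f + r_k ∗ f` be the solution of the
perturbed Volterra integral equation. Then `x` has a Cesàro limit iff `f` does; moreover if
`f` has Cesàro limit `L` then `x` has Cesàro limit `L·(1 + ∫₀^∞ r_k)`. -/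
theorem stmt19 (k : ℝ → ℝ) (hk : IntegrableOn k (Set.Ici 0))
    (rk : ℝ → ℝ) (hrk : IntegrableOn rk (Set.Ici 0))
    (hres : ∀ᵐ t ∂(volume.restrict (Set.Ici (0:ℝ))),
      rk t = k t + ∫ s in (0:ℝ)..t, rk (t - s) * k s)
    (f : ℝ → ℝ) (hf : LocallyIntegrableOn f (Set.Ici 0))
    (x : ℝ → ℝ)
    (hx : ∀ t, x t = f t + ∫ s in (0:ℝ)..t, rk (t - s) * f s) :
    ((∃ M : ℝ, Tendsto (fun t => (1/t) * ∫ s in (0:ℝ)..t, x s) atTop (𝓝 M)) ↔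
      (∃ L : ℝ, Tendsto (fun t => (1/t) * ∫ s in (0:ℝ)..t, f s) atTop (𝓝 L))) ∧
    (∀ L : ℝ, Tendsto (fun t => (1/t) * ∫ s in (0:ℝ)..t, f s) atTop (𝓝 L) →
      Tendsto (fun t => (1/t) * ∫ s in (0:ℝ)..t, x s) atTop
        (𝓝 (L * (1 + ∫ s in Set.Ici (0:ℝ), rk s)))) := by
  set F := fun t => ∫ s in (0:ℝ)..t, f s
  set X := fun t => ∫ s in (0:ℝ)..t, x s
  have hxf : EqOn x (f + f ∗ rk) (Ici 0) := fun t _ => by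
    rw [Pi.add_apply, causalConv_comm f rk, hx t]
    rfl
  have hxloc : LocallyIntegrableOn x (Ici 0) :=
    (hf.add (hf.causalConv hrk.locallyIntegrableOn)).congr <|
      ae_restrict_of_forall_mem measurableSet_Ici fun t ht => (hxf ht).symm
  have hXF : EqOn X (F + F ∗ rk) (Ici 0) :=
    eqOn_primitive_add_causalConv hf hrk.locallyIntegrableOn hxf
  have hFX : EqOn F (X - X ∗ k) (Ici 0) :=
    eqOn_sub_causalConv_of_resolvent hk.locallyIntegrableOn hrk.locallyIntegrableOn hres
      (continuousOn_primitive_Ici hf) (continuousOn_primitive_Ici hxloc) hXF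
  have forward : ∀ L, Tendsto (fun t => (1/t) * F t) atTop (𝓝 L) →
      Tendsto (fun t => (1/t) * X t) atTop (𝓝 (L * (1 + ∫ s in Ici 0, rk s))) := fun L hL => by
    rw [mul_one_add]
    refine (hL.add (tendsto_causalConv_div (continuousOn_primitive_Ici hf) hL hrk)).congr' ?_
    filter_upwards [eventually_ge_atTop 0] with t ht
    rw [hXF ht, Pi.add_apply, mul_add]
  have backward : ∀ M, Tendsto (fun t => (1/t) * X t) atTop (𝓝 M) →
      Tendsto (fun t => (1/t) * F t) atTop (𝓝 (M - M * ∫ s in Ici 0, k s)) := fun M hM => by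
    refine (hM.sub (tendsto_causalConv_div (continuousOn_primitive_Ici hxloc) hM hk)).congr' ?_
    filter_upwards [eventually_ge_atTop 0] with t ht
    rw [hFX ht, Pi.sub_apply, mul_sub]
  exact ⟨⟨fun ⟨M, hM⟩ => ⟨_, backward M hM⟩, fun ⟨L, hL⟩ => ⟨_, forward L hL⟩⟩, forward⟩
end
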